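/- arXiv:1911.02713 — 4 statements merged into one kernel-verified Lean document; each statement's English description precedes it below -/
import Mathlib

section
/- Suppose L > 0, v* > 0 and γp* > v*. Then there exist constants M₁ > 0 and γ̄ > 0, depending only on L, v* and γp*, such that every pair of continuously differentiable functions w, ξ : [0,L] × [0,∞) → ℝ satisfying ∂ₜw(x,t) = −v* ∂ₓw(x,t), ∂ₜξ(x,t) = (γp* − v*) ∂ₓξ(x,t) on (0,L) × (0,∞), with boundary conditions w(0,t) = ξ(0,t) and ξ(L,t) = 0 for all t ≥ 0, obeys the decay estimate ‖(ξ,w)(·,t)‖_{H¹} ≤ M₁ e^{−γ̄ t} ‖(ξ(·,0), w(·,0))‖_{H¹} for all t ≥ 0. -/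
open Set

/-- The `H¹(0,L)` norm of a (piecewise) continuously differentiable `u : [0,L] → ℝ`. -/
noncomputable def H1norm (L : ℝ) (u : ℝ → ℝ) : ℝ :=
  Real.sqrt ((∫ x in (0:ℝ)..L, u x ^ 2) + ∫ x in (0:ℝ)..L, (deriv u x) ^ 2)

/-- The `H¹(0,L)` norm of a pair. -/
noncomputable def H1pair (L : ℝ) (u₁ u₂ : ℝ → ℝ) : ℝ :=
  Real.sqrt (H1norm L u₁ ^ 2 + H1norm L u₂ ^ 2)

open Function Topology MeasureTheory

set_option maxHeartbeats 1000000


lemma const_of_deriv_zero {φ : ℝ → ℝ} {a b : ℝ} (hab : a < b)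
    (hc : ContinuousOn φ (Icc a b)) (hd : ∀ s ∈ Ioo a b, HasDerivAt φ 0 s) : φ a = φ b := by
  have key : ∀ x ∈ Ioo a b, φ b = φ x := by
    intro x hx
    have h1 : ContinuousOn φ (Icc x b) := hc.mono (Icc_subset_Icc hx.1.le le_rfl)
    have h2 : ∀ y ∈ Ico x b, HasDerivWithinAt φ 0 (Ici y) y := by
      intro y hy
      exact (hd y ⟨lt_of_lt_of_le hx.1 hy.1, hy.2⟩).hasDerivWithinAt
    exact constant_of_has_deriv_right_zero h1 h2 b ⟨hx.2.le, le_rfl⟩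
  have hne : (𝓝[Ioo a b] a).NeBot := by
    refine mem_closure_iff_nhdsWithin_neBot.mp ?_
    rw [closure_Ioo hab.ne]
    exact ⟨le_rfl, hab.le⟩
  have h1 : Filter.Tendsto φ (𝓝[Ioo a b] a) (𝓝 (φ a)) :=
    ((hc a ⟨le_rfl, hab.le⟩).mono Ioo_subset_Icc_self).tendsto
  have h2 : Filter.Tendsto φ (𝓝[Ioo a b] a) (𝓝 (φ b)) := by
    refine Filter.Tendsto.congr' ?_ tendsto_const_nhds
    filter_upwards [eventually_mem_nhdsWithin] with x hx using key x hx
  exact tendsto_nhds_unique h1 h2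





/-- Constancy along characteristics for `∂ₜ u = c ∂ₓ u` on `[0,L] × [0,∞)`:
lines `x + c t = const`. Version with `t₁ ≤ t₂`. -/
lemma const_char_aux {L c : ℝ} (hc0 : c ≠ 0) (u : ℝ → ℝ → ℝ)
    (hu : ContDiffOn ℝ 1 (Function.uncurry u) (Icc 0 L ×ˢ Ici 0))
    (hpde : ∀ x ∈ Ioo (0:ℝ) L, ∀ t ∈ Ioi (0:ℝ),
      deriv (fun s => u x s) t = c * deriv (fun y => u y t) x)
    {x₁ t₁ x₂ t₂ : ℝ} (hx₁ : x₁ ∈ Icc 0 L) (ht₁ : 0 ≤ t₁) (hx₂ : x₂ ∈ Icc 0 L) (ht₂ : 0 ≤ t₂)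
    (hch : x₁ + c * t₁ = x₂ + c * t₂) (hle : t₁ ≤ t₂) : u x₁ t₁ = u x₂ t₂ := by
  rcases eq_or_lt_of_le hle with h | hlt
  · have : x₁ = x₂ := by subst h; linarith
    rw [this, h]
  set φ : ℝ → ℝ := fun s => u (x₁ - c * (s - t₁)) s with hφ
  have hx2eq : x₂ = x₁ - c * (t₂ - t₁) := by linarith [hch]; 
  have hφ1 : φ t₁ = u x₁ t₁ := by simp [hφ]
  have hφ2 : φ t₂ = u x₂ t₂ := by rw [hφ]; simp only []; rw [← hx2eq]
  -- the characteristic stays in the region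
  have hmem : ∀ s ∈ Icc t₁ t₂, (x₁ - c * (s - t₁), s) ∈ Icc (0:ℝ) L ×ˢ Ici (0:ℝ) := by
    intro s hs
    simp only [mem_prod, mem_Icc, mem_Ici]
    refine ⟨⟨?_, ?_⟩, le_trans ht₁ hs.1⟩
    · rcases le_or_gt c 0 with h | h
      · nlinarith [hx₁.1, mul_nonneg (neg_nonneg.mpr h) (sub_nonneg.mpr hs.1)]
      · nlinarith [hx₂.1, mul_nonneg h.le (sub_nonneg.mpr hs.2)]
    · rcases le_or_gt c 0 with h | h
      · nlinarith [hx₂.2, mul_nonneg (neg_nonneg.mpr h) (sub_nonneg.mpr hs.2)]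
      · nlinarith [hx₁.2, mul_nonneg h.le (sub_nonneg.mpr hs.1)]
  -- interior membership for s in the open interval
  have hmem' : ∀ s ∈ Ioo t₁ t₂, (x₁ - c * (s - t₁), s) ∈ Ioo (0:ℝ) L ×ˢ Ioi (0:ℝ) := by
    intro s hs
    simp only [mem_prod, mem_Ioo, mem_Ioi]
    refine ⟨⟨?_, ?_⟩, lt_of_le_of_lt ht₁ hs.1⟩
    · rcases lt_or_lt_iff_ne.mpr hc0 with h | h
      · nlinarith [hx₁.1, mul_pos (neg_pos.mpr h) (sub_pos.mpr hs.1)]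
      · nlinarith [hx₂.1, mul_pos h (sub_pos.mpr hs.2)]
    · rcases lt_or_lt_iff_ne.mpr hc0 with h | h
      · nlinarith [hx₂.2, mul_pos (neg_pos.mpr h) (sub_pos.mpr hs.2)]
      · nlinarith [hx₁.2, mul_pos h (sub_pos.mpr hs.1)]
  have hσc : Continuous (fun s : ℝ => (x₁ - c * (s - t₁), s)) := by fun_prop
  have hcont : ContinuousOn φ (Icc t₁ t₂) := by
    refine hu.continuousOn.comp hσc.continuousOn ?_
    intro s hs; exact hmem s hs
  have hder : ∀ s ∈ Ioo t₁ t₂, HasDerivAt φ 0 s := by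
    intro s hs
    set xs := x₁ - c * (s - t₁) with hxs
    have hint : (xs, s) ∈ Ioo (0:ℝ) L ×ˢ Ioi (0:ℝ) := hmem' s hs
    have hnh : Icc (0:ℝ) L ×ˢ Ici (0:ℝ) ∈ 𝓝 (xs, s) := by
      have : IsOpen (Ioo (0:ℝ) L ×ˢ Ioi (0:ℝ)) := isOpen_Ioo.prod isOpen_Ioi
      exact Filter.mem_of_superset (this.mem_nhds hint)
        (prod_mono Ioo_subset_Icc_self Ioi_subset_Ici_self)
    have hdiff : DifferentiableAt ℝ (uncurry u) (xs, s) :=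
      (hu.differentiableOn one_ne_zero).differentiableAt hnh
    set f' := fderiv ℝ (uncurry u) (xs, s) with hf'
    have hF : HasFDerivAt (uncurry u) f' (xs, s) := hdiff.hasFDerivAt
    -- t-partial
    have hι : HasDerivAt (fun s' : ℝ => (xs, s')) ((0:ℝ), (1:ℝ)) s :=
      (hasDerivAt_const s xs).prodMk (hasDerivAt_id s)
    have hpt : HasDerivAt (fun s' => u xs s') (f' (0, 1)) s := hF.comp_hasDerivAt s hι
    -- x-partial
    have hκ : HasDerivAt (fun y : ℝ => (y, s)) ((1:ℝ), (0:ℝ)) xs :=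
      (hasDerivAt_id xs).prodMk (hasDerivAt_const xs s)
    have hpx : HasDerivAt (fun y => u y s) (f' (1, 0)) xs := by have := hF.comp_hasDerivAt xs hκ; exact this
    have hpde' : f' (0, 1) = c * f' (1, 0) := by
      rw [← hpt.deriv, ← hpx.deriv]
      exact hpde xs hint.1 s hint.2
    have hσ : HasDerivAt (fun s' : ℝ => (x₁ - c * (s' - t₁), s')) ((-c : ℝ), (1:ℝ)) s := by
      refine HasDerivAt.prodMk ?_ (hasDerivAt_id s)
      simpa using (((hasDerivAt_id s).sub_const t₁).const_mul c).const_sub x₁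
    have hφd0 := hF.comp_hasDerivAt_of_eq s hσ (by simp [hxs])
    have hφd : HasDerivAt φ (f' (-c, 1)) s := hφd0
    have : f' (-c, 1) = 0 := by
      have : ((-c : ℝ), (1:ℝ)) = (-c) • ((1:ℝ), (0:ℝ)) + ((0:ℝ), (1:ℝ)) := by
        simp [Prod.ext_iff]
      rw [this, map_add, _root_.map_smul, hpde']
      simp
    rwa [this] at hφd
  have := const_of_deriv_zero hlt hcont hder
  rw [hφ1, hφ2] at this; exact this



/-- a.e.-congruence with finitely many exceptional points, for interval integrals on `[a,b]`. -/
lemma my_ae_of_finite {a b : ℝ} {f g : ℝ → ℝ} (hab : a ≤ b) (s : Set ℝ) (hs : s.Finite)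
    (h : ∀ x ∈ Ioc a b, x ∉ s → f x = g x) : f =ᵐ[volume.restrict (Ioc a b)] g := by
  have h0 : (volume : Measure ℝ) s = 0 := hs.countable.measure_zero _
  have h1 : ∀ᵐ x ∂(volume.restrict (Ioc a b)), x ∉ s :=
    ae_restrict_of_ae ((ae_iff).mpr (by simpa using h0))
  have h2 : ∀ᵐ x ∂(volume.restrict (Ioc a b)), x ∈ Ioc a b :=
    ae_restrict_mem measurableSet_Ioc
  filter_upwards [h1, h2] with x hx1 hx2 using h x hx2 hx1

lemma my_integral_congr {a b : ℝ} {f g : ℝ → ℝ} (hab : a ≤ b) (s : Set ℝ) (hs : s.Finite)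
    (h : ∀ x ∈ Ioc a b, x ∉ s → f x = g x) :
    ∫ x in a..b, f x = ∫ x in a..b, g x := by
  apply intervalIntegral.integral_congr_ae
  have := my_ae_of_finite hab s hs h
  rw [uIoc_of_le hab]
  rw [Filter.EventuallyEq, ae_restrict_iff' measurableSet_Ioc] at this
  filter_upwards [this] with x hx using hx

lemma my_integrable_congr {a b : ℝ} {f g : ℝ → ℝ} (hab : a ≤ b) (s : Set ℝ) (hs : s.Finite)
    (h : ∀ x ∈ Ioc a b, x ∉ s → f x = g x) (hf : IntervalIntegrable f volume a b) :
    IntervalIntegrable g volume a b := by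
  rw [intervalIntegrable_iff_integrableOn_Ioc_of_le hab] at hf ⊢
  exact (Integrable.congr hf (my_ae_of_finite hab s hs h) : _)

/-- Bound for `∫ f(β − γ x)` over `[a,b]` mapped inside `[0,Lr]`. -/
lemma my_bound_comp_neg {Lr γ β a b : ℝ} (f : ℝ → ℝ)
    (hf : IntervalIntegrable f volume 0 Lr) (hnn : ∀ y, 0 ≤ f y) (hγ : 0 < γ)
    (hab : a ≤ b) (hu2 : 0 ≤ β - γ * b) (hu1 : β - γ * a ≤ Lr) :
    ∫ x in a..b, f (β - γ * x) ≤ γ⁻¹ * ∫ y in (0:ℝ)..Lr, f y := by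
  have hγ' : (-γ : ℝ) ≠ 0 := by linarith
  have key : ∫ x in a..b, f (β - γ * x) = ∫ x in a..b, f ((-γ) * x + β) := by
    congr 1; ext x; ring_nf
  rw [key, intervalIntegral.integral_comp_mul_add f hγ' β]
  have h1 : (-γ) * a + β = β - γ * a := by ring
  have h2 : (-γ) * b + β = β - γ * b := by ring
  rw [h1, h2, intervalIntegral.integral_symm, smul_eq_mul]
  have hmono : ∫ x in (β - γ*b)..(β - γ*a), f x ≤ ∫ y in (0:ℝ)..Lr, f y := by
    apply intervalIntegral.integral_mono_interval hu2 (by nlinarith) hu1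
    · exact Filter.Eventually.of_forall fun y => hnn y
    · exact hf
  have hpos : (0:ℝ) ≤ ∫ x in (β - γ*b)..(β - γ*a), f x :=
    intervalIntegral.integral_nonneg (by nlinarith) fun x _ => hnn x
  have : (-γ:ℝ)⁻¹ * -(∫ x in (β - γ*b)..(β - γ*a), f x)
      = γ⁻¹ * ∫ x in (β - γ*b)..(β - γ*a), f x := by
    field_simp
  rw [this]
  have hγi : (0:ℝ) ≤ γ⁻¹ := by positivity
  exact mul_le_mul_of_nonneg_left hmono hγi

lemma my_II_refl (f : ℝ → ℝ) (a : ℝ) : IntervalIntegrable f volume a a := by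
  rw [intervalIntegrable_iff_integrableOn_Ioc_of_le le_rfl]
  simp

lemma my_integral_nonneg {a b : ℝ} (hab : a ≤ b) (f : ℝ → ℝ) (hnn : ∀ y, 0 ≤ f y) :
    0 ≤ ∫ x in a..b, f x :=
  intervalIntegral.integral_nonneg hab fun x _ => hnn x



lemma slice_contOn {L : ℝ} {u : ℝ → ℝ → ℝ}
    (hu : ContDiffOn ℝ 1 (uncurry u) (Icc 0 L ×ˢ Ici 0)) {t : ℝ} (ht : 0 ≤ t) :
    ContinuousOn (fun x => u x t) (Icc 0 L) := by
  have : ContinuousOn (fun x : ℝ => (x, t)) (Icc 0 L) := (Continuous.continuousOn (by fun_prop))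
  exact hu.continuousOn.comp this (fun x hx => ⟨hx, ht⟩)

lemma slice_hasDeriv {L : ℝ} (hL : 0 < L) {u : ℝ → ℝ → ℝ}
    (hu : ContDiffOn ℝ 1 (uncurry u) (Icc 0 L ×ˢ Ici 0)) {t : ℝ} (ht : 0 ≤ t)
    {y : ℝ} (hy : y ∈ Ioo 0 L) :
    HasDerivAt (fun x => u x t)
      ((fderivWithin ℝ (uncurry u) (Icc 0 L ×ˢ Ici 0) (y, t)) (1, 0)) y := by
  have hmem : (y, t) ∈ Icc 0 L ×ˢ Ici (0:ℝ) := ⟨⟨hy.1.le, hy.2.le⟩, ht⟩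
  have hF : HasFDerivWithinAt (uncurry u) (fderivWithin ℝ (uncurry u) (Icc 0 L ×ˢ Ici 0) (y, t))
      (Icc 0 L ×ˢ Ici 0) (y, t) :=
    (hu.differentiableOn one_ne_zero (y, t) hmem).hasFDerivWithinAt
  have hι : HasDerivWithinAt (fun y' : ℝ => (y', t)) ((1:ℝ), (0:ℝ)) (Icc 0 L) y :=
    ((hasDerivAt_id y).prodMk (hasDerivAt_const y t)).hasDerivWithinAt
  have hmaps : MapsTo (fun y' : ℝ => (y', t)) (Icc 0 L) (Icc 0 L ×ˢ Ici 0) :=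
    fun x hx => ⟨hx, ht⟩
  have hcomp := hF.comp_hasDerivWithinAt_of_eq y hι hmaps rfl
  exact hcomp.hasDerivAt (Icc_mem_nhds hy.1 hy.2)

lemma slice_deriv_rep {L : ℝ} (hL : 0 < L) {u : ℝ → ℝ → ℝ}
    (hu : ContDiffOn ℝ 1 (uncurry u) (Icc 0 L ×ˢ Ici 0)) {t : ℝ} (ht : 0 ≤ t) :
    ∃ h : ℝ → ℝ, ContinuousOn h (Icc 0 L) ∧
      ∀ y ∈ Ioo 0 L, deriv (fun x => u x t) y = h y := by
  have hS : UniqueDiffOn ℝ (Icc 0 L ×ˢ Ici (0:ℝ)) :=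
    (uniqueDiffOn_Icc hL).prod (uniqueDiffOn_Ici 0)
  refine ⟨fun y => (fderivWithin ℝ (uncurry u) (Icc 0 L ×ˢ Ici 0) (y, t)) (1, 0), ?_, ?_⟩
  · have hfc : ContinuousOn (fderivWithin ℝ (uncurry u) (Icc 0 L ×ˢ Ici 0))
        (Icc 0 L ×ˢ Ici 0) := hu.continuousOn_fderivWithin hS le_rfl
    have hι : ContinuousOn (fun y : ℝ => (y, t)) (Icc 0 L) := Continuous.continuousOn (by fun_prop)
    have := (hfc.comp hι (fun x hx => ⟨hx, ht⟩))
    exact ((ContinuousLinearMap.apply ℝ ℝ ((1:ℝ),(0:ℝ))).continuous.comp_continuousOn this)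
  · intro y hy
    exact (slice_hasDeriv hL hu ht hy).deriv







lemma const_char {L c : ℝ} (hc0 : c ≠ 0) (u : ℝ → ℝ → ℝ)
    (hu : ContDiffOn ℝ 1 (Function.uncurry u) (Icc 0 L ×ˢ Ici 0))
    (hpde : ∀ x ∈ Ioo (0:ℝ) L, ∀ t ∈ Ioi (0:ℝ),
      deriv (fun s => u x s) t = c * deriv (fun y => u y t) x)
    {x₁ t₁ x₂ t₂ : ℝ} (hx₁ : x₁ ∈ Icc 0 L) (ht₁ : 0 ≤ t₁) (hx₂ : x₂ ∈ Icc 0 L) (ht₂ : 0 ≤ t₂)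
    (hch : x₁ + c * t₁ = x₂ + c * t₂) : u x₁ t₁ = u x₂ t₂ := by
  rcases le_total t₁ t₂ with h | h
  · exact const_char_aux hc0 u hu hpde hx₁ ht₁ hx₂ ht₂ hch h
  · exact (const_char_aux hc0 u hu hpde hx₂ ht₂ hx₁ ht₁ hch.symm h).symm

section Repr

variable {L vs gp : ℝ} (hL : 0 < L) (hvs : 0 < vs) (hgp : vs < gp)
  (w ξ : ℝ → ℝ → ℝ)
  (hwcd : ContDiffOn ℝ 1 (Function.uncurry w) (Icc 0 L ×ˢ Ici 0))
  (hξcd : ContDiffOn ℝ 1 (Function.uncurry ξ) (Icc 0 L ×ˢ Ici 0))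
  (hpdew : ∀ x ∈ Ioo (0:ℝ) L, ∀ t ∈ Ioi (0:ℝ),
    deriv (fun s => w x s) t = -vs * deriv (fun y => w y t) x)
  (hpdeξ : ∀ x ∈ Ioo (0:ℝ) L, ∀ t ∈ Ioi (0:ℝ),
    deriv (fun s => ξ x s) t = (gp - vs) * deriv (fun y => ξ y t) x)
  (hbc0 : ∀ t ∈ Ici (0:ℝ), w 0 t = ξ 0 t)
  (hbcL : ∀ t ∈ Ici (0:ℝ), ξ L t = 0)

include hL hvs hgp hξcd hpdeξ hbcL in
lemma repr_xi : ∀ x ∈ Icc (0:ℝ) L, ∀ t, 0 ≤ t →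
    ξ x t = if x + (gp - vs) * t ≤ L then ξ (x + (gp - vs) * t) 0 else 0 := by
  intro x hx t ht
  set c := gp - vs with hc
  have hc0 : c ≠ 0 := by simp [hc]; linarith
  have hcpos : 0 < c := by simp [hc]; linarith
  split_ifs with h
  · exact const_char hc0 ξ hξcd hpdeξ hx ht
      ⟨by nlinarith [hx.1], h⟩ le_rfl (by ring)
  · push_neg at h
    have hτ : 0 < t - (L - x) / c := by
      rw [sub_pos, div_lt_iff₀ hcpos]; nlinarith
    have h2 : ξ L (t - (L - x) / c) = 0 := hbcL _ hτ.le
    rw [← h2]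
    apply const_char hc0 ξ hξcd hpdeξ hx ht (by constructor <;> [linarith; linarith]) hτ.le
    field_simp
    ring
  
include hL hvs hgp hξcd hwcd hpdew hpdeξ hbc0 hbcL in
lemma repr_w : ∀ x ∈ Icc (0:ℝ) L, ∀ t, 0 ≤ t →
    w x t = if vs * t ≤ x then w (x - vs * t) 0
      else (if (gp - vs) * t - ((gp - vs)/vs) * x ≤ L then ξ ((gp - vs) * t - ((gp - vs)/vs) * x) 0 else 0) := by
  intro x hx t ht
  set c := gp - vs with hc
  have hvs0 : vs ≠ 0 := ne_of_gt hvs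
  have hv0 : -vs ≠ 0 := by linarith
  split_ifs with h h2
  · exact const_char hv0 w hwcd hpdew hx ht
      ⟨by linarith, by nlinarith [hx.2, ht, hvs]⟩ le_rfl (by ring)
  all_goals {
    push_neg at h
    have hτ : 0 ≤ t - x / vs := by
      rw [sub_nonneg, div_le_iff₀ hvs]; nlinarith
    have hw0 : w x t = ξ 0 (t - x / vs) := by
      rw [← hbc0 _ hτ]
      apply const_char hv0 w hwcd hpdew hx ht ⟨le_rfl, hL.le⟩ hτ
      field_simp
      ring
    have hrξ := repr_xi hL hvs hgp ξ hξcd hpdeξ hbcL 0 (by simp [hL.le]) (t - x/vs) hτ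
    have harg : (0:ℝ) + c * (t - x/vs) = c * t - (c/vs) * x := by field_simp; ring
    rw [hw0, hrξ, harg]
    simp [h2]
  }


-- derivative of the ξ-slice
include hL hvs hgp hξcd hpdeξ hbcL in
lemma dxi_slice : ∀ t, 0 ≤ t → ∀ x ∈ Ioo (0:ℝ) L, x + (gp - vs) * t ≠ L →
    deriv (fun x' => ξ x' t) x
      = if x + (gp - vs) * t < L then deriv (fun y => ξ y 0) (x + (gp - vs) * t) else 0 := by
  intro t ht x hx hne
  set c := gp - vs with hc
  have hcpos : 0 < c := by simp [hc]; linarith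
  have hctnn : 0 ≤ c * t := by positivity
  rcases lt_or_gt_of_ne hne with hlt | hgt
  · have hev : (fun x' => ξ x' t) =ᶠ[𝓝 x] (fun x' => ξ (x' + c * t) 0) := by
      filter_upwards [isOpen_Ioo.mem_nhds (show x ∈ Ioo 0 (L - c*t) from ⟨hx.1, by linarith⟩)]
        with x' hx'
      rw [repr_xi hL hvs hgp ξ hξcd hpdeξ hbcL x' ⟨hx'.1.le, by linarith [hx'.2]⟩ t ht,
        if_pos (by simp only [← hc]; linarith [hx'.2])]
    rw [hev.deriv_eq, if_pos hlt]
    exact deriv_comp_add_const (fun y => ξ y 0) (c*t) x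
  · have hev : (fun x' => ξ x' t) =ᶠ[𝓝 x] (fun _ => (0:ℝ)) := by
      filter_upwards [isOpen_Ioo.mem_nhds
        (show x ∈ Ioo (max (L - c*t) 0) L from ⟨max_lt (by linarith) hx.1, hx.2⟩)] with x' hx'
      have h1 : L - c*t < x' := lt_of_le_of_lt (le_max_left _ _) hx'.1
      have h2 : 0 < x' := lt_of_le_of_lt (le_max_right _ _) hx'.1
      rw [repr_xi hL hvs hgp ξ hξcd hpdeξ hbcL x' ⟨h2.le, hx'.2.le⟩ t ht,
        if_neg (by rw [← hc]; push_neg; linarith)]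
    rw [hev.deriv_eq, if_neg (by linarith)]
    simp

include hL hvs hgp hξcd hwcd hpdew hpdeξ hbc0 hbcL in
lemma dw_slice1 : ∀ t, 0 ≤ t → ∀ x ∈ Ioo (0:ℝ) L, x < vs*t - vs*L/(gp-vs) →
    deriv (fun x' => w x' t) x = 0 := by
  intro t ht x hx hxp
  set c := gp - vs with hc
  have hcpos : 0 < c := by simp [hc]; linarith
  have hev : (fun x' => w x' t) =ᶠ[𝓝 x] (fun _ => (0:ℝ)) := by
    filter_upwards [isOpen_Ioo.mem_nhds
      (show x ∈ Ioo 0 (min (vs*t - vs*L/c) L) from ⟨hx.1, lt_min hxp hx.2⟩)] with x' hx'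
    have h1 : x' < vs*t - vs*L/c := lt_of_lt_of_le hx'.2 (min_le_left _ _)
    have h2 : x' < L := lt_of_lt_of_le hx'.2 (min_le_right _ _)
    have hxvt : x' < vs * t := by nlinarith [div_pos (mul_pos hvs hL) hcpos]
    rw [repr_w hL hvs hgp w ξ hwcd hξcd hpdew hpdeξ hbc0 hbcL x' ⟨hx'.1.le, h2.le⟩ t ht,
      if_neg (by linarith), if_neg ?_]
    have : c/vs * x' < c/vs * (vs*t - vs*L/c) := by
      apply mul_lt_mul_of_pos_left h1 (by positivity)
    have heq : c/vs * (vs*t - vs*L/c) = c*t - L := by field_simp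
    rw [heq] at this
    push_neg
    linarith
  rw [hev.deriv_eq]; simp

include hL hvs hgp hξcd hwcd hpdew hpdeξ hbc0 hbcL in
lemma dw_slice2 : ∀ t, 0 ≤ t → ∀ x ∈ Ioo (0:ℝ) L, vs*t - vs*L/(gp-vs) < x → x < vs*t →
    deriv (fun x' => w x' t) x
      = -((gp-vs)/vs) * deriv (fun y => ξ y 0) ((gp-vs)*t - ((gp-vs)/vs)*x) := by
  intro t ht x hx hp hq
  set c := gp - vs with hc
  have hcpos : 0 < c := by simp [hc]; linarith
  have hev : (fun x' => w x' t) =ᶠ[𝓝 x] (fun x' => ξ (c*t - c/vs*x') 0) := by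
    filter_upwards [isOpen_Ioo.mem_nhds
      (show x ∈ Ioo (max (vs*t - vs*L/c) 0) (min (vs*t) L) from
        ⟨max_lt hp hx.1, lt_min hq hx.2⟩)] with x' hx'
    have h1 : vs*t - vs*L/c < x' := lt_of_le_of_lt (le_max_left _ _) hx'.1
    have h0 : 0 < x' := lt_of_le_of_lt (le_max_right _ _) hx'.1
    have h2 : x' < vs*t := lt_of_lt_of_le hx'.2 (min_le_left _ _)
    have h3 : x' < L := lt_of_lt_of_le hx'.2 (min_le_right _ _)
    have harg : c*t - c/vs*x' < L := by
      have : c/vs * (vs*t - vs*L/c) < c/vs * x' := mul_lt_mul_of_pos_left h1 (by positivity)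
      have heq : c/vs * (vs*t - vs*L/c) = c*t - L := by field_simp
      linarith [heq ▸ this]
    rw [repr_w hL hvs hgp w ξ hwcd hξcd hpdew hpdeξ hbc0 hbcL x' ⟨h0.le, h3.le⟩ t ht,
      if_neg (by linarith), if_pos harg.le]
  have harg : c*t - c/vs*x ∈ Ioo (0:ℝ) L := by
    constructor
    · have : c/vs * x < c/vs * (vs*t) := mul_lt_mul_of_pos_left hq (by positivity)
      have heq : c/vs * (vs*t) = c*t := by field_simp
      linarith [heq ▸ this]
    · have : c/vs * (vs*t - vs*L/c) < c/vs * x := mul_lt_mul_of_pos_left hp (by positivity)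
      have heq : c/vs * (vs*t - vs*L/c) = c*t - L := by field_simp
      linarith [heq ▸ this]
  have hd := slice_hasDeriv hL hξcd le_rfl harg
  have haff : HasDerivAt (fun x' : ℝ => c*t - c/vs*x') (-(c/vs)) x := by
    have h1 : HasDerivAt (fun x' : ℝ => c/vs*x') (c/vs) x := by
      simpa using (hasDerivAt_id x).const_mul (c/vs)
    simpa using h1.const_sub (c*t)
  have hcomp : HasDerivAt (fun x' => ξ (c*t - c/vs*x') 0)
      ((fderivWithin ℝ (uncurry ξ) (Icc 0 L ×ˢ Ici 0) (c*t - c/vs*x, 0)) (1,0) * (-(c/vs))) x :=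
    by have := hd.comp x haff; exact this
  rw [hev.deriv_eq, hcomp.deriv, hd.deriv]
  ring

include hL hvs hgp hwcd hξcd hpdew hpdeξ hbc0 hbcL in
lemma dw_slice3 : ∀ t, 0 ≤ t → ∀ x ∈ Ioo (0:ℝ) L, vs*t < x →
    deriv (fun x' => w x' t) x = deriv (fun y => w y 0) (x - vs*t) := by
  intro t ht x hx hq
  have hvtnn : 0 ≤ vs*t := by positivity
  have hev : (fun x' => w x' t) =ᶠ[𝓝 x] (fun x' => w (x' - vs*t) 0) := by
    filter_upwards [isOpen_Ioo.mem_nhds (show x ∈ Ioo (vs*t) L from ⟨hq, hx.2⟩)] with x' hx'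
    rw [repr_w hL hvs hgp w ξ hwcd hξcd hpdew hpdeξ hbc0 hbcL x' ⟨by linarith [hx'.1], hx'.2.le⟩ t ht,
      if_pos hx'.1.le]
  rw [hev.deriv_eq]
  exact deriv_comp_sub_const (fun y => w y 0) (vs*t) x

include hL hvs hgp hξcd hpdeξ hbcL in
lemma bound_I1 : ∀ t, 0 ≤ t →
    ∫ x in (0:ℝ)..L, (ξ x t)^2 ≤ ∫ x in (0:ℝ)..L, (ξ x 0)^2 := by
  intro t ht
  obtain ⟨c, hc⟩ : ∃ c, c = gp - vs := ⟨_, rfl⟩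
  have hcpos : 0 < c := by rw [hc]; linarith
  have R := repr_xi hL hvs hgp ξ hξcd hpdeξ hbcL
  simp only [← hc] at R
  have hIcc : uIcc (0:ℝ) L = Icc 0 L := uIcc_of_le hL.le
  have hsq0 : ContinuousOn (fun y => (ξ y 0)^2) (Icc 0 L) := (slice_contOn hξcd le_rfl).pow 2
  have hA : IntervalIntegrable (fun y => (ξ y 0)^2) volume 0 L :=
    (hIcc ▸ hsq0).intervalIntegrable
  have hAnn : (0:ℝ) ≤ ∫ x in (0:ℝ)..L, (ξ x 0)^2 :=
    my_integral_nonneg hL.le _ (fun y => sq_nonneg _)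
  have hsqt : ContinuousOn (fun x => (ξ x t)^2) (Icc 0 L) := (slice_contOn hξcd ht).pow 2
  have hctnn : 0 ≤ c*t := by positivity
  rcases le_or_gt (c*t) L with hct | hct
  · have hr0 : (0:ℝ) ≤ L - c*t := by linarith
    have hrL : L - c*t ≤ L := by linarith
    have hint1 : IntervalIntegrable (fun x => (ξ x t)^2) volume 0 (L - c*t) := by
      apply ContinuousOn.intervalIntegrable
      exact hsqt.mono (by rw [uIcc_of_le hr0]; exact Icc_subset_Icc le_rfl hrL)
    have hint2 : IntervalIntegrable (fun x => (ξ x t)^2) volume (L - c*t) L := by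
      apply ContinuousOn.intervalIntegrable
      exact hsqt.mono (by rw [uIcc_of_le hrL]; exact Icc_subset_Icc hr0 le_rfl)
    rw [← intervalIntegral.integral_add_adjacent_intervals hint1 hint2]
    have hpiece1 : ∫ x in (0:ℝ)..(L - c*t), (ξ x t)^2
        = ∫ x in (0:ℝ)..(L - c*t), (fun y => (ξ y 0)^2) (x + c*t) := by
      apply my_integral_congr hr0 ∅ finite_empty
      intro x hx _
      simp only []
      rw [R x ⟨hx.1.le, le_trans hx.2 hrL⟩ t ht, if_pos (by linarith [hx.2])]
    have hpiece2 : ∫ x in (L - c*t)..L, (ξ x t)^2 = 0 := by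
      rw [my_integral_congr hrL ∅ finite_empty
        (g := fun _ => (0:ℝ)) ?_]
      · simp
      · intro x hx _
        rw [R x ⟨by linarith [hx.1], hx.2⟩ t ht, if_neg (by push_neg; linarith [hx.1])]
        simp
    rw [hpiece1, hpiece2, intervalIntegral.integral_comp_add_right (fun y => (ξ y 0)^2) (c*t)]
    have he1 : (0:ℝ) + c*t = c*t := by ring
    have he2 : L - c*t + c*t = L := by ring
    rw [he1, he2, add_zero]
    exact intervalIntegral.integral_mono_interval hctnn hct le_rfl
      (Filter.Eventually.of_forall (fun y => sq_nonneg _)) hA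
  · have : ∫ x in (0:ℝ)..L, (ξ x t)^2 = 0 := by
      rw [my_integral_congr hL.le ∅ finite_empty (g := fun _ => (0:ℝ)) ?_]
      · simp
      · intro x hx _
        rw [R x ⟨hx.1.le, hx.2⟩ t ht, if_neg (by push_neg; linarith [hx.1])]
        simp
    rw [this]; exact hAnn

include hL hvs hgp hξcd hpdeξ hbcL in
lemma bound_I2 (hξ0 : ℝ → ℝ) (hξ0cont : ContinuousOn hξ0 (Icc 0 L))
    (hξ0eq : ∀ y ∈ Ioo (0:ℝ) L, deriv (fun x => ξ x 0) y = hξ0 y) : ∀ t, 0 ≤ t →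
    ∫ x in (0:ℝ)..L, (deriv (fun x' => ξ x' t) x)^2 ≤ ∫ y in (0:ℝ)..L, (hξ0 y)^2 := by
  intro t ht
  obtain ⟨c, hc⟩ : ∃ c, c = gp - vs := ⟨_, rfl⟩
  have hcpos : 0 < c := by rw [hc]; linarith
  have D := dxi_slice hL hvs hgp ξ hξcd hpdeξ hbcL t ht
  simp only [← hc] at D
  have hIcc : uIcc (0:ℝ) L = Icc 0 L := uIcc_of_le hL.le
  have hsq0 : ContinuousOn (fun y => (hξ0 y)^2) (Icc 0 L) := hξ0cont.pow 2
  have hA : IntervalIntegrable (fun y => (hξ0 y)^2) volume 0 L :=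
    (hIcc ▸ hsq0).intervalIntegrable
  have hAnn : (0:ℝ) ≤ ∫ y in (0:ℝ)..L, (hξ0 y)^2 :=
    my_integral_nonneg hL.le _ (fun y => sq_nonneg _)
  have hctnn : 0 ≤ c*t := by positivity
  rcases le_or_gt (c*t) L with hct | hct
  · have hr0 : (0:ℝ) ≤ L - c*t := by linarith
    have hrL : L - c*t ≤ L := by linarith
    -- on (0, L - c t): deriv slice = hξ0 (x + c t)
    have hD1 : ∀ x ∈ Ioc (0:ℝ) (L - c*t), x ∉ ({L - c*t} : Set ℝ) →
        (fun x => (deriv (fun x' => ξ x' t) x)^2) x = (fun x => (hξ0 (x + c*t))^2) x := by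
      intro x hx hxs
      have hxlt : x < L - c*t := lt_of_le_of_ne hx.2 (by simpa using hxs)
      have hxm : x ∈ Ioo (0:ℝ) L := ⟨hx.1, by linarith⟩
      simp only []
      rw [D x hxm (by intro h; exact absurd h (by push_neg; linarith)),
        if_pos (by linarith), hξ0eq _ ⟨by linarith [hx.1], by linarith⟩]
    have hD2 : ∀ x ∈ Ioc (L - c*t) L, x ∉ ({L} : Set ℝ) →
        (fun x => (deriv (fun x' => ξ x' t) x)^2) x = (fun _ => (0:ℝ)) x := by
      intro x hx hxs
      have hxm : x ∈ Ioo (0:ℝ) L := ⟨by linarith [hx.1], lt_of_le_of_ne hx.2 (by simpa using hxs)⟩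
      simp only []
      rw [D x hxm (by intro h; exact absurd h (by push_neg; linarith [hx.1])),
        if_neg (by push_neg; linarith [hx.1])]
      simp
    have hint1 : IntervalIntegrable (fun x => (deriv (fun x' => ξ x' t) x)^2) volume 0 (L - c*t) := by
      apply my_integrable_congr hr0 {L - c*t} (finite_singleton _)
        (fun x hx hxs => (hD1 x hx hxs).symm)
      apply ContinuousOn.intervalIntegrable
      have : ContinuousOn (fun x : ℝ => x + c*t) (uIcc 0 (L - c*t)) := by fun_prop
      apply (hsq0.comp this ?_)
      rw [uIcc_of_le hr0]
      intro x hx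
      show x + c*t ∈ Icc 0 L
      exact ⟨by linarith [hx.1, hctnn], by linarith [hx.2]⟩
    have hint2 : IntervalIntegrable (fun x => (deriv (fun x' => ξ x' t) x)^2) volume (L - c*t) L := by
      apply my_integrable_congr hrL {L} (finite_singleton _)
        (fun x hx hxs => (hD2 x hx hxs).symm)
      exact intervalIntegrable_const
    rw [← intervalIntegral.integral_add_adjacent_intervals hint1 hint2]
    have hpiece1 : ∫ x in (0:ℝ)..(L - c*t), (deriv (fun x' => ξ x' t) x)^2
        = ∫ x in (0:ℝ)..(L - c*t), (fun y => (hξ0 y)^2) (x + c*t) :=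
      my_integral_congr hr0 {L - c*t} (finite_singleton _) hD1
    have hpiece2 : ∫ x in (L - c*t)..L, (deriv (fun x' => ξ x' t) x)^2 = 0 := by
      rw [my_integral_congr hrL {L} (finite_singleton _) hD2]; simp
    rw [hpiece1, hpiece2, intervalIntegral.integral_comp_add_right (fun y => (hξ0 y)^2) (c*t)]
    have he1 : (0:ℝ) + c*t = c*t := by ring
    have he2 : L - c*t + c*t = L := by ring
    rw [he1, he2, add_zero]
    exact intervalIntegral.integral_mono_interval hctnn hct le_rfl
      (Filter.Eventually.of_forall (fun y => sq_nonneg _)) hA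
  · have : ∫ x in (0:ℝ)..L, (deriv (fun x' => ξ x' t) x)^2 = 0 := by
      rw [my_integral_congr hL.le {L} (finite_singleton _) (g := fun _ => (0:ℝ)) ?_]
      · simp
      · intro x hx hxs
        have hxm : x ∈ Ioo (0:ℝ) L := ⟨hx.1, lt_of_le_of_ne hx.2 (by simpa using hxs)⟩
        rw [D x hxm (by intro h; exact absurd h (by push_neg; nlinarith [hx.1])),
          if_neg (by push_neg; nlinarith [hx.1])]
        simp
    rw [this]; exact hAnn

include hL hvs hgp hwcd hξcd hpdew hpdeξ hbc0 hbcL in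
lemma bound_I3 : ∀ t, 0 ≤ t →
    ∫ x in (0:ℝ)..L, (w x t)^2
      ≤ (∫ x in (0:ℝ)..L, (w x 0)^2) + (vs/(gp - vs)) * ∫ x in (0:ℝ)..L, (ξ x 0)^2 := by
  intro t ht
  obtain ⟨c, hc⟩ : ∃ c, c = gp - vs := ⟨_, rfl⟩
  have hcpos : 0 < c := by rw [hc]; linarith
  rw [← hc]
  have R := repr_w hL hvs hgp w ξ hwcd hξcd hpdew hpdeξ hbc0 hbcL
  simp only [← hc] at R
  have hIcc : uIcc (0:ℝ) L = Icc 0 L := uIcc_of_le hL.le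
  have hsqw0 : ContinuousOn (fun y => (w y 0)^2) (Icc 0 L) := (slice_contOn hwcd le_rfl).pow 2
  have hsqξ0 : ContinuousOn (fun y => (ξ y 0)^2) (Icc 0 L) := (slice_contOn hξcd le_rfl).pow 2
  have hB : IntervalIntegrable (fun y => (w y 0)^2) volume 0 L := (hIcc ▸ hsqw0).intervalIntegrable
  have hA : IntervalIntegrable (fun y => (ξ y 0)^2) volume 0 L := (hIcc ▸ hsqξ0).intervalIntegrable
  have hBnn : (0:ℝ) ≤ ∫ x in (0:ℝ)..L, (w x 0)^2 := my_integral_nonneg hL.le _ (fun y => sq_nonneg _)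
  have hAnn : (0:ℝ) ≤ ∫ x in (0:ℝ)..L, (ξ x 0)^2 := my_integral_nonneg hL.le _ (fun y => sq_nonneg _)
  have hsqt : ContinuousOn (fun x => (w x t)^2) (Icc 0 L) := (slice_contOn hwcd ht).pow 2
  have hvt : 0 ≤ vs*t := by positivity
  have hγ : 0 < c/vs := by positivity
  set M := vs*t - vs*L/c with hM
  set p := min L (max 0 M) with hp
  set q := min L (vs*t) with hq
  have hp0 : 0 ≤ p := le_min hL.le (le_max_left _ _)
  have hMq : max 0 M ≤ vs*t := max_le hvt (by simp [hM]; positivity)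
  have hpq : p ≤ q := min_le_min le_rfl hMq
  have hqL : q ≤ L := min_le_left _ _
  have hpL : p ≤ L := min_le_left _ _
  have heq1 : c/vs*(vs*t - vs*L/c) = c*t - L := by field_simp
  have heq1M : c/vs*M = c*t - L := by rw [hM]; exact heq1
  have heq2 : c/vs*(vs*t) = c*t := by field_simp
  have hii : ∀ a b : ℝ, 0 ≤ a → a ≤ b → b ≤ L →
      IntervalIntegrable (fun x => (w x t)^2) volume a b := by
    intro a b ha hab hbL
    apply ContinuousOn.intervalIntegrable
    exact hsqt.mono (by rw [uIcc_of_le hab]; exact Icc_subset_Icc ha hbL)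
  rw [← intervalIntegral.integral_add_adjacent_intervals (hii 0 p le_rfl hp0 hpL)
    (hii p L hp0 hpL le_rfl),
    ← intervalIntegral.integral_add_adjacent_intervals (hii p q hp0 hpq hqL)
    (hii q L (le_trans hp0 hpq) hqL le_rfl)]
  -- piece 1 is zero
  have hpiece1 : ∫ x in (0:ℝ)..p, (w x t)^2 = 0 := by
    rw [my_integral_congr hp0 ∅ finite_empty (g := fun _ => (0:ℝ)) ?_]
    · simp
    · intro x hx _
      have hxM : x ≤ M := by
        have h1 : x ≤ max 0 M := le_trans hx.2 (min_le_right _ _)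
        rcases le_or_gt M 0 with h | h
        · rw [max_eq_left h] at h1; linarith [hx.1]
        · rwa [max_eq_right h.le] at h1
      have hxvt : x < vs*t := by
        have h0 : 0 < vs*L/c := by positivity
        have : M < vs*t := by rw [hM]; linarith
        linarith
      have hxL : x ≤ L := le_trans hx.2 hpL
      have hargL : L ≤ c*t - c/vs*x := by
        have := mul_le_mul_of_nonneg_left hxM hγ.le
        linarith [heq1M, this]
      rw [R x ⟨hx.1.le, hxL⟩ t ht, if_neg (by push_neg; exact hxvt)]
      rcases le_or_gt (c*t - c/vs*x) L with h | h
      · rw [if_pos h, le_antisymm h hargL, hbcL 0 (mem_Ici.mpr le_rfl)]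
        simp
      · rw [if_neg (by push_neg; exact h)]
        simp
  -- piece 2
  have hpiece2 : ∫ x in p..q, (w x t)^2 ≤ (vs/c) * ∫ x in (0:ℝ)..L, (ξ x 0)^2 := by
    rcases eq_or_lt_of_le hpq with hpq' | hpq'
    · rw [← hpq', intervalIntegral.integral_same]
      positivity
    · have hpltL : p < L := lt_of_lt_of_le hpq' hqL
      have hpM : p = max 0 M := by
        rcases le_or_gt (max 0 M) L with h | h
        · rw [hp, min_eq_right h]
        · exfalso; rw [hp, min_eq_left h.le] at hpq'; linarith [hqL, hpq']
      have hcongr : ∫ x in p..q, (w x t)^2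
          = ∫ x in p..q, (fun y => (ξ y 0)^2) (c*t - c/vs*x) := by
        apply my_integral_congr hpq ∅ finite_empty
        intro x hx _
        have hxq : x ≤ q := hx.2
        have hxvt : x ≤ vs*t := le_trans hxq (min_le_right _ _)
        have hxM : M < x := by
          have : max 0 M < x := by rw [← hpM]; exact hx.1
          exact lt_of_le_of_lt (le_max_right _ _) this
        have hx0 : 0 < x := hx.1.trans_le' hp0
        have hxL : x ≤ L := le_trans hxq hqL
        have hargle : c*t - c/vs*x ≤ L := by
          have := mul_le_mul_of_nonneg_left hxM.le hγ.le
          linarith [heq1M, this]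
        simp only []
        rcases eq_or_lt_of_le hxvt with hxe | hxlt
        · rw [R x ⟨hx0.le, hxL⟩ t ht, if_pos (le_of_eq hxe.symm)]
          have h1 : x - vs*t = 0 := by rw [hxe]; ring
          have h2 : c*t - c/vs*x = 0 := by rw [hxe]; linarith [heq2]
          rw [h1, h2, hbc0 0 (mem_Ici.mpr le_rfl)]
        · rw [R x ⟨hx0.le, hxL⟩ t ht, if_neg (by push_neg; exact hxlt), if_pos hargle]
      rw [hcongr]
      have hbd := my_bound_comp_neg (β := c*t) (fun y => (ξ y 0)^2) hA
        (fun y => sq_nonneg _) hγ hpq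
        (by
          have h1 : c/vs*q ≤ c/vs*(vs*t) :=
            mul_le_mul_of_nonneg_left (by rw [hq]; exact min_le_right _ _) hγ.le
          linarith [heq2, h1])
        (by
          rw [hpM]
          rcases le_or_gt M 0 with h | h
          · rw [max_eq_left h]
            have h2 : c/vs * M ≤ 0 := mul_nonpos_of_nonneg_of_nonpos hγ.le h
            simp only [mul_zero, sub_zero]
            linarith [heq1M, h2]
          · rw [max_eq_right h.le]
            linarith [heq1M])
      calc ∫ x in p..q, (fun y => (ξ y 0)^2) (c*t - c/vs*x)
          ≤ (c/vs)⁻¹ * ∫ y in (0:ℝ)..L, (ξ y 0)^2 := hbd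
        _ = (vs/c) * ∫ x in (0:ℝ)..L, (ξ x 0)^2 := by rw [inv_div]
  -- piece 3
  have hpiece3 : ∫ x in q..L, (w x t)^2 ≤ ∫ x in (0:ℝ)..L, (w x 0)^2 := by
    rcases eq_or_lt_of_le hqL with hq' | hq'
    · rw [hq', intervalIntegral.integral_same]; exact hBnn
    · have hqvt : q = vs*t := by
        rcases le_or_gt (vs*t) L with h | h
        · rw [hq, min_eq_right h]
        · exfalso; rw [hq, min_eq_left h.le] at hq'; linarith
      have hcongr : ∫ x in q..L, (w x t)^2
          = ∫ x in q..L, (fun y => (w y 0)^2) (x - vs*t) := by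
        apply my_integral_congr hqL ∅ finite_empty
        intro x hx _
        have hxvt : vs*t ≤ x := by rw [← hqvt]; exact hx.1.le
        simp only []
        rw [R x ⟨by linarith, hx.2⟩ t ht, if_pos hxvt]
      rw [hcongr, intervalIntegral.integral_comp_sub_right (fun y => (w y 0)^2) (vs*t)]
      have he1 : q - vs*t = 0 := by rw [hqvt]; ring
      rw [he1]
      exact intervalIntegral.integral_mono_interval le_rfl (by linarith [hqvt, hq']) (by linarith)
        (Filter.Eventually.of_forall (fun y => sq_nonneg _)) hB
  have hvc : 0 < vs/c := by positivity
  linarith [hpiece1, hpiece2, hpiece3]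

include hL hvs hgp hwcd hξcd hpdew hpdeξ hbc0 hbcL in
lemma bound_I4 (hξ0 hw0 : ℝ → ℝ) (hξ0cont : ContinuousOn hξ0 (Icc 0 L))
    (hξ0eq : ∀ y ∈ Ioo (0:ℝ) L, deriv (fun x => ξ x 0) y = hξ0 y)
    (hw0cont : ContinuousOn hw0 (Icc 0 L))
    (hw0eq : ∀ y ∈ Ioo (0:ℝ) L, deriv (fun x => w x 0) y = hw0 y) : ∀ t, 0 ≤ t →
    ∫ x in (0:ℝ)..L, (deriv (fun x' => w x' t) x)^2
      ≤ (∫ y in (0:ℝ)..L, (hw0 y)^2) + ((gp - vs)/vs) * ∫ y in (0:ℝ)..L, (hξ0 y)^2 := by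
  intro t ht
  obtain ⟨c, hc⟩ : ∃ c, c = gp - vs := ⟨_, rfl⟩
  have hcpos : 0 < c := by rw [hc]; linarith
  rw [← hc]
  have D1 := dw_slice1 hL hvs hgp w ξ hwcd hξcd hpdew hpdeξ hbc0 hbcL t ht
  have D2 := dw_slice2 hL hvs hgp w ξ hwcd hξcd hpdew hpdeξ hbc0 hbcL t ht
  have D3 := dw_slice3 hL hvs hgp w ξ hwcd hξcd hpdew hpdeξ hbc0 hbcL t ht
  simp only [← hc] at D1 D2 D3
  have hIcc : uIcc (0:ℝ) L = Icc 0 L := uIcc_of_le hL.le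
  have hsqξ : ContinuousOn (fun y => (hξ0 y)^2) (Icc 0 L) := hξ0cont.pow 2
  have hsqw : ContinuousOn (fun y => (hw0 y)^2) (Icc 0 L) := hw0cont.pow 2
  have hA : IntervalIntegrable (fun y => (hξ0 y)^2) volume 0 L := (hIcc ▸ hsqξ).intervalIntegrable
  have hB : IntervalIntegrable (fun y => (hw0 y)^2) volume 0 L := (hIcc ▸ hsqw).intervalIntegrable
  have hAnn : (0:ℝ) ≤ ∫ y in (0:ℝ)..L, (hξ0 y)^2 := my_integral_nonneg hL.le _ (fun y => sq_nonneg _)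
  have hBnn : (0:ℝ) ≤ ∫ y in (0:ℝ)..L, (hw0 y)^2 := my_integral_nonneg hL.le _ (fun y => sq_nonneg _)
  have hvt : 0 ≤ vs*t := by positivity
  have hγ : 0 < c/vs := by positivity
  set M := vs*t - vs*L/c with hM
  set p := min L (max 0 M) with hp
  set q := min L (vs*t) with hq
  have hp0 : 0 ≤ p := le_min hL.le (le_max_left _ _)
  have hMq : max 0 M ≤ vs*t := max_le hvt (by simp [hM]; positivity)
  have hpq : p ≤ q := min_le_min le_rfl hMq
  have hqL : q ≤ L := min_le_left _ _
  have hpL : p ≤ L := min_le_left _ _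
  have heq1 : c/vs*(vs*t - vs*L/c) = c*t - L := by field_simp
  have heq1M : c/vs*M = c*t - L := by rw [hM]; exact heq1
  have heq2 : c/vs*(vs*t) = c*t := by field_simp
  -- pointwise identities
  have hD1' : ∀ x ∈ Ioc (0:ℝ) p, x ∉ ({p} : Set ℝ) →
      (fun x => (deriv (fun x' => w x' t) x)^2) x = (fun _ => (0:ℝ)) x := by
    intro x hx hxs
    have hxp : x < p := lt_of_le_of_ne hx.2 (by simpa using hxs)
    have hxmax : x < max 0 M := lt_of_lt_of_le hxp (min_le_right _ _)
    have hxM : x < M := by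
      rcases le_or_gt M 0 with h | h
      · rw [max_eq_left h] at hxmax; linarith [hx.1]
      · rwa [max_eq_right h.le] at hxmax
    have hxm : x ∈ Ioo (0:ℝ) L := ⟨hx.1, lt_of_lt_of_le hxp hpL⟩
    simp only []
    rw [D1 x hxm hxM]
    simp
  have hint1 : IntervalIntegrable (fun x => (deriv (fun x' => w x' t) x)^2) volume 0 p :=
    my_integrable_congr hp0 {p} (finite_singleton _) (fun x hx hxs => (hD1' x hx hxs).symm)
      intervalIntegrable_const
  have hpiece1 : ∫ x in (0:ℝ)..p, (deriv (fun x' => w x' t) x)^2 = 0 := by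
    rw [my_integral_congr hp0 {p} (finite_singleton _) hD1']; simp
  -- middle piece
  have hmid : IntervalIntegrable (fun x => (deriv (fun x' => w x' t) x)^2) volume p q ∧
      ∫ x in p..q, (deriv (fun x' => w x' t) x)^2 ≤ (c/vs) * ∫ y in (0:ℝ)..L, (hξ0 y)^2 := by
    rcases eq_or_lt_of_le hpq with hpq' | hpq'
    · rw [← hpq']
      exact ⟨my_II_refl _ _, by rw [intervalIntegral.integral_same]; positivity⟩
    · have hpltL : p < L := lt_of_lt_of_le hpq' hqL
      have hpM : p = max 0 M := by
        rcases le_or_gt (max 0 M) L with h | h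
        · rw [hp, min_eq_right h]
        · exfalso; rw [hp, min_eq_left h.le] at hpq'; linarith [hqL, hpq']
      have hu2' : 0 ≤ c*t - c/vs*q := by
        have h1 : c/vs*q ≤ c/vs*(vs*t) :=
          mul_le_mul_of_nonneg_left (by rw [hq]; exact min_le_right _ _) hγ.le
        linarith [heq2, h1]
      have hu1' : c*t - c/vs*p ≤ L := by
        rw [hpM]
        rcases le_or_gt M 0 with h | h
        · rw [max_eq_left h]
          have h2 : c/vs * M ≤ 0 := mul_nonpos_of_nonneg_of_nonpos hγ.le h
          simp only [mul_zero, sub_zero]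
          linarith [heq1M, h2]
        · rw [max_eq_right h.le]
          linarith [heq1M]
      have hDmid : ∀ x ∈ Ioc p q, x ∉ ({q} : Set ℝ) →
          (fun x => (deriv (fun x' => w x' t) x)^2) x
            = (fun x => (c/vs)^2 * (fun y => (hξ0 y)^2) (c*t - c/vs*x)) x := by
        intro x hx hxs
        have hxq : x < q := lt_of_le_of_ne hx.2 (by simpa using hxs)
        have hxvt : x < vs*t := lt_of_lt_of_le hxq (by rw [hq]; exact min_le_right _ _)
        have hxM : M < x := by
          have : max 0 M < x := by rw [← hpM]; exact hx.1
          exact lt_of_le_of_lt (le_max_right _ _) this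
        have hxm : x ∈ Ioo (0:ℝ) L := ⟨lt_of_le_of_lt hp0 hx.1, lt_of_lt_of_le hxq hqL⟩
        have harg : c*t - c/vs*x ∈ Ioo (0:ℝ) L := by
          constructor
          · have h1 : c/vs*x < c/vs*(vs*t) := mul_lt_mul_of_pos_left hxvt hγ
            linarith [heq2, h1]
          · have h1 : c/vs*M < c/vs*x := mul_lt_mul_of_pos_left hxM hγ
            linarith [heq1M, h1]
        simp only []
        rw [D2 x hxm hxM hxvt, hξ0eq _ harg]
        ring
      have haffmaps : ∀ x ∈ Icc p q, c*t - c/vs*x ∈ Icc (0:ℝ) L := by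
        intro x hx
        constructor
        · have h1 : c/vs*x ≤ c/vs*q := mul_le_mul_of_nonneg_left hx.2 hγ.le
          linarith [hu2', h1]
        · have h1 : c/vs*p ≤ c/vs*x := mul_le_mul_of_nonneg_left hx.1 hγ.le
          linarith [hu1', h1]
      have hcand : ContinuousOn (fun x => (c/vs)^2 * (fun y => (hξ0 y)^2) (c*t - c/vs*x))
          (Icc p q) :=
        continuousOn_const.mul
          (hsqξ.comp (Continuous.continuousOn (by fun_prop)) haffmaps)
      have hintm : IntervalIntegrable (fun x => (deriv (fun x' => w x' t) x)^2) volume p q := by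
        apply my_integrable_congr hpq {q} (finite_singleton _)
          (fun x hx hxs => (hDmid x hx hxs).symm)
        apply ContinuousOn.intervalIntegrable
        rwa [uIcc_of_le hpq]
      refine ⟨hintm, ?_⟩
      rw [my_integral_congr hpq {q} (finite_singleton _) hDmid,
        intervalIntegral.integral_const_mul]
      have hbd := my_bound_comp_neg (β := c*t) (fun y => (hξ0 y)^2) hA
        (fun y => sq_nonneg _) hγ hpq hu2' hu1'
      calc (c/vs)^2 * ∫ x in p..q, (fun y => (hξ0 y)^2) (c*t - c/vs*x)
          ≤ (c/vs)^2 * ((c/vs)⁻¹ * ∫ y in (0:ℝ)..L, (hξ0 y)^2) := by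
            apply mul_le_mul_of_nonneg_left hbd (by positivity)
        _ = (c/vs) * ∫ y in (0:ℝ)..L, (hξ0 y)^2 := by
            have hne : (c/vs) ≠ 0 := ne_of_gt hγ
            field_simp
  -- third piece
  have hthird : IntervalIntegrable (fun x => (deriv (fun x' => w x' t) x)^2) volume q L ∧
      ∫ x in q..L, (deriv (fun x' => w x' t) x)^2 ≤ ∫ y in (0:ℝ)..L, (hw0 y)^2 := by
    rcases eq_or_lt_of_le hqL with hq' | hq'
    · rw [hq']
      exact ⟨my_II_refl _ _, by rw [intervalIntegral.integral_same]; exact hBnn⟩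
    · have hqvt : q = vs*t := by
        rcases le_or_gt (vs*t) L with h | h
        · rw [hq, min_eq_right h]
        · exfalso; rw [hq, min_eq_left h.le] at hq'; linarith
      have hD3' : ∀ x ∈ Ioc q L, x ∉ ({L} : Set ℝ) →
          (fun x => (deriv (fun x' => w x' t) x)^2) x
            = (fun x => (fun y => (hw0 y)^2) (x - vs*t)) x := by
        intro x hx hxs
        have hxL : x < L := lt_of_le_of_ne hx.2 (by simpa using hxs)
        have hxvt : vs*t < x := by rw [← hqvt]; exact hx.1
        have hxm : x ∈ Ioo (0:ℝ) L := ⟨lt_of_le_of_lt (le_trans hp0 hpq) hx.1, hxL⟩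
        have harg : x - vs*t ∈ Ioo (0:ℝ) L := ⟨by linarith, by linarith⟩
        simp only []
        rw [D3 x hxm hxvt, hw0eq _ harg]
      have hmaps : ∀ x ∈ Icc q L, x - vs*t ∈ Icc (0:ℝ) L := by
        intro x hx
        constructor
        · rw [hqvt] at hx; linarith [hx.1]
        · linarith [hx.2, hvt]
      have hintt : IntervalIntegrable (fun x => (deriv (fun x' => w x' t) x)^2) volume q L := by
        apply my_integrable_congr hqL {L} (finite_singleton _)
          (fun x hx hxs => (hD3' x hx hxs).symm)
        apply ContinuousOn.intervalIntegrable
        rw [uIcc_of_le hqL]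
        exact hsqw.comp (Continuous.continuousOn (by fun_prop)) hmaps
      refine ⟨hintt, ?_⟩
      rw [my_integral_congr hqL {L} (finite_singleton _) hD3',
        intervalIntegral.integral_comp_sub_right (fun y => (hw0 y)^2) (vs*t)]
      have he1 : q - vs*t = 0 := by rw [hqvt]; ring
      rw [he1]
      exact intervalIntegral.integral_mono_interval le_rfl (by linarith [hqvt, hq']) (by linarith)
        (Filter.Eventually.of_forall (fun y => sq_nonneg _)) hB
  rw [← intervalIntegral.integral_add_adjacent_intervals
      (IntervalIntegrable.trans hint1 hmid.1 : IntervalIntegrable _ volume 0 q) hthird.1,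
    ← intervalIntegral.integral_add_adjacent_intervals hint1 hmid.1]
  linarith [hpiece1, hmid.2, hthird.2]

include hL hvs hgp hξcd hpdeξ hbcL in
lemma vanish_xi1 : ∀ t, 0 ≤ t → L < (gp - vs)*t → ∫ x in (0:ℝ)..L, (ξ x t)^2 = 0 := by
  intro t ht hct
  have R := repr_xi hL hvs hgp ξ hξcd hpdeξ hbcL
  rw [my_integral_congr hL.le ∅ finite_empty (g := fun _ => (0:ℝ)) ?_]
  · simp
  · intro x hx _
    rw [R x ⟨hx.1.le, hx.2⟩ t ht, if_neg (by push_neg; linarith [hx.1])]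
    simp

include hL hvs hgp hξcd hpdeξ hbcL in
lemma vanish_xi2 : ∀ t, 0 ≤ t → L < (gp - vs)*t →
    ∫ x in (0:ℝ)..L, (deriv (fun x' => ξ x' t) x)^2 = 0 := by
  intro t ht hct
  have D := dxi_slice hL hvs hgp ξ hξcd hpdeξ hbcL t ht
  rw [my_integral_congr hL.le {L} (finite_singleton _) (g := fun _ => (0:ℝ)) ?_]
  · simp
  · intro x hx hxs
    have hxm : x ∈ Ioo (0:ℝ) L := ⟨hx.1, lt_of_le_of_ne hx.2 (by simpa using hxs)⟩
    rw [D x hxm (by intro h; nlinarith [hx.1]), if_neg (by push_neg; nlinarith [hx.1])]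
    simp

include hL hvs hgp hwcd hξcd hpdew hpdeξ hbc0 hbcL in
lemma vanish_w1 : ∀ t, 0 ≤ t → L < vs*t - vs*L/(gp - vs) →
    ∫ x in (0:ℝ)..L, (w x t)^2 = 0 := by
  intro t ht hMt
  obtain ⟨c, hc⟩ : ∃ c, c = gp - vs := ⟨_, rfl⟩
  have hcpos : 0 < c := by rw [hc]; linarith
  have R := repr_w hL hvs hgp w ξ hwcd hξcd hpdew hpdeξ hbc0 hbcL
  simp only [← hc] at R hMt
  have hγ : 0 < c/vs := by positivity
  have heq1 : c/vs*(vs*t - vs*L/c) = c*t - L := by field_simp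
  rw [my_integral_congr hL.le ∅ finite_empty (g := fun _ => (0:ℝ)) ?_]
  · simp
  · intro x hx _
    have hvL : 0 < vs*L/c := by positivity
    have hxvt : x < vs*t := by linarith [hx.2]
    have harg : L < c*t - c/vs*x := by
      have h1 : c/vs*x ≤ c/vs*L := mul_le_mul_of_nonneg_left hx.2 hγ.le
      have h2 : c/vs*L < c/vs*(vs*t - vs*L/c) := mul_lt_mul_of_pos_left hMt hγ
      linarith [heq1]
    rw [R x ⟨hx.1.le, hx.2⟩ t ht, if_neg (by push_neg; exact hxvt),
      if_neg (by push_neg; exact harg)]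
    simp

include hL hvs hgp hwcd hξcd hpdew hpdeξ hbc0 hbcL in
lemma vanish_w2 : ∀ t, 0 ≤ t → L < vs*t - vs*L/(gp - vs) →
    ∫ x in (0:ℝ)..L, (deriv (fun x' => w x' t) x)^2 = 0 := by
  intro t ht hMt
  have D1 := dw_slice1 hL hvs hgp w ξ hwcd hξcd hpdew hpdeξ hbc0 hbcL t ht
  rw [my_integral_congr hL.le {L} (finite_singleton _) (g := fun _ => (0:ℝ)) ?_]
  · simp
  · intro x hx hxs
    have hxm : x ∈ Ioo (0:ℝ) L := ⟨hx.1, lt_of_le_of_ne hx.2 (by simpa using hxs)⟩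
    rw [D1 x hxm (by linarith [hxm.2])]
    simp

end Repr



/-- exponential `H¹` decay of the final target system
`∂ₜw = −v* ∂ₓw`, `∂ₜξ = (γp* − v*) ∂ₓξ` with `w(0,t) = ξ(0,t)`, `ξ(L,t) = 0`,
with constants `M₁, γ̄` depending only on `L, v*, γp*`. -/
theorem stmt2 (L vs gp : ℝ) (hL : 0 < L) (hvs : 0 < vs) (hgp : vs < gp) :
    ∃ M₁ > (0:ℝ), ∃ γbar > (0:ℝ),
      ∀ w ξ : ℝ → ℝ → ℝ,
        ContDiffOn ℝ 1 (Function.uncurry w) (Icc 0 L ×ˢ Ici 0) →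
        ContDiffOn ℝ 1 (Function.uncurry ξ) (Icc 0 L ×ˢ Ici 0) →
        (∀ x ∈ Ioo (0:ℝ) L, ∀ t ∈ Ioi (0:ℝ),
          deriv (fun s => w x s) t = -vs * deriv (fun y => w y t) x) →
        (∀ x ∈ Ioo (0:ℝ) L, ∀ t ∈ Ioi (0:ℝ),
          deriv (fun s => ξ x s) t = (gp - vs) * deriv (fun y => ξ y t) x) →
        (∀ t ∈ Ici (0:ℝ), w 0 t = ξ 0 t) →
        (∀ t ∈ Ici (0:ℝ), ξ L t = 0) →
        ∀ t ∈ Ici (0:ℝ),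
          H1pair L (fun x => ξ x t) (fun x => w x t)
            ≤ M₁ * Real.exp (-γbar * t) *
                H1pair L (fun x => ξ x 0) (fun x => w x 0) := by
  have hc : 0 < gp - vs := by linarith
  have ha : 0 < vs/(gp - vs) := by positivity
  have hb : 0 < (gp - vs)/vs := by positivity
  have hKpos : (0:ℝ) < 1 + vs/(gp - vs) + (gp - vs)/vs := by linarith
  have hTpos : (0:ℝ) < L/(gp - vs) + L/vs := by positivity
  refine ⟨Real.sqrt (1 + vs/(gp - vs) + (gp - vs)/vs) * Real.exp (L/(gp - vs) + L/vs),
    by positivity, 1, one_pos, ?_⟩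
  intro w ξ hwcd hξcd hpdew hpdeξ hbc0 hbcL t ht
  rw [mem_Ici] at ht
  obtain ⟨hξ0, hξ0cont, hξ0eq⟩ := slice_deriv_rep hL hξcd le_rfl
  obtain ⟨hw0, hw0cont, hw0eq⟩ := slice_deriv_rep hL hwcd le_rfl
  have hSξnn : 0 ≤ ∫ x in (0:ℝ)..L, (ξ x t)^2 :=
    my_integral_nonneg hL.le _ (fun y => sq_nonneg _)
  have hDξnn : 0 ≤ ∫ x in (0:ℝ)..L, (deriv (fun x' => ξ x' t) x)^2 :=
    my_integral_nonneg hL.le _ (fun y => sq_nonneg _)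
  have hSwnn : 0 ≤ ∫ x in (0:ℝ)..L, (w x t)^2 :=
    my_integral_nonneg hL.le _ (fun y => sq_nonneg _)
  have hDwnn : 0 ≤ ∫ x in (0:ℝ)..L, (deriv (fun x' => w x' t) x)^2 :=
    my_integral_nonneg hL.le _ (fun y => sq_nonneg _)
  have hSξ0nn : 0 ≤ ∫ x in (0:ℝ)..L, (ξ x 0)^2 :=
    my_integral_nonneg hL.le _ (fun y => sq_nonneg _)
  have hSw0nn : 0 ≤ ∫ x in (0:ℝ)..L, (w x 0)^2 :=
    my_integral_nonneg hL.le _ (fun y => sq_nonneg _)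
  have hDξ0nn : 0 ≤ ∫ x in (0:ℝ)..L, (deriv (fun x' => ξ x' 0) x)^2 :=
    my_integral_nonneg hL.le _ (fun y => sq_nonneg _)
  have hDw0nn : 0 ≤ ∫ x in (0:ℝ)..L, (deriv (fun x' => w x' 0) x)^2 :=
    my_integral_nonneg hL.le _ (fun y => sq_nonneg _)
  have hA'nn : 0 ≤ ∫ y in (0:ℝ)..L, (hξ0 y)^2 :=
    my_integral_nonneg hL.le _ (fun y => sq_nonneg _)
  have hB'nn : 0 ≤ ∫ y in (0:ℝ)..L, (hw0 y)^2 :=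
    my_integral_nonneg hL.le _ (fun y => sq_nonneg _)
  have hpairt : H1pair L (fun x => ξ x t) (fun x => w x t)
      = Real.sqrt ((∫ x in (0:ℝ)..L, (ξ x t)^2)
          + (∫ x in (0:ℝ)..L, (deriv (fun x' => ξ x' t) x)^2)
          + ((∫ x in (0:ℝ)..L, (w x t)^2)
          + (∫ x in (0:ℝ)..L, (deriv (fun x' => w x' t) x)^2))) := by
    simp only [H1pair, H1norm]
    rw [Real.sq_sqrt (add_nonneg hSξnn hDξnn), Real.sq_sqrt (add_nonneg hSwnn hDwnn)]
  have hDξ0 : ∫ x in (0:ℝ)..L, (deriv (fun x' => ξ x' 0) x)^2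
      = ∫ y in (0:ℝ)..L, (hξ0 y)^2 := by
    apply my_integral_congr hL.le {L} (finite_singleton _)
    intro x hx hxs
    rw [hξ0eq x ⟨hx.1, lt_of_le_of_ne hx.2 (by simpa using hxs)⟩]
  have hDw0 : ∫ x in (0:ℝ)..L, (deriv (fun x' => w x' 0) x)^2
      = ∫ y in (0:ℝ)..L, (hw0 y)^2 := by
    apply my_integral_congr hL.le {L} (finite_singleton _)
    intro x hx hxs
    rw [hw0eq x ⟨hx.1, lt_of_le_of_ne hx.2 (by simpa using hxs)⟩]
  have hpair0 : H1pair L (fun x => ξ x 0) (fun x => w x 0)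
      = Real.sqrt ((∫ x in (0:ℝ)..L, (ξ x 0)^2)
          + (∫ y in (0:ℝ)..L, (hξ0 y)^2)
          + ((∫ x in (0:ℝ)..L, (w x 0)^2)
          + (∫ y in (0:ℝ)..L, (hw0 y)^2))) := by
    simp only [H1pair, H1norm]
    rw [Real.sq_sqrt (add_nonneg hSξ0nn hDξ0nn), Real.sq_sqrt (add_nonneg hSw0nn hDw0nn),
      hDξ0, hDw0]
  have hS0nn : 0 ≤ (∫ x in (0:ℝ)..L, (ξ x 0)^2) + (∫ y in (0:ℝ)..L, (hξ0 y)^2)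
      + ((∫ x in (0:ℝ)..L, (w x 0)^2) + (∫ y in (0:ℝ)..L, (hw0 y)^2)) := by linarith
  rw [hpairt, hpair0]
  rcases le_or_gt t (L/(gp - vs) + L/vs) with htT | htT
  · have h1 := bound_I1 hL hvs hgp ξ hξcd hpdeξ hbcL t ht
    have h2 := bound_I2 hL hvs hgp ξ hξcd hpdeξ hbcL hξ0 hξ0cont hξ0eq t ht
    have h3 := bound_I3 hL hvs hgp w ξ hwcd hξcd hpdew hpdeξ hbc0 hbcL t ht
    have h4 := bound_I4 hL hvs hgp w ξ hwcd hξcd hpdew hpdeξ hbc0 hbcL hξ0 hw0 hξ0cont hξ0eq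
        hw0cont hw0eq t ht
    have hsum : (∫ x in (0:ℝ)..L, (ξ x t)^2)
          + (∫ x in (0:ℝ)..L, (deriv (fun x' => ξ x' t) x)^2)
          + ((∫ x in (0:ℝ)..L, (w x t)^2)
          + (∫ x in (0:ℝ)..L, (deriv (fun x' => w x' t) x)^2))
        ≤ (1 + vs/(gp - vs) + (gp - vs)/vs)
          * ((∫ x in (0:ℝ)..L, (ξ x 0)^2) + (∫ y in (0:ℝ)..L, (hξ0 y)^2)
          + ((∫ x in (0:ℝ)..L, (w x 0)^2) + (∫ y in (0:ℝ)..L, (hw0 y)^2))) := by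
      have e1 : (vs/(gp - vs)) * (∫ x in (0:ℝ)..L, (ξ x 0)^2)
          ≤ (vs/(gp - vs)) * ((∫ x in (0:ℝ)..L, (ξ x 0)^2) + (∫ y in (0:ℝ)..L, (hξ0 y)^2)
          + ((∫ x in (0:ℝ)..L, (w x 0)^2) + (∫ y in (0:ℝ)..L, (hw0 y)^2))) :=
        mul_le_mul_of_nonneg_left (by linarith) ha.le
      have e2 : ((gp - vs)/vs) * (∫ y in (0:ℝ)..L, (hξ0 y)^2)
          ≤ ((gp - vs)/vs) * ((∫ x in (0:ℝ)..L, (ξ x 0)^2) + (∫ y in (0:ℝ)..L, (hξ0 y)^2)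
          + ((∫ x in (0:ℝ)..L, (w x 0)^2) + (∫ y in (0:ℝ)..L, (hw0 y)^2))) :=
        mul_le_mul_of_nonneg_left (by linarith) hb.le
      nlinarith [e1, e2, h1, h2, h3, h4]
    calc Real.sqrt ((∫ x in (0:ℝ)..L, (ξ x t)^2)
          + (∫ x in (0:ℝ)..L, (deriv (fun x' => ξ x' t) x)^2)
          + ((∫ x in (0:ℝ)..L, (w x t)^2)
          + (∫ x in (0:ℝ)..L, (deriv (fun x' => w x' t) x)^2)))
        ≤ Real.sqrt ((1 + vs/(gp - vs) + (gp - vs)/vs)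
          * ((∫ x in (0:ℝ)..L, (ξ x 0)^2) + (∫ y in (0:ℝ)..L, (hξ0 y)^2)
          + ((∫ x in (0:ℝ)..L, (w x 0)^2) + (∫ y in (0:ℝ)..L, (hw0 y)^2)))) :=
          Real.sqrt_le_sqrt hsum
      _ = Real.sqrt (1 + vs/(gp - vs) + (gp - vs)/vs)
          * Real.sqrt ((∫ x in (0:ℝ)..L, (ξ x 0)^2) + (∫ y in (0:ℝ)..L, (hξ0 y)^2)
          + ((∫ x in (0:ℝ)..L, (w x 0)^2) + (∫ y in (0:ℝ)..L, (hw0 y)^2))) := by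
          rw [Real.sqrt_mul hKpos.le]
      _ ≤ Real.sqrt (1 + vs/(gp - vs) + (gp - vs)/vs) * Real.exp (L/(gp - vs) + L/vs)
          * Real.exp (-1 * t)
          * Real.sqrt ((∫ x in (0:ℝ)..L, (ξ x 0)^2) + (∫ y in (0:ℝ)..L, (hξ0 y)^2)
          + ((∫ x in (0:ℝ)..L, (w x 0)^2) + (∫ y in (0:ℝ)..L, (hw0 y)^2))) := by
          have hexp : 1 ≤ Real.exp (L/(gp - vs) + L/vs) * Real.exp (-1 * t) := by
            rw [← Real.exp_add]
            apply Real.one_le_exp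
            linarith
          nlinarith [Real.sqrt_nonneg (1 + vs/(gp - vs) + (gp - vs)/vs),
            Real.sqrt_nonneg ((∫ x in (0:ℝ)..L, (ξ x 0)^2) + (∫ y in (0:ℝ)..L, (hξ0 y)^2)
              + ((∫ x in (0:ℝ)..L, (w x 0)^2) + (∫ y in (0:ℝ)..L, (hw0 y)^2))), hexp,
            mul_nonneg (Real.sqrt_nonneg (1 + vs/(gp - vs) + (gp - vs)/vs))
              (Real.sqrt_nonneg ((∫ x in (0:ℝ)..L, (ξ x 0)^2) + (∫ y in (0:ℝ)..L, (hξ0 y)^2)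
              + ((∫ x in (0:ℝ)..L, (w x 0)^2) + (∫ y in (0:ℝ)..L, (hw0 y)^2))))]
  · have hct : L < (gp - vs)*t := by
      have hid : (gp - vs) * (L/(gp - vs) + L/vs) = L + (gp - vs) * (L/vs) := by
        field_simp
      have h5 : 0 < (gp - vs) * (L/vs) := by positivity
      have h6 := mul_lt_mul_of_pos_left htT hc
      linarith [hid, h5, h6]
    have hMt : L < vs*t - vs*L/(gp - vs) := by
      have hid : vs * (L/(gp - vs) + L/vs) = vs*L/(gp - vs) + L := by
        field_simp
      have h6 := mul_lt_mul_of_pos_left htT hvs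
      linarith [hid, h6]
    have z1 := vanish_xi1 hL hvs hgp ξ hξcd hpdeξ hbcL t ht hct
    have z2 := vanish_xi2 hL hvs hgp ξ hξcd hpdeξ hbcL t ht hct
    have z3 := vanish_w1 hL hvs hgp w ξ hwcd hξcd hpdew hpdeξ hbc0 hbcL t ht hMt
    have z4 := vanish_w2 hL hvs hgp w ξ hwcd hξcd hpdew hpdeξ hbc0 hbcL t ht hMt
    rw [z1, z2, z3, z4]
    simp only [add_zero, zero_add, Real.sqrt_zero]
    positivity
end

section
/- Suppose L > 0, v* > 0 and γp* > v*. Let w, ξ : [0,L] × [0,∞) → ℝ be continuously differentiable functions satisfying ∂ₜw(x,t) = −v* ∂ₓw(x,t), ∂ₜξ(x,t) = (γp* − v*) ∂ₓξ(x,t) on (0,L) × (0,∞), with boundary conditions w(0,t) = ξ(0,t) and ξ(L,t) = 0 for all t ≥ 0. Then the system is finite-time stable: ξ(x,t) = 0 and w(x,t) = 0 for every x ∈ [0,L] and every t ≥ L/(γp* − v*) + L/v*. -/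
open Set

lemma char_zero (L : ℝ) (F : ℝ → ℝ → ℝ)
    (hF : ContDiffOn ℝ 1 (Function.uncurry F) (Icc 0 L ×ˢ Ici 0))
    (c : ℝ)
    (hpde : ∀ x ∈ Ioo (0:ℝ) L, ∀ t ∈ Ioi (0:ℝ),
      deriv (fun s => F x s) t = c * deriv (fun y => F y t) x)
    (x0 t0 τ : ℝ) (hτ : 0 < τ)
    (hmemc : ∀ s ∈ Icc (0:ℝ) τ, (x0 + c*s) ∈ Icc (0:ℝ) L ∧ (0:ℝ) ≤ t0 - s)
    (hmemo : ∀ s ∈ Ioo (0:ℝ) τ, (x0 + c*s) ∈ Ioo (0:ℝ) L ∧ (0:ℝ) < t0 - s) :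
    F x0 t0 = F (x0 + c*τ) (t0 - τ) := by
  set g : ℝ → ℝ := fun s => F (x0 + c*s) (t0 - s) with hg
  have hcurve : Continuous (fun s : ℝ => (x0 + c*s, t0 - s)) := by fun_prop
  have hcont : ContinuousOn g (Icc 0 τ) := by
    apply (hF.continuousOn.comp hcurve.continuousOn)
    intro s hs
    exact ⟨(hmemc s hs).1, (hmemc s hs).2⟩
  have hderiv : ∀ s ∈ Ioo (0:ℝ) τ, HasDerivAt g 0 s := by
    intro s hs
    obtain ⟨hxo, hto⟩ := hmemo s hs
    set p : ℝ × ℝ := (x0 + c*s, t0 - s) with hp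
    have hopen : IsOpen (Ioo (0:ℝ) L ×ˢ Ioi (0:ℝ)) := isOpen_Ioo.prod isOpen_Ioi
    have hpmem : p ∈ Ioo (0:ℝ) L ×ˢ Ioi (0:ℝ) := ⟨hxo, hto⟩
    have hnhds : (Icc (0:ℝ) L ×ˢ Ici (0:ℝ)) ∈ nhds p :=
      Filter.mem_of_superset (hopen.mem_nhds hpmem)
        (prod_mono Ioo_subset_Icc_self Ioi_subset_Ici_self)
    have hd : DifferentiableAt ℝ (Function.uncurry F) p :=
      ((hF.differentiableOn one_ne_zero).differentiableAt hnhds)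
    set f' := fderiv ℝ (Function.uncurry F) p with hf'
    have hFd : HasFDerivAt (Function.uncurry F) f' p := hd.hasFDerivAt
    -- partial derivatives
    have hx : HasDerivAt (fun y => F y (t0 - s)) (f' (1, 0)) (x0 + c*s) := by
      have hc : HasDerivAt (fun y : ℝ => (y, t0 - s)) ((1:ℝ), (0:ℝ)) (x0 + c*s) := by
        have := HasDerivAt.prodMk (hasDerivAt_id (x0 + c*s)) (hasDerivAt_const (x0 + c*s) (t0 - s))
        simpa using this
      have h := hFd.comp_hasDerivAt (x0 + c*s) hc; exact h
    have ht : HasDerivAt (fun r => F (x0 + c*s) r) (f' (0, 1)) (t0 - s) := by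
      have hc : HasDerivAt (fun r : ℝ => (x0 + c*s, r)) ((0:ℝ), (1:ℝ)) (t0 - s) := by
        have := HasDerivAt.prodMk (hasDerivAt_const (t0 - s) (x0 + c*s)) (hasDerivAt_id (t0 - s))
        simpa using this
      have h := hFd.comp_hasDerivAt (t0 - s) hc; exact h
    have hpde' : f' (0, 1) = c * f' (1, 0) := by
      have h1 := hpde (x0 + c*s) hxo (t0 - s) hto
      rw [ht.deriv, hx.deriv] at h1
      exact h1
    -- curve derivative
    have hcv : HasDerivAt (fun r : ℝ => (x0 + c*r, t0 - r)) ((c:ℝ), (-1:ℝ)) s := by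
      have h1 : HasDerivAt (fun r : ℝ => x0 + c*r) c s := by
        simpa using ((hasDerivAt_id s).const_mul c).const_add x0
      have h2 : HasDerivAt (fun r : ℝ => t0 - r) (-1) s := by
        simpa using (hasDerivAt_id s).const_sub t0
      exact HasDerivAt.prodMk h1 h2
    have hcomp : HasDerivAt g (f' (c, -1)) s := by have h := hFd.comp_hasDerivAt s hcv; exact h
    have hval : f' (c, -1) = 0 := by
      have : ((c:ℝ), (-1:ℝ)) = c • ((1:ℝ), (0:ℝ)) + (-1:ℝ) • ((0:ℝ), (1:ℝ)) := by
        simp [Prod.ext_iff]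
      rw [this, map_add, map_smul, map_smul, hpde']
      simp
    rw [hval] at hcomp
    exact hcomp
  obtain ⟨s, hs, hEq⟩ := exists_hasDerivAt_eq_slope g (fun _ => 0) hτ hcont hderiv
  have : g τ = g 0 := by
    field_simp at hEq
    rw [eq_comm, div_eq_zero_iff] at hEq
    rcases hEq with h | h <;> linarith
  have h0 : g 0 = F x0 t0 := by simp [hg]
  have hτ' : g τ = F (x0 + c*τ) (t0 - τ) := by simp [hg]
  rw [← h0, ← hτ', this]

/-- the cascade target system
`∂ₜw = −v* ∂ₓw`, `∂ₜξ = (γp* − v*) ∂ₓξ` with boundary conditions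
`w(0,t) = ξ(0,t)`, `ξ(L,t) = 0` is finite-time stable: the state vanishes
identically after time `L/(γp* − v*) + L/v*`. -/
theorem stmt3 (L vs gp : ℝ) (hL : 0 < L) (hvs : 0 < vs) (hgp : vs < gp)
    (w ξ : ℝ → ℝ → ℝ)
    (hw : ContDiffOn ℝ 1 (Function.uncurry w) (Icc 0 L ×ˢ Ici 0))
    (hξ : ContDiffOn ℝ 1 (Function.uncurry ξ) (Icc 0 L ×ˢ Ici 0))
    (hwpde : ∀ x ∈ Ioo (0:ℝ) L, ∀ t ∈ Ioi (0:ℝ),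
      deriv (fun s => w x s) t = -vs * deriv (fun y => w y t) x)
    (hξpde : ∀ x ∈ Ioo (0:ℝ) L, ∀ t ∈ Ioi (0:ℝ),
      deriv (fun s => ξ x s) t = (gp - vs) * deriv (fun y => ξ y t) x)
    (hbc0 : ∀ t ∈ Ici (0:ℝ), w 0 t = ξ 0 t)
    (hbcL : ∀ t ∈ Ici (0:ℝ), ξ L t = 0) :
    ∀ x ∈ Icc (0:ℝ) L, ∀ t : ℝ, L / (gp - vs) + L / vs ≤ t →
      ξ x t = 0 ∧ w x t = 0 := by
  have hc : (0:ℝ) < gp - vs := by linarith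
  have hLc : 0 < L / (gp - vs) := div_pos hL hc
  have hLv : 0 < L / vs := div_pos hL hvs
  -- Step 1: ξ vanishes after time L/(gp-vs)
  have hξ0 : ∀ x ∈ Icc (0:ℝ) L, ∀ t : ℝ, L / (gp - vs) ≤ t → ξ x t = 0 := by
    intro x hx t ht
    rcases eq_or_lt_of_le hx.2 with hxL | hxL
    · rw [hxL]; exact hbcL t (le_trans hLc.le ht)
    · set τ := (L - x) / (gp - vs) with hτdef
      have hτ : 0 < τ := div_pos (by linarith) hc
      have hcτ : (gp - vs) * τ = L - x := by rw [hτdef]; field_simp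
      have hτle : τ ≤ L / (gp - vs) := by
        rw [hτdef]; gcongr; linarith [hx.1]
      have key := char_zero L ξ hξ (gp - vs) hξpde x t τ hτ ?_ ?_
      · rw [hcτ] at key
        have : x + (L - x) = L := by ring
        rw [this] at key
        rw [key]
        exact hbcL (t - τ) (by simp only [mem_Ici]; linarith)
      · intro s hs
        constructor
        · constructor
          · have : 0 ≤ (gp - vs) * s := mul_nonneg hc.le hs.1
            linarith [hx.1]
          · have : (gp - vs) * s ≤ (gp - vs) * τ :=
              mul_le_mul_of_nonneg_left hs.2 hc.le
            linarith [hcτ]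
        · linarith [hs.2, hτle]
      · intro s hs
        constructor
        · constructor
          · have : 0 < (gp - vs) * s := mul_pos hc hs.1
            linarith [hx.1]
          · have : (gp - vs) * s < (gp - vs) * τ :=
              mul_lt_mul_of_pos_left hs.2 hc
            linarith [hcτ]
        · have : s < τ := hs.2
          linarith [hτle]
  intro x hx t ht
  refine ⟨hξ0 x hx t (by linarith), ?_⟩
  -- Step 2: w
  rcases eq_or_lt_of_le hx.1 with hx0 | hx0
  · rw [← hx0]
    rw [hbc0 t (by simp only [mem_Ici]; linarith)]
    exact hξ0 0 (by constructor <;> simp [hL.le]) t (by linarith)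
  · set τ := x / vs with hτdef
    have hτ : 0 < τ := div_pos hx0 hvs
    have hvτ : vs * τ = x := by rw [hτdef]; field_simp
    have hτle : τ ≤ L / vs := by rw [hτdef]; gcongr; exact hx.2
    have key := char_zero L w hw (-vs) hwpde x t τ hτ ?_ ?_
    · rw [show x + -vs * τ = 0 by rw [neg_mul]; linarith [hvτ]] at key
      rw [key, hbc0 (t - τ) (by simp only [mem_Ici]; linarith)]
      exact hξ0 0 (by constructor <;> simp [hL.le]) (t - τ) (by linarith)
    · intro s hs
      have h1 : vs * s ≤ vs * τ := mul_le_mul_of_nonneg_left hs.2 hvs.le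
      constructor
      · constructor
        · rw [neg_mul]; linarith [hvτ]
        · have : 0 ≤ vs * s := mul_nonneg hvs.le hs.1
          rw [neg_mul]; linarith [hx.2]
      · linarith [hs.2, hτle]
    · intro s hs
      have h1 : vs * s < vs * τ := mul_lt_mul_of_pos_left hs.2 hvs
      have h2 : 0 < vs * s := mul_pos hvs hs.1
      constructor
      · constructor
        · rw [neg_mul]; linarith [hvτ]
        · rw [neg_mul]; linarith [hx.2]
      · have : s < τ := hs.2
        linarith [hτle]
end

section
/- Let L > 0, μ* > 0, k₁ ≠ 0 and a ∈ C([0,L]). For continuously differentiable z, w : [0,L] → ℝ define η(x) = k₁ z(x) + ∫_{μ*x}^{L} a(y) w(y − μ* x) dy when μ* x ≤ L, and η(x) = k₁ z(x) when μ* x > L. Then η is continuous on [0,L] and piecewise continuously differentiable (differentiable except possibly at x = L/μ*), and there exist constants C₃ > 0 and C₄ > 0, depending only on L, μ*, k₁ and the supremum norm of a (and not on z, w), such that C₃ ‖(η,w)‖_{H¹} ≤ ‖(z,w)‖_{H¹} ≤ C₄ ‖(η,w)‖_{H¹}. -/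
open Set MeasureTheory intervalIntegral Filter Topology Metric

set_option maxHeartbeats 2000000

/-- The piecewise decoupling transformation
`η(x) = k₁ z(x) + ∫_{μ*x}^L a(y) w(y − μ*x) dy` for `μ* x ≤ L`,
`η(x) = k₁ z(x)` otherwise. -/
noncomputable def etaOf (L μs k₁ : ℝ) (a z w : ℝ → ℝ) : ℝ → ℝ :=
  fun x =>
    if μs * x ≤ L then k₁ * z x + ∫ y in (μs * x)..L, a y * w (y - μs * x)
    else k₁ * z x


section auxiliary

noncomputable def ThetaF (L : ℝ) (A W : ℝ → ℝ) : ℝ → ℝ :=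
  fun c => ∫ y in (0:ℝ)..L, A y * W (y - c)

noncomputable def ThDF (L : ℝ) (A G : ℝ → ℝ) : ℝ → ℝ :=
  fun c => ∫ y in (0:ℝ)..L, A y * -G (y - c)

noncomputable def PsiRF (L w0 : ℝ) (A W : ℝ → ℝ) : ℝ → ℝ :=
  fun c => ThetaF L A W c - w0 * ∫ y in (0:ℝ)..c, A y

noncomputable def DRF (L w0 : ℝ) (A G : ℝ → ℝ) : ℝ → ℝ :=
  fun c => ThDF L A G c - w0 * A c

section helpers2

lemma ae_ne_pt (c : ℝ) : ∀ᵐ x : ℝ, x ≠ c := by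
  rw [ae_iff]
  refine measure_mono_null (fun x hx => ?_) (measure_singleton c)
  simpa using hx

lemma intInt_of_bdd_ae {f : ℝ → ℝ} {C u v : ℝ} (hm : Measurable f)
    (hb : ∀ᵐ x ∂(volume.restrict (Set.uIoc u v)), |f x| ≤ C) :
    IntervalIntegrable f volume u v := by
  rw [intervalIntegrable_iff]
  refine Measure.integrableOn_of_bounded (M := C) ?_ hm.aestronglyMeasurable ?_
  · rw [Set.uIoc]; exact measure_Ioc_lt_top.ne
  · simpa [Real.norm_eq_abs] using hb

lemma intInt_of_bdd {f : ℝ → ℝ} {C : ℝ} (u v : ℝ) (hm : Measurable f)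
    (hb : ∀ x, |f x| ≤ C) : IntervalIntegrable f volume u v :=
  intInt_of_bdd_ae hm (ae_of_all _ hb)

/-- Differentiation under the integral for `Θ(c) = ∫₀ᴸ A(y) W(y-c) dy`. -/
lemma thetaHasDeriv {L : ℝ} (A W G : ℝ → ℝ) (hA : Continuous A)
    {K : NNReal} (hW : LipschitzWith K W) (hGm : Measurable G)
    (hWG : ∀ s, s ≠ 0 → s ≠ L → HasDerivAt W (G s) s) (c₀ : ℝ) :
    HasDerivAt (ThetaF L A W) (ThDF L A G c₀) c₀ := by
  have hWc : Continuous W := hW.continuous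
  have hcont : ∀ c : ℝ, Continuous (fun y => A y * W (y - c)) :=
    fun c => hA.mul (hWc.comp (continuous_id.sub continuous_const))
  have hres := intervalIntegral.hasDerivAt_integral_of_dominated_loc_of_lip
    (F := fun c y => A y * W (y - c)) (F' := fun y => A y * -G (y - c₀))
    (a := 0) (b := L) (μ := volume) (x₀ := c₀)
    (bound := fun y => |A y| * (K : ℝ))
    (ball_mem_nhds c₀ one_pos)
    (Eventually.of_forall (fun c => (hcont c).aestronglyMeasurable))
    ((hcont c₀).intervalIntegrable _ _)
    ((hA.measurable.mul ((hGm.comp (measurable_id.sub measurable_const)).neg)).aestronglyMeasurable)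
    ?_ ?_ ?_
  · exact hres.2
  · refine ae_of_all _ (fun y _ => ?_)
    have h1 : LipschitzWith K (fun c : ℝ => W (y - c)) := by
      have hsub : LipschitzWith 1 (fun c : ℝ => y - c) := by
        refine LipschitzWith.of_dist_le_mul (fun a b => ?_)
        rw [Real.dist_eq, Real.dist_eq]
        simp only [NNReal.coe_one, one_mul]
        rw [show (y - a) - (y - b) = -(a - b) by ring, abs_neg]
      simpa [Function.comp_def] using hW.comp hsub
    refine LipschitzOnWith.of_dist_le_mul (fun c₁ _ c₂ _ => ?_)
    have h2 := h1.dist_le_mul c₁ c₂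
    have habs : ((Real.nnabs (|A y| * (K:ℝ))) : ℝ) = |A y| * (K : ℝ) := by
      rw [Real.coe_nnabs, abs_of_nonneg (by positivity)]
    rw [habs]
    calc dist (A y * W (y - c₁)) (A y * W (y - c₂)) = |A y| * dist (W (y - c₁)) (W (y - c₂)) := by
          rw [Real.dist_eq, Real.dist_eq, ← abs_mul]; ring_nf
      _ ≤ |A y| * ((K : ℝ) * dist c₁ c₂) := mul_le_mul_of_nonneg_left h2 (abs_nonneg _)
      _ = |A y| * (K : ℝ) * dist c₁ c₂ := by ring
  · exact (hA.abs.mul continuous_const).intervalIntegrable _ _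
  · have h1 := ae_ne_pt c₀
    have h2 := ae_ne_pt (L + c₀)
    filter_upwards [h1, h2] with y hy1 hy2 _
    have hs1 : y - c₀ ≠ 0 := sub_ne_zero.2 hy1
    have hs2 : y - c₀ ≠ L := fun h => hy2 (by linarith [h])
    have hd := hWG (y - c₀) hs1 hs2
    have hinner : HasDerivAt (fun c : ℝ => y - c) (-1) c₀ := by
      simpa using (hasDerivAt_id c₀).const_sub y
    have hcomp := HasDerivAt.comp c₀ (by simpa using hd) hinner
    have : HasDerivAt (fun c : ℝ => W (y - c)) (-G (y - c₀)) c₀ := by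
      simpa [Function.comp_def] using hcomp
    simpa [mul_comm] using this.const_mul (A y)

lemma psiRHasDeriv {L : ℝ} (A W G : ℝ → ℝ) (w0 : ℝ) (hA : Continuous A)
    {K : NNReal} (hW : LipschitzWith K W) (hGm : Measurable G)
    (hWG : ∀ s, s ≠ 0 → s ≠ L → HasDerivAt W (G s) s) (c : ℝ) :
    HasDerivAt (PsiRF L w0 A W) (DRF L w0 A G c) c := by
  have h1 := thetaHasDeriv A W G hA hW hGm hWG c
  have h2 : HasDerivAt (fun c => ∫ y in (0:ℝ)..c, A y) (A c) c :=
    intervalIntegral.integral_hasDerivAt_right (hA.intervalIntegrable _ _)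
      (hA.stronglyMeasurableAtFilter _ _) hA.continuousAt
  exact h1.sub (h2.const_mul w0)

/-- On `c ≥ 0`, `PsiRF` agrees with the moving-endpoint integral. -/
lemma psiR_eq {L : ℝ} (hL : 0 < L) (A W : ℝ → ℝ) (w0 : ℝ) (hA : Continuous A)
    (hW : Continuous W) (hWle : ∀ y : ℝ, y ≤ 0 → W y = w0) (c : ℝ) (hc : 0 ≤ c) :
    PsiRF L w0 A W c = ∫ y in c..L, A y * W (y - c) := by
  have hint : ∀ u v : ℝ, IntervalIntegrable (fun y => A y * W (y - c)) volume u v :=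
    fun u v => ((hA.mul (hW.comp (continuous_id.sub continuous_const))).intervalIntegrable _ _)
  have hsplit := integral_add_adjacent_intervals (hint 0 c) (hint c L)
  have hconst : (∫ y in (0:ℝ)..c, A y * W (y - c)) = w0 * ∫ y in (0:ℝ)..c, A y := by
    have heq : EqOn (fun y => A y * W (y - c)) (fun y => A y * w0) (Set.uIcc 0 c) := by
      intro y hy
      rw [uIcc_of_le hc] at hy
      simp only
      rw [hWle (y - c) (by linarith [hy.2])]
    rw [integral_congr heq, intervalIntegral.integral_mul_const]
    ring
  simp only [PsiRF, ThetaF]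
  rw [← hsplit, hconst]
  ring

/-- Bound for the moving-endpoint integral. -/
lemma psiInt_bound {L Sa : ℝ} (hL : 0 < L) (A W : ℝ → ℝ)
    (hA : ∀ y, |A y| ≤ Sa) (hW : Continuous W) {c : ℝ} (hc : c ∈ Icc 0 L) :
    |∫ y in c..L, A y * W (y - c)| ≤ Sa * ∫ y in (0:ℝ)..L, |W y| := by
  have hSa0 : 0 ≤ Sa := le_trans (abs_nonneg _) (hA 0)
  have hWi : ∀ u v : ℝ, IntervalIntegrable (fun y => |W (y - c)|) volume u v :=
    fun u v => ((hW.comp (continuous_id.sub continuous_const)).abs.intervalIntegrable _ _)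
  have h1 : ‖∫ y in c..L, A y * W (y - c)‖ ≤ |∫ y in c..L, Sa * abs (W (y - c))| := by
    refine norm_integral_le_abs_of_norm_le ?_ ((hWi c L).const_mul Sa)
    refine ae_of_all _ (fun y => ?_)
    rw [Real.norm_eq_abs, abs_mul]
    exact mul_le_mul_of_nonneg_right (hA y) (abs_nonneg _)
  rw [Real.norm_eq_abs] at h1
  have h2 : (∫ y in c..L, Sa * |W (y - c)|) = Sa * ∫ y in (0:ℝ)..(L - c), |W y| := by
    rw [intervalIntegral.integral_const_mul]
    congr 1
    have := intervalIntegral.integral_comp_sub_right (a := c) (b := L) (fun y => |W y|) c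
    simpa [sub_self] using this
  have h3 : (∫ y in (0:ℝ)..(L - c), |W y|) ≤ ∫ y in (0:ℝ)..L, |W y| := by
    have hint : ∀ u v : ℝ, IntervalIntegrable (fun y => |W y|) volume u v :=
      fun u v => (hW.abs.intervalIntegrable _ _)
    have hsplit := integral_add_adjacent_intervals (hint 0 (L - c)) (hint (L - c) L)
    have hpos : (0:ℝ) ≤ ∫ y in (L - c)..L, |W y| :=
      integral_nonneg (by linarith [hc.1]) (fun u _ => abs_nonneg _)
    linarith [hsplit, hpos]
  have h4 : (0:ℝ) ≤ ∫ y in c..L, Sa * |W (y - c)| :=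
    integral_nonneg hc.2 (fun u _ => by positivity)
  rw [abs_of_nonneg h4] at h1
  calc |∫ y in c..L, A y * W (y - c)| ≤ ∫ y in c..L, Sa * |W (y - c)| := h1
    _ = Sa * ∫ y in (0:ℝ)..(L - c), |W y| := h2
    _ ≤ Sa * ∫ y in (0:ℝ)..L, |W y| := mul_le_mul_of_nonneg_left h3 hSa0
    _ = Sa * ∫ y in (0:ℝ)..L, |W y| := rfl

/-- Bound for `ThDF`. -/
lemma thD_bound {L Sa Sg : ℝ} (hL : 0 < L) (A G : ℝ → ℝ)
    (hA : ∀ y, |A y| ≤ Sa) (hGm : Measurable G) (hGb : ∀ s, |G s| ≤ Sg)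
    (hGzero : ∀ s : ℝ, s ∉ Ioo 0 L → G s = 0) {c : ℝ} (hc : c ∈ Icc 0 L) :
    |ThDF L A G c| ≤ Sa * ∫ s in (0:ℝ)..L, |G s| := by
  have hSa0 : 0 ≤ Sa := le_trans (abs_nonneg _) (hA 0)
  have hGi : ∀ u v : ℝ, IntervalIntegrable (fun y => |G (y - c)|) volume u v := by
    intro u v
    refine intInt_of_bdd u v ((hGm.comp (measurable_id.sub measurable_const)).abs) (C := Sg) ?_
    intro x; rw [abs_abs]; exact hGb _
  have hGi0 : ∀ u v : ℝ, IntervalIntegrable (fun y => |G y|) volume u v := by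
    intro u v
    refine intInt_of_bdd u v (hGm.abs) (C := Sg) ?_
    intro x; rw [abs_abs]; exact hGb _
  have h1 : ‖ThDF L A G c‖ ≤ |∫ y in (0:ℝ)..L, Sa * abs (G (y - c))| := by
    refine norm_integral_le_abs_of_norm_le ?_ ((hGi 0 L).const_mul Sa)
    refine ae_of_all _ (fun y => ?_)
    rw [Real.norm_eq_abs, abs_mul, abs_neg]
    exact mul_le_mul_of_nonneg_right (hA y) (abs_nonneg _)
  rw [Real.norm_eq_abs] at h1
  have h4 : (0:ℝ) ≤ ∫ y in (0:ℝ)..L, Sa * |G (y - c)| :=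
    integral_nonneg hL.le (fun u _ => by positivity)
  rw [abs_of_nonneg h4] at h1
  have h2 : (∫ y in (0:ℝ)..L, Sa * |G (y - c)|) = Sa * ∫ y in (-c)..(L - c), |G y| := by
    rw [intervalIntegral.integral_const_mul]
    congr 1
    have := intervalIntegral.integral_comp_sub_right (a := (0:ℝ)) (b := L) (fun y => |G y|) c
    simpa using this
  have h3 : (∫ y in (-c)..(L - c), |G y|) ≤ ∫ s in (0:ℝ)..L, |G s| := by
    have hzero : (∫ y in (-c)..(0:ℝ), |G y|) = 0 := by
      have heq : EqOn (fun y => |G y|) (fun _ => (0:ℝ)) (Set.uIcc (-c) 0) := by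
        intro y hy
        rw [uIcc_of_le (by linarith [hc.1])] at hy
        simp only
        rw [hGzero y (by rintro ⟨h1', h2'⟩; exact absurd (hy.2) (not_le.2 h1')), abs_zero]
      rw [integral_congr heq]; simp
    have hsplit := integral_add_adjacent_intervals (hGi0 (-c) 0) (hGi0 0 (L - c))
    have hupper : (∫ y in (0:ℝ)..(L - c), |G y|) ≤ ∫ s in (0:ℝ)..L, |G s| := by
      have hsplit2 := integral_add_adjacent_intervals (hGi0 0 (L - c)) (hGi0 (L - c) L)
      have hpos : (0:ℝ) ≤ ∫ y in (L - c)..L, |G y| :=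
        integral_nonneg (by linarith [hc.1]) (fun u _ => abs_nonneg _)
      linarith [hsplit2, hpos]
    calc (∫ y in (-c)..(L - c), |G y|)
        = (∫ y in (-c)..(0:ℝ), |G y|) + ∫ y in (0:ℝ)..(L - c), |G y| := hsplit.symm
      _ = ∫ y in (0:ℝ)..(L - c), |G y| := by rw [hzero]; ring
      _ ≤ ∫ s in (0:ℝ)..L, |G s| := hupper
  calc |ThDF L A G c| ≤ ∫ y in (0:ℝ)..L, Sa * |G (y - c)| := h1
    _ = Sa * ∫ y in (-c)..(L - c), |G y| := h2
    _ ≤ Sa * ∫ s in (0:ℝ)..L, |G s| := mul_le_mul_of_nonneg_left h3 hSa0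

/-- Trace inequality: `w(0)² ≤ (1/L+1)∫w² + ∫G²` for `w` with derivative `G` on `(0,L)`. -/
lemma trace_bound {L : ℝ} (hL : 0 < L) {w G : ℝ → ℝ} (hw : ContinuousOn w (Icc 0 L))
    (hd : ∀ t ∈ Ioo 0 L, HasDerivAt w (G t) t)
    (hGi : IntervalIntegrable G volume 0 L)
    (hGi2 : IntervalIntegrable (fun t => G t ^ 2) volume 0 L) :
    w 0 ^ 2 ≤ (1 / L + 1) * (∫ t in (0:ℝ)..L, w t ^ 2) + ∫ t in (0:ℝ)..L, G t ^ 2 := by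
  have hIcc : (Set.uIcc (0:ℝ) L) = Icc 0 L := uIcc_of_le hL.le
  have hw2 : IntervalIntegrable (fun t => w t ^ 2) volume 0 L := by
    apply ContinuousOn.intervalIntegrable
    rw [hIcc]; exact (hw.pow 2)
  have hwG : IntervalIntegrable (fun t => w t ^ 2 + G t ^ 2) volume 0 L := hw2.add hGi2
  set Cst := ∫ t in (0:ℝ)..L, (w t ^ 2 + G t ^ 2) with hCst
  have hpt : ∀ t ∈ Icc (0:ℝ) L, w 0 ^ 2 ≤ w t ^ 2 + Cst := by
    intro t ht
    have hsub : Icc (0:ℝ) t ⊆ Icc 0 L := Icc_subset_Icc le_rfl ht.2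
    have h0t : Set.uIcc (0:ℝ) t ⊆ Set.uIcc (0:ℝ) L := by
      rw [uIcc_of_le ht.1, uIcc_of_le hL.le]; exact hsub
    have htL : Set.uIcc t L ⊆ Set.uIcc (0:ℝ) L := by
      rw [uIcc_of_le ht.2, uIcc_of_le hL.le]; exact Icc_subset_Icc ht.1 le_rfl
    have h2wG : IntervalIntegrable (fun x => 2 * w x * G x) volume 0 t := by
      have hGt : IntervalIntegrable G volume 0 t := hGi.mono_set h0t
      have hcont : ContinuousOn (fun x => 2 * w x) (Set.uIcc (0:ℝ) t) := by
        rw [uIcc_of_le ht.1]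
        exact continuousOn_const.mul (hw.mono hsub)
      have := hGt.continuousOn_mul hcont
      simpa [mul_assoc] using this
    have ftc : ∫ x in (0:ℝ)..t, (2 * w x * G x) = w t ^ 2 - w 0 ^ 2 := by
      apply integral_eq_sub_of_hasDeriv_right_of_le ht.1
      · exact ((hw.mono hsub).pow 2)
      · intro x hx
        have hx' : x ∈ Ioo (0:ℝ) L := ⟨hx.1, lt_of_lt_of_le hx.2 ht.2⟩
        have := ((hd x hx').fun_pow 2)
        have h' : HasDerivAt (fun y => w y ^ 2) (2 * w x * G x) x := by
          exact this.congr_deriv (by norm_num)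
        exact h'.hasDerivWithinAt
      · exact h2wG
    have habs : |∫ x in (0:ℝ)..t, (2 * w x * G x)| ≤ ∫ x in (0:ℝ)..t, (w x ^ 2 + G x ^ 2) := by
      have hb : ∀ᵐ x ∂(volume.restrict (Set.uIoc 0 t)), ‖2 * w x * G x‖ ≤ w x ^ 2 + G x ^ 2 := by
        refine ae_of_all _ (fun x => ?_)
        rw [Real.norm_eq_abs]
        have h1 : |2 * w x * G x| = 2 * |w x| * |G x| := by
          rw [abs_mul, abs_mul]; simp
        nlinarith [sq_nonneg (|w x| - |G x|), sq_abs (w x), sq_abs (G x)]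
      have hint : IntervalIntegrable (fun x => w x ^ 2 + G x ^ 2) volume 0 t :=
        hwG.mono_set h0t
      have := norm_integral_le_abs_of_norm_le (μ := volume) hb hint
      rw [Real.norm_eq_abs] at this
      refine this.trans ?_
      rw [abs_of_nonneg (integral_nonneg ht.1 (fun u _ => by positivity))]
    have hmono : (∫ x in (0:ℝ)..t, (w x ^ 2 + G x ^ 2)) ≤ Cst := by
      have hsplit := integral_add_adjacent_intervals
        (hwG.mono_set h0t) (hwG.mono_set htL)
      have hpos : (0:ℝ) ≤ ∫ x in t..L, (w x ^ 2 + G x ^ 2) :=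
        integral_nonneg ht.2 (fun u _ => by positivity)
      rw [hCst, ← hsplit]; linarith
    nlinarith [ftc, habs, hmono, abs_nonneg (∫ x in (0:ℝ)..t, (2 * w x * G x)),
      le_abs_self (∫ x in (0:ℝ)..t, (2 * w x * G x)),
      neg_abs_le (∫ x in (0:ℝ)..t, (2 * w x * G x))]
  have hintineq := integral_mono_on hL.le
    (_root_.intervalIntegrable_const (c := w 0 ^ 2)) (hw2.add _root_.intervalIntegrable_const) hpt
  rw [intervalIntegral.integral_const,
    integral_add hw2 _root_.intervalIntegrable_const, intervalIntegral.integral_const] at hintineq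
  simp only [smul_eq_mul, sub_zero] at hintineq
  have hIw : 0 ≤ ∫ t in (0:ℝ)..L, w t ^ 2 := integral_nonneg hL.le (fun u _ => sq_nonneg _)
  have hCsteq : Cst = (∫ t in (0:ℝ)..L, w t ^ 2) + ∫ t in (0:ℝ)..L, G t ^ 2 := by
    rw [hCst, integral_add hw2 hGi2]
  rw [hCsteq] at hintineq
  have h2 : L * (w 0 ^ 2) ≤ L * ((1 / L + 1) * (∫ t in (0:ℝ)..L, w t ^ 2) + ∫ t in (0:ℝ)..L, G t ^ 2) := by
    have he : L * ((1 / L + 1) * (∫ t in (0:ℝ)..L, w t ^ 2) + ∫ t in (0:ℝ)..L, G t ^ 2)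
        = (∫ t in (0:ℝ)..L, w t ^ 2) + L * (∫ t in (0:ℝ)..L, w t ^ 2) + L * ∫ t in (0:ℝ)..L, G t ^ 2 := by
      field_simp
    rw [he]; linarith [hintineq]
  exact le_of_mul_le_mul_left h2 hL

/-- Cauchy–Schwarz lite: `∫₀ᴸ |f| ≤ √(L ∫₀ᴸ f²)`. -/
lemma int_abs_le_sqrt {L : ℝ} (hL : 0 < L) {f : ℝ → ℝ}
    (h1 : IntervalIntegrable (fun x => |f x|) volume 0 L)
    (h2 : IntervalIntegrable (fun x => f x ^ 2) volume 0 L) :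
    (∫ x in (0:ℝ)..L, |f x|) ≤ Real.sqrt (L * ∫ x in (0:ℝ)..L, f x ^ 2) := by
  set I2 := ∫ x in (0:ℝ)..L, f x ^ 2 with hI2def
  have hI2 : 0 ≤ I2 := integral_nonneg hL.le (fun u _ => sq_nonneg _)
  have key : ∀ t : ℝ, 0 < t → (∫ x in (0:ℝ)..L, |f x|) ≤ t * L / 2 + I2 / (2 * t) := by
    intro t ht
    have hpt : ∀ x ∈ Icc (0:ℝ) L, |f x| ≤ t / 2 + f x ^ 2 * (2 * t)⁻¹ := by
      intro x _
      have hb : 2 * t * |f x| ≤ t ^ 2 + f x ^ 2 := by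
        nlinarith [sq_nonneg (t - |f x|), sq_abs (f x)]
      calc |f x| = (2 * t * |f x|) / (2 * t) := by field_simp
        _ ≤ (t ^ 2 + f x ^ 2) / (2 * t) := by
            gcongr
        _ = t / 2 + f x ^ 2 * (2 * t)⁻¹ := by field_simp
    have hint : IntervalIntegrable (fun x => t / 2 + f x ^ 2 * (2 * t)⁻¹) volume 0 L :=
      (_root_.intervalIntegrable_const).add (h2.mul_const _)
    have := integral_mono_on hL.le h1 hint hpt
    calc (∫ x in (0:ℝ)..L, |f x|) ≤ ∫ x in (0:ℝ)..L, (t / 2 + f x ^ 2 * (2 * t)⁻¹) := this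
      _ = t * L / 2 + I2 / (2 * t) := by
          rw [integral_add _root_.intervalIntegrable_const (h2.mul_const _),
            intervalIntegral.integral_const, intervalIntegral.integral_mul_const]
          simp [smul_eq_mul]; ring
  rcases eq_or_lt_of_le hI2 with h0 | hpos
  · have hle : (∫ x in (0:ℝ)..L, |f x|) ≤ 0 := by
      refine le_of_forall_pos_le_add (fun ε hε => ?_)
      have hk := key (2 * ε / L) (by positivity)
      have : (2 * ε / L) * L / 2 + I2 / (2 * (2 * ε / L)) = 0 + ε := by
        rw [← h0]; field_simp; ring
      linarith [hk, this ▸ hk]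
    exact hle.trans (Real.sqrt_nonneg _)
  · have ht : 0 < Real.sqrt (I2 / L) := Real.sqrt_pos.2 (by positivity)
    have := key _ ht
    refine this.trans (le_of_eq ?_)
    have hsL : Real.sqrt (I2 / L) = Real.sqrt I2 / Real.sqrt L := Real.sqrt_div hI2 L
    have hLpos : (0:ℝ) < Real.sqrt L := Real.sqrt_pos.2 hL
    have hIpos : (0:ℝ) < Real.sqrt I2 := Real.sqrt_pos.2 hpos
    have e1 : Real.sqrt I2 ^ 2 = I2 := Real.sq_sqrt hI2
    have e2 : Real.sqrt L ^ 2 = L := Real.sq_sqrt hL.le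
    rw [hsL, Real.sqrt_mul hL.le]
    field_simp
    linear_combination (-L) * e1 + (I2 - 2 * Real.sqrt I2 ^ 2) * e2

end helpers2

end auxiliary

/-- the piecewise transformation `z ↦ η` is continuous, piecewise
continuously differentiable (differentiable except possibly at `x = L/μ*`),
and establishes `H¹` equivalence of `(η,w)` and `(z,w)` with constants
depending only on `L, μ*, k₁` and `sup |a|`. -/
theorem stmt6 (L μs k₁ : ℝ) (hL : 0 < L) (hμ : 0 < μs) (hk₁ : k₁ ≠ 0)
    (a : ℝ → ℝ) (ha : ContinuousOn a (Icc 0 L)) :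
    ∃ C₃ > (0:ℝ), ∃ C₄ > (0:ℝ),
      ∀ z w : ℝ → ℝ, ContDiffOn ℝ 1 z (Icc 0 L) → ContDiffOn ℝ 1 w (Icc 0 L) →
        ContinuousOn (etaOf L μs k₁ a z w) (Icc 0 L) ∧
        (∀ x ∈ Icc (0:ℝ) L, x ≠ L / μs →
          DifferentiableWithinAt ℝ (etaOf L μs k₁ a z w) (Icc 0 L) x) ∧
        C₃ * H1pair L (etaOf L μs k₁ a z w) w ≤ H1pair L z w ∧
        H1pair L z w ≤ C₄ * H1pair L (etaOf L μs k₁ a z w) w := by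
  have hL' : (0:ℝ) ≤ L := hL.le
  have hIcc : (Set.uIcc (0:ℝ) L) = Icc 0 L := uIcc_of_le hL'
  have hk2 : (0:ℝ) < k₁ ^ 2 := by
    rcases hk₁.lt_or_gt with h | h
    · have h2 := mul_pos_of_neg_of_neg h h
      nlinarith only [h2]
    · have h2 := mul_pos h h
      nlinarith only [h2]
  obtain ⟨Sa₀, hSa₀⟩ := IsCompact.exists_bound_of_continuousOn isCompact_Icc ha
  set Sa := max Sa₀ 0 with hSadef
  have hSa : ∀ y ∈ Icc (0:ℝ) L, |a y| ≤ Sa := fun y hy =>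
    le_trans (by simpa using hSa₀ y hy) (le_max_left _ _)
  have hSa0 : 0 ≤ Sa := le_max_right _ _
  set K₁ := 2 * Sa ^ 2 * (1 / L + 1) with hK₁def
  set K₂ := 2 * Sa ^ 2 * L + 2 * Sa ^ 2 with hK₂def
  have hK₁0 : 0 ≤ K₁ := by rw [hK₁def]; positivity
  have hK₂0 : 0 ≤ K₂ := by rw [hK₂def]; positivity
  set CA := 2 * k₁ ^ 2 + 2 * Sa ^ 2 * L ^ 2 + 2 * μs ^ 2 * K₁ * L + 2 * μs ^ 2 * K₂ * L + 1
    with hCAdef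
  set CB := (2 + 2 * Sa ^ 2 * L ^ 2 + 2 * μs ^ 2 * K₁ * L + 2 * μs ^ 2 * K₂ * L) / k₁ ^ 2 + 1
    with hCBdef
  have hCA0 : (0:ℝ) < CA := by
    have t3 : 0 ≤ 2 * μs ^ 2 * K₁ * L := by
      apply mul_nonneg (mul_nonneg (by positivity) hK₁0) hL'
    have t4 : 0 ≤ 2 * μs ^ 2 * K₂ * L := by
      apply mul_nonneg (mul_nonneg (by positivity) hK₂0) hL'
    have t5 : (0:ℝ) ≤ 2 * k₁ ^ 2 := by positivity
    have t6 : (0:ℝ) ≤ 2 * Sa ^ 2 * L ^ 2 := by positivity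
    rw [hCAdef]; linarith only [t3, t4, t5, t6]
  have hCB0 : (0:ℝ) < CB := by
    have t3 : 0 ≤ 2 * μs ^ 2 * K₁ * L := by
      apply mul_nonneg (mul_nonneg (by positivity) hK₁0) hL'
    have t4 : 0 ≤ 2 * μs ^ 2 * K₂ * L := by
      apply mul_nonneg (mul_nonneg (by positivity) hK₂0) hL'
    have : (0:ℝ) ≤ (2 + 2 * Sa ^ 2 * L ^ 2 + 2 * μs ^ 2 * K₁ * L + 2 * μs ^ 2 * K₂ * L) / k₁ ^ 2 := by
      apply div_nonneg _ hk2.le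
      have t6 : (0:ℝ) ≤ 2 * Sa ^ 2 * L ^ 2 := by positivity
      linarith only [t3, t4, t6]
    rw [hCBdef]; linarith
  have hsCA : 0 < Real.sqrt CA := Real.sqrt_pos.2 hCA0
  have hsCB : 0 < Real.sqrt CB := Real.sqrt_pos.2 hCB0
  refine ⟨1 / Real.sqrt CA, by positivity, Real.sqrt CB, hsCB, fun z w hz hw => ?_⟩

  -- continuity data
  have hzc := hz.continuousOn
  have hwc := hw.continuousOn
  set η := etaOf L μs k₁ a z w with hηdef
  -- clamped versions
  set proj : ℝ → ℝ := fun y => ((Set.projIcc 0 L hL' y : Icc (0:ℝ) L) : ℝ) with hprojdef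
  have hprojmem : ∀ y, proj y ∈ Icc (0:ℝ) L := fun y => (Set.projIcc 0 L hL' y).2
  have hprojc : Continuous proj := continuous_subtype_val.comp continuous_projIcc
  have hprojeq : ∀ y ∈ Icc (0:ℝ) L, proj y = y := fun y hy => by
    rw [hprojdef]; simp only [Set.projIcc_of_mem hL' hy]
  set aT : ℝ → ℝ := fun y => a (proj y) with haTdef
  set wT : ℝ → ℝ := fun y => w (proj y) with hwTdef
  have haTc : Continuous aT := ha.comp_continuous hprojc hprojmem
  have hwTc : Continuous wT := hwc.comp_continuous hprojc hprojmem
  have haTb : ∀ y, |aT y| ≤ Sa := fun y => hSa _ (hprojmem y)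
  have haTeq : ∀ y ∈ Icc (0:ℝ) L, aT y = a y := fun y hy => by
    rw [haTdef]; simp only [hprojeq y hy]
  have hwTeq : ∀ y ∈ Icc (0:ℝ) L, wT y = w y := fun y hy => by
    rw [hwTdef]; simp only [hprojeq y hy]
  have hWle : ∀ y : ℝ, y ≤ 0 → wT y = w 0 := by
    intro y hy
    rw [hwTdef]; simp only [hprojdef, Set.projIcc_of_le_left hL' hy]
  -- derivative data for w
  have hgwc : ContinuousOn (fun s => derivWithin w (Icc 0 L) s) (Icc 0 L) :=
    hw.continuousOn_derivWithin (uniqueDiffOn_Icc hL) le_rfl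
  obtain ⟨Sg₀, hSg₀⟩ := IsCompact.exists_bound_of_continuousOn isCompact_Icc hgwc
  set Sg := max Sg₀ 0 with hSgdef
  have hSg : ∀ s ∈ Icc (0:ℝ) L, |derivWithin w (Icc 0 L) s| ≤ Sg := fun s hs =>
    le_trans (by simpa using hSg₀ s hs) (le_max_left _ _)
  have hSg0 : 0 ≤ Sg := le_max_right _ _
  set Gw : ℝ → ℝ := fun s => if s ∈ Ioo (0:ℝ) L then deriv w s else 0 with hGwdef
  have hGwm : Measurable Gw :=
    Measurable.ite measurableSet_Ioo (measurable_deriv w) measurable_const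
  have hwdiff : ∀ s ∈ Ioo (0:ℝ) L, HasDerivAt w (Gw s) s := by
    intro s hs
    have h1 : DifferentiableAt ℝ w s :=
      ((hw.differentiableOn one_ne_zero) s (Ioo_subset_Icc_self hs)).differentiableAt
        (Icc_mem_nhds hs.1 hs.2)
    have h2 : Gw s = deriv w s := by rw [hGwdef]; simp only [if_pos hs]
    rw [h2]; exact h1.hasDerivAt
  have hGweq : ∀ s ∈ Ioo (0:ℝ) L, Gw s = derivWithin w (Icc 0 L) s := by
    intro s hs
    rw [hGwdef]; simp only [if_pos hs]
    exact (derivWithin_of_mem_nhds (Icc_mem_nhds hs.1 hs.2)).symm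
  have hGwb : ∀ s, |Gw s| ≤ Sg := by
    intro s
    by_cases hs : s ∈ Ioo (0:ℝ) L
    · rw [hGweq s hs]; exact hSg s (Ioo_subset_Icc_self hs)
    · rw [hGwdef]; simp only [if_neg hs, abs_zero]; exact hSg0
  have hGwzero : ∀ s : ℝ, s ∉ Ioo (0:ℝ) L → Gw s = 0 := by
    intro s hs; rw [hGwdef]; simp only [if_neg hs]
  -- Lipschitz bound for wT
  have hwlip : LipschitzOnWith (Real.toNNReal Sg) w (Icc 0 L) := by
    refine (convex_Icc (0:ℝ) L).lipschitzOnWith_of_nnnorm_derivWithin_le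
      (hw.differentiableOn one_ne_zero) ?_
    intro x hx
    rw [← NNReal.coe_le_coe, coe_nnnorm, Real.coe_toNNReal _ hSg0, Real.norm_eq_abs]
    exact hSg x hx
  have hwTlip : LipschitzWith (Real.toNNReal Sg * 1) wT :=
    (lipschitzOnWith_iff_restrict.1 hwlip).comp (LipschitzWith.projIcc hL')
  have hwTG : ∀ s : ℝ, s ≠ 0 → s ≠ L → HasDerivAt wT (Gw s) s := by
    intro s hs0 hsL
    rcases lt_trichotomy s 0 with h | h | h
    · have hev : wT =ᶠ[𝓝 s] fun _ => w 0 := by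
        filter_upwards [Iio_mem_nhds h] with t ht
        exact hWle t (le_of_lt ht)
      have h0 : Gw s = 0 := hGwzero s (by rintro ⟨h1', _⟩; linarith)
      rw [h0]
      exact (hasDerivAt_const s (w 0)).congr_of_eventuallyEq hev
    · exact absurd h hs0
    · rcases lt_trichotomy s L with h2 | h2 | h2
      · have hs' : s ∈ Ioo (0:ℝ) L := ⟨h, h2⟩
        have hev : wT =ᶠ[𝓝 s] w := by
          filter_upwards [Ioo_mem_nhds h h2] with t ht
          exact hwTeq t (Ioo_subset_Icc_self ht)
        exact (hwdiff s hs').congr_of_eventuallyEq hev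
      · exact absurd h2 hsL
      · have hev : wT =ᶠ[𝓝 s] fun _ => w L := by
          filter_upwards [Ioi_mem_nhds h2] with t ht
          rw [hwTdef]
          simp only [hprojdef, Set.projIcc_of_right_le hL' (le_of_lt ht)]
        have h0 : Gw s = 0 := hGwzero s (by rintro ⟨_, h2'⟩; linarith)
        rw [h0]
        exact (hasDerivAt_const s (w L)).congr_of_eventuallyEq hev
  -- ΨR and its derivative
  set ΨR : ℝ → ℝ := PsiRF L (w 0) aT wT with hΨRdef
  set DR : ℝ → ℝ := DRF L (w 0) aT Gw with hDRdef
  have hψR : ∀ c, HasDerivAt ΨR (DR c) c := fun c =>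
    psiRHasDeriv aT wT Gw (w 0) haTc hwTlip hGwm hwTG c
  have hΨRc : Continuous ΨR :=
    continuous_iff_continuousAt.2 fun c => (hψR c).continuousAt
  have hDRm : Measurable DR := by
    have h : DR = deriv ΨR := funext fun c => ((hψR c).deriv).symm
    rw [h]; exact measurable_deriv _
  have hψReq : ∀ c : ℝ, 0 ≤ c → ΨR c = ∫ y in c..L, aT y * wT (y - c) :=
    fun c hc => psiR_eq hL aT wT (w 0) haTc hwTc hWle c hc
  -- η agrees with ηc on x ≥ 0
  set ηc : ℝ → ℝ := fun x => k₁ * z x + ΨR (min (μs * x) L) with hηcdef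
  have hηηc : ∀ x : ℝ, 0 ≤ x → η x = ηc x := by
    intro x hx
    by_cases hc : μs * x ≤ L
    · have hμx0 : 0 ≤ μs * x := mul_nonneg hμ.le hx
      have h1 : η x = k₁ * z x + ∫ y in (μs * x)..L, a y * w (y - μs * x) := by
        rw [hηdef]; simp only [etaOf, if_pos hc]
      have h2 : (∫ y in (μs * x)..L, a y * w (y - μs * x))
          = ∫ y in (μs * x)..L, aT y * wT (y - μs * x) := by
        apply integral_congr
        intro y hy
        rw [uIcc_of_le hc] at hy
        have hy1 : y ∈ Icc (0:ℝ) L := ⟨le_trans hμx0 hy.1, hy.2⟩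
        have hy2 : y - μs * x ∈ Icc (0:ℝ) L := ⟨by linarith [hy.1], by linarith [hy.2]⟩
        simp only
        rw [haTeq y hy1, hwTeq _ hy2]
      have h3 : ΨR (min (μs * x) L) = ∫ y in (μs * x)..L, aT y * wT (y - μs * x) := by
        rw [min_eq_left hc]
        exact hψReq (μs * x) hμx0
      rw [h1, h2, hηcdef]; simp only [h3]
    · have h1 : η x = k₁ * z x := by
        rw [hηdef]; simp only [etaOf, if_neg hc]
      have h3 : ΨR (min (μs * x) L) = 0 := by
        rw [min_eq_right (le_of_lt (not_le.1 hc)), hψReq L hL']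
        simp
      rw [h1, hηcdef]; simp only [h3, add_zero]
  -- Goal 1 : continuity
  have hmin : Continuous fun x : ℝ => min (μs * x) L :=
    (continuous_const.mul continuous_id).min continuous_const
  have hηcc : ContinuousOn ηc (Icc 0 L) := by
    rw [hηcdef]
    exact (continuousOn_const.mul hzc).add ((hΨRc.comp hmin).continuousOn)
  have goal1 : ContinuousOn η (Icc 0 L) :=
    hηcc.congr fun x hx => hηηc x hx.1
  -- derivative of z at interior points
  have hzdiff : ∀ x ∈ Ioo (0:ℝ) L, HasDerivAt z (deriv z x) x := by
    intro x hx
    exact (((hz.differentiableOn one_ne_zero) x (Ioo_subset_Icc_self hx)).differentiableAt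
      (Icc_mem_nhds hx.1 hx.2)).hasDerivAt
  -- Goal 2 : differentiability away from L/μs
  have goal2 : ∀ x ∈ Icc (0:ℝ) L, x ≠ L / μs →
      DifferentiableWithinAt ℝ η (Icc 0 L) x := by
    intro x hx hxne
    have hμne : μs * x ≠ L := by
      intro h; apply hxne
      rw [eq_div_iff hμ.ne']; rw [mul_comm] at h; exact h
    rcases lt_or_gt_of_ne hμne with hlt | hgt
    · have hev : η =ᶠ[𝓝[Icc 0 L] x] fun x' => k₁ * z x' + ΨR (μs * x') := by
        have h1 : ∀ᶠ x' in 𝓝[Icc 0 L] x, x' ∈ Icc (0:ℝ) L := eventually_mem_nhdsWithin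
        have hU : ∀ᶠ x' in 𝓝[Icc 0 L] x, μs * x' < L :=
          ((isOpen_lt (continuous_const.mul continuous_id) continuous_const).eventually_mem
            hlt).filter_mono nhdsWithin_le_nhds
        filter_upwards [h1, hU] with x' hx' hU'
        rw [hηηc x' hx'.1, hηcdef]
        simp only [min_eq_left hU'.le]
      have hzd : DifferentiableWithinAt ℝ z (Icc 0 L) x := (hz.differentiableOn one_ne_zero) x hx
      have hΨd : DifferentiableAt ℝ (fun x' => ΨR (μs * x')) x := by
        have h1 : HasDerivAt (fun x' : ℝ => μs * x') (μs * 1) x := (hasDerivAt_id x).const_mul μs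
        have h2 := HasDerivAt.comp x (hψR (μs * x)) h1
        exact (h2 : HasDerivAt (fun x' => ΨR (μs * x')) _ x).differentiableAt
      refine DifferentiableWithinAt.congr_of_eventuallyEq
        ((hzd.const_mul k₁).add hΨd.differentiableWithinAt) hev ?_
      rw [hηηc x hx.1, hηcdef]
      simp only [min_eq_left hlt.le, Pi.add_apply]
    · have hev : η =ᶠ[𝓝[Icc 0 L] x] fun x' => k₁ * z x' := by
        have hU : ∀ᶠ x' in 𝓝[Icc 0 L] x, L < μs * x' :=
          ((isOpen_lt continuous_const (continuous_const.mul continuous_id)).eventually_mem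
            hgt).filter_mono nhdsWithin_le_nhds
        filter_upwards [hU] with x' hU'
        rw [hηdef]; simp only [etaOf, if_neg (not_le.2 hU')]
      have hzd : DifferentiableWithinAt ℝ z (Icc 0 L) x := (hz.differentiableOn one_ne_zero) x hx
      refine DifferentiableWithinAt.congr_of_eventuallyEq (hzd.const_mul k₁) hev ?_
      rw [hηdef]; simp only [etaOf, if_neg (not_le.2 hgt)]

  -- ======== quantitative part ========
  -- Gz and DD
  set Gz : ℝ → ℝ := fun x => if x ∈ Ioo (0:ℝ) L then deriv z x else 0 with hGzdef
  have hGzm : Measurable Gz :=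
    Measurable.ite measurableSet_Ioo (measurable_deriv z) measurable_const
  have hgzc : ContinuousOn (fun s => derivWithin z (Icc 0 L) s) (Icc 0 L) :=
    hz.continuousOn_derivWithin (uniqueDiffOn_Icc hL) le_rfl
  obtain ⟨Sz₀, hSz₀⟩ := IsCompact.exists_bound_of_continuousOn isCompact_Icc hgzc
  set Sz := max Sz₀ 0 with hSzdef
  have hSz0 : 0 ≤ Sz := le_max_right _ _
  have hGzeq : ∀ s ∈ Ioo (0:ℝ) L, Gz s = deriv z s := fun s hs => by
    rw [hGzdef]; simp only [if_pos hs]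
  have hGzb : ∀ s, |Gz s| ≤ Sz := by
    intro s
    by_cases hs : s ∈ Ioo (0:ℝ) L
    · rw [hGzdef]; simp only [if_pos hs]
      rw [← derivWithin_of_mem_nhds (Icc_mem_nhds hs.1 hs.2)]
      exact le_trans (by simpa using hSz₀ s (Ioo_subset_Icc_self hs)) (le_max_left _ _)
    · rw [hGzdef]; simp only [if_neg hs, abs_zero]; exact hSz0
  have hsetm : MeasurableSet {x : ℝ | 0 < x ∧ μs * x < L} := by
    have he : {x : ℝ | 0 < x ∧ μs * x < L} = {x : ℝ | 0 < x} ∩ {x : ℝ | μs * x < L} := rfl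
    rw [he]
    exact ((isOpen_lt continuous_const continuous_id).measurableSet).inter
      ((isOpen_lt (continuous_const.mul continuous_id) continuous_const).measurableSet)
  set DD : ℝ → ℝ := fun x => if 0 < x ∧ μs * x < L then μs * DR (μs * x) else 0 with hDDdef
  have hDDm : Measurable DD := by
    rw [hDDdef]
    exact Measurable.ite hsetm ((hDRm.comp (measurable_id.const_mul μs)).const_mul μs)
      measurable_const
  set Q : ℝ → ℝ := fun x => k₁ * Gz x + DD x with hQdef
  have hQm : Measurable Q := by
    rw [hQdef]; exact (hGzm.const_mul k₁).add hDDm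
  -- integrals
  set Iz := ∫ x in (0:ℝ)..L, z x ^ 2 with hIzdef
  set Iz' := ∫ x in (0:ℝ)..L, deriv z x ^ 2 with hIz'def
  set Iw := ∫ x in (0:ℝ)..L, w x ^ 2 with hIwdef
  set Iw' := ∫ x in (0:ℝ)..L, deriv w x ^ 2 with hIw'def
  set Iη := ∫ x in (0:ℝ)..L, η x ^ 2 with hIηdef
  set Iη' := ∫ x in (0:ℝ)..L, deriv η x ^ 2 with hIη'def
  set IG2 := ∫ x in (0:ℝ)..L, Gw x ^ 2 with hIG2def
  set IGz2 := ∫ x in (0:ℝ)..L, Gz x ^ 2 with hIGz2def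
  set IG1 := ∫ x in (0:ℝ)..L, |Gw x| with hIG1def
  set IW1 := ∫ x in (0:ℝ)..L, |w x| with hIW1def
  -- integrability facts
  have hIzint : IntervalIntegrable (fun x => z x ^ 2) volume 0 L := by
    apply ContinuousOn.intervalIntegrable; rw [hIcc]; exact hzc.pow 2
  have hIwint : IntervalIntegrable (fun x => w x ^ 2) volume 0 L := by
    apply ContinuousOn.intervalIntegrable; rw [hIcc]; exact hwc.pow 2
  have hawint : IntervalIntegrable (fun x => |w x|) volume 0 L := by
    apply ContinuousOn.intervalIntegrable; rw [hIcc]; exact hwc.abs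
  have hηcint : IntervalIntegrable (fun x => ηc x ^ 2) volume 0 L := by
    apply ContinuousOn.intervalIntegrable; rw [hIcc]; exact hηcc.pow 2
  have hGwint : IntervalIntegrable Gw volume 0 L := intInt_of_bdd _ _ hGwm hGwb
  have hGwabsint : IntervalIntegrable (fun x => |Gw x|) volume 0 L :=
    intInt_of_bdd (C := Sg) _ _ hGwm.abs (fun x => by rw [abs_abs]; exact hGwb x)
  have hGw2int : IntervalIntegrable (fun x => Gw x ^ 2) volume 0 L :=
    intInt_of_bdd (C := Sg ^ 2) _ _ (hGwm.pow_const 2) (fun x => by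
      rw [abs_pow]; exact pow_le_pow_left₀ (abs_nonneg _) (hGwb x) 2)
  have hGz2int : IntervalIntegrable (fun x => Gz x ^ 2) volume 0 L :=
    intInt_of_bdd (C := Sz ^ 2) _ _ (hGzm.pow_const 2) (fun x => by
      rw [abs_pow]; exact pow_le_pow_left₀ (abs_nonneg _) (hGzb x) 2)
  -- nonnegativity
  have n1 : 0 ≤ Iz := by rw [hIzdef]; exact integral_nonneg hL' fun u _ => sq_nonneg _
  have n2 : 0 ≤ Iz' := by rw [hIz'def]; exact integral_nonneg hL' fun u _ => sq_nonneg _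
  have n3 : 0 ≤ Iw := by rw [hIwdef]; exact integral_nonneg hL' fun u _ => sq_nonneg _
  have n4 : 0 ≤ Iw' := by rw [hIw'def]; exact integral_nonneg hL' fun u _ => sq_nonneg _
  have n5 : 0 ≤ Iη := by rw [hIηdef]; exact integral_nonneg hL' fun u _ => sq_nonneg _
  have n6 : 0 ≤ Iη' := by rw [hIη'def]; exact integral_nonneg hL' fun u _ => sq_nonneg _
  have hIG2n : 0 ≤ IG2 := by rw [hIG2def]; exact integral_nonneg hL' fun u _ => sq_nonneg _
  have hIGz2n : 0 ≤ IGz2 := by rw [hIGz2def]; exact integral_nonneg hL' fun u _ => sq_nonneg _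
  have hIG1n : 0 ≤ IG1 := by rw [hIG1def]; exact integral_nonneg hL' fun u _ => abs_nonneg _
  have hIW1n : 0 ≤ IW1 := by rw [hIW1def]; exact integral_nonneg hL' fun u _ => abs_nonneg _
  -- a.e. identities
  have hIw'IG2 : Iw' = IG2 := by
    rw [hIw'def, hIG2def]
    apply intervalIntegral.integral_congr_ae
    filter_upwards [ae_ne_pt L] with x hxL hx
    rw [uIoc_of_le hL'] at hx
    have hxo : x ∈ Ioo (0:ℝ) L := ⟨hx.1, lt_of_le_of_ne hx.2 hxL⟩
    rw [hGwdef]; simp only [if_pos hxo]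
  have hIz'IGz2 : Iz' = IGz2 := by
    rw [hIz'def, hIGz2def]
    apply intervalIntegral.integral_congr_ae
    filter_upwards [ae_ne_pt L] with x hxL hx
    rw [uIoc_of_le hL'] at hx
    have hxo : x ∈ Ioo (0:ℝ) L := ⟨hx.1, lt_of_le_of_ne hx.2 hxL⟩
    rw [hGzdef]; simp only [if_pos hxo]
  -- Cauchy–Schwarz consequences
  have hIG1sq : IG1 ^ 2 ≤ L * IG2 := by
    have hb : IG1 ≤ Real.sqrt (L * IG2) := by
      rw [hIG1def, hIG2def]; exact int_abs_le_sqrt hL hGwabsint hGw2int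
    calc IG1 ^ 2 ≤ Real.sqrt (L * IG2) ^ 2 := pow_le_pow_left₀ hIG1n hb 2
      _ = L * IG2 := Real.sq_sqrt (mul_nonneg hL' hIG2n)
  have hIW1sq : IW1 ^ 2 ≤ L * Iw := by
    have hb : IW1 ≤ Real.sqrt (L * Iw) := by
      rw [hIW1def, hIwdef]; exact int_abs_le_sqrt hL hawint hIwint
    calc IW1 ^ 2 ≤ Real.sqrt (L * Iw) ^ 2 := pow_le_pow_left₀ hIW1n hb 2
      _ = L * Iw := Real.sq_sqrt (mul_nonneg hL' n3)
  -- trace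
  have htrace : w 0 ^ 2 ≤ (1 / L + 1) * Iw + IG2 := by
    rw [hIwdef, hIG2def]; exact trace_bound hL hwc hwdiff hGwint hGw2int
  -- DR / DD bounds
  have hDRb : ∀ c ∈ Icc (0:ℝ) L, |DR c| ≤ Sa * IG1 + |w 0| * Sa := by
    intro c hc
    have h1 : |ThDF L aT Gw c| ≤ Sa * IG1 := by
      rw [hIG1def]; exact thD_bound hL aT Gw haTb hGwm hGwb hGwzero hc
    calc |DR c| = |ThDF L aT Gw c - w 0 * aT c| := by rw [hDRdef]; simp only [DRF]
      _ ≤ |ThDF L aT Gw c| + |w 0 * aT c| := by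
          rw [sub_eq_add_neg]; exact (abs_add_le _ _).trans (by rw [abs_neg])
      _ ≤ Sa * IG1 + |w 0| * Sa := by
          rw [abs_mul]
          exact add_le_add h1 (mul_le_mul_of_nonneg_left (haTb c) (abs_nonneg _))
  set BD := Sa * IG1 + |w 0| * Sa with hBDdef
  have hBD0 : 0 ≤ BD := by
    rw [hBDdef]
    exact add_nonneg (mul_nonneg hSa0 hIG1n) (mul_nonneg (abs_nonneg _) hSa0)
  have hDDb : ∀ x, |DD x| ≤ μs * BD := by
    intro x
    rw [hDDdef]; simp only
    by_cases hx : 0 < x ∧ μs * x < L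
    · rw [if_pos hx, abs_mul, abs_of_pos hμ]
      exact mul_le_mul_of_nonneg_left
        (hDRb (μs * x) ⟨mul_nonneg hμ.le hx.1.le, hx.2.le⟩) hμ.le
    · rw [if_neg hx, abs_zero]; exact mul_nonneg hμ.le hBD0
  have hBD2 : BD ^ 2 ≤ K₁ * Iw + K₂ * IG2 := by
    have e1 : BD ^ 2 ≤ 2 * Sa ^ 2 * IG1 ^ 2 + 2 * Sa ^ 2 * w 0 ^ 2 := by
      rw [hBDdef]
      nlinarith only [mul_nonneg (sq_nonneg Sa) (sq_nonneg (IG1 - |w 0|)), sq_abs (w 0)]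
    have e2 : 2 * Sa ^ 2 * IG1 ^ 2 ≤ 2 * Sa ^ 2 * (L * IG2) :=
      mul_le_mul_of_nonneg_left hIG1sq (by positivity)
    have e3 : 2 * Sa ^ 2 * w 0 ^ 2 ≤ 2 * Sa ^ 2 * ((1 / L + 1) * Iw + IG2) :=
      mul_le_mul_of_nonneg_left htrace (by positivity)
    rw [hK₁def, hK₂def]
    calc BD ^ 2 ≤ 2 * Sa ^ 2 * IG1 ^ 2 + 2 * Sa ^ 2 * w 0 ^ 2 := e1
      _ ≤ 2 * Sa ^ 2 * (L * IG2) + 2 * Sa ^ 2 * ((1 / L + 1) * Iw + IG2) := add_le_add e2 e3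
      _ = 2 * Sa ^ 2 * (1 / L + 1) * Iw + (2 * Sa ^ 2 * L + 2 * Sa ^ 2) * IG2 := by ring
  -- bound for ΨR ∘ min
  have hΨRminb : ∀ x ∈ Icc (0:ℝ) L, |ΨR (min (μs * x) L)| ≤ Sa * IW1 := by
    intro x hx
    have hmem : min (μs * x) L ∈ Icc (0:ℝ) L :=
      ⟨le_min (mul_nonneg hμ.le hx.1) hL', min_le_right _ _⟩
    rw [hψReq _ hmem.1]
    refine (psiInt_bound hL aT wT haTb hwTc hmem).trans ?_
    have heq : (∫ y in (0:ℝ)..L, |wT y|) = IW1 := by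
      rw [hIW1def]; apply integral_congr; intro y hy; rw [hIcc] at hy
      simp only; rw [hwTeq y hy]
    rw [heq]
  -- derivative of η a.e.
  have hQd : ∀ x ∈ Ioo (0:ℝ) L, x ≠ L / μs → HasDerivAt η (Q x) x := by
    intro x hx hxne
    have hμne : μs * x ≠ L := by
      intro h; apply hxne; rw [eq_div_iff hμ.ne']; rw [mul_comm] at h; exact h
    have hzd' : HasDerivAt z (deriv z x) x := hzdiff x hx
    rcases lt_or_gt_of_ne hμne with hlt | hgt
    · have hev : η =ᶠ[𝓝 x] fun x' => k₁ * z x' + ΨR (μs * x') := by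
        filter_upwards [(isOpen_lt (continuous_const.mul continuous_id)
            continuous_const).eventually_mem hlt,
          (isOpen_lt continuous_const continuous_id).eventually_mem hx.1] with x' h1' h2'
        simp only [id_eq, Pi.mul_apply] at h1' h2'
        rw [hηηc x' (le_of_lt h2'), hηcdef]
        simp only [min_eq_left (le_of_lt h1')]
      have h1 : HasDerivAt (fun x' : ℝ => μs * x') (μs * 1) x := (hasDerivAt_id x).const_mul μs
      have h2 := HasDerivAt.comp x (hψR (μs * x)) h1
      have h3 : HasDerivAt (fun x' => k₁ * z x' + ΨR (μs * x'))
          (k₁ * deriv z x + DR (μs * x) * (μs * 1)) x := (hzd'.const_mul k₁).add h2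
      have h4 : Q x = k₁ * deriv z x + DR (μs * x) * (μs * 1) := by
        rw [hQdef]; simp only
        rw [hGzeq x hx, hDDdef]; simp only [if_pos (And.intro hx.1 hlt)]; ring
      rw [h4]
      exact h3.congr_of_eventuallyEq hev
    · have hev : η =ᶠ[𝓝 x] fun x' => k₁ * z x' := by
        filter_upwards [(isOpen_lt continuous_const
            (continuous_const.mul continuous_id)).eventually_mem hgt] with x' h1'
        simp only [id_eq, Pi.mul_apply] at h1'
        rw [hηdef]; simp only [etaOf, if_neg (not_le.2 h1')]
      have h4 : Q x = k₁ * deriv z x := by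
        rw [hQdef]; simp only
        rw [hGzeq x hx, hDDdef]
        simp only [if_neg (by rintro ⟨_, h'⟩; linarith : ¬(0 < x ∧ μs * x < L)), add_zero]
      rw [h4]
      exact (hzd'.const_mul k₁).congr_of_eventuallyEq hev
  -- integral identities for η
  have hIηeq : Iη = ∫ x in (0:ℝ)..L, ηc x ^ 2 := by
    rw [hIηdef]; apply integral_congr; intro x hx; rw [hIcc] at hx
    simp only; rw [hηηc x hx.1]
  have hIη'eq : Iη' = ∫ x in (0:ℝ)..L, Q x ^ 2 := by
    rw [hIη'def]; apply intervalIntegral.integral_congr_ae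
    filter_upwards [ae_ne_pt L, ae_ne_pt (L / μs)] with x hxL hxμ hx
    rw [uIoc_of_le hL'] at hx
    have hxo : x ∈ Ioo (0:ℝ) L := ⟨hx.1, lt_of_le_of_ne hx.2 hxL⟩
    rw [(hQd x hxo hxμ).deriv]
  have hQbd : ∀ x, |Q x| ≤ |k₁| * Sz + μs * BD := by
    intro x; rw [hQdef]; simp only
    calc |k₁ * Gz x + DD x| ≤ |k₁ * Gz x| + |DD x| := abs_add_le _ _
      _ ≤ |k₁| * Sz + μs * BD := by
          rw [abs_mul]
          exact add_le_add (mul_le_mul_of_nonneg_left (hGzb x) (abs_nonneg _)) (hDDb x)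
  have hQ2int : IntervalIntegrable (fun x => Q x ^ 2) volume 0 L :=
    intInt_of_bdd (C := (|k₁| * Sz + μs * BD) ^ 2) _ _ (hQm.pow_const 2) (fun x => by
      rw [abs_pow]; exact pow_le_pow_left₀ (abs_nonneg _) (hQbd x) 2)
  -- upper estimate for Iη
  have hu1 : Iη ≤ 2 * k₁ ^ 2 * Iz + 2 * Sa ^ 2 * L ^ 2 * Iw := by
    have hpt : ∀ x ∈ Icc (0:ℝ) L, ηc x ^ 2 ≤ 2 * k₁ ^ 2 * z x ^ 2 + 2 * (Sa * IW1) ^ 2 := by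
      intro x hx
      have hq := hΨRminb x hx
      have he : ηc x = k₁ * z x + ΨR (min (μs * x) L) := by rw [hηcdef]
      rw [he]
      nlinarith only [sq_nonneg (k₁ * z x - ΨR (min (μs * x) L)), sq_abs (ΨR (min (μs * x) L)),
        pow_le_pow_left₀ (abs_nonneg (ΨR (min (μs * x) L))) hq 2]
    have hRint : IntervalIntegrable (fun x => 2 * k₁ ^ 2 * z x ^ 2 + 2 * (Sa * IW1) ^ 2)
        volume 0 L := (hIzint.const_mul _).add _root_.intervalIntegrable_const
    have hmono := integral_mono_on hL' hηcint hRint hpt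
    have hcalc : (∫ x in (0:ℝ)..L, (2 * k₁ ^ 2 * z x ^ 2 + 2 * (Sa * IW1) ^ 2))
        = 2 * k₁ ^ 2 * Iz + 2 * (Sa * IW1) ^ 2 * L := by
      rw [integral_add (hIzint.const_mul _) _root_.intervalIntegrable_const,
        intervalIntegral.integral_const_mul, intervalIntegral.integral_const, hIzdef]
      simp only [smul_eq_mul, sub_zero]; ring
    have h1 : (Sa * IW1) ^ 2 ≤ Sa ^ 2 * (L * Iw) := by nlinarith only [hIW1sq, sq_nonneg Sa]
    have h2 : 2 * (Sa * IW1) ^ 2 * L ≤ 2 * Sa ^ 2 * L ^ 2 * Iw := by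
      nlinarith only [mul_le_mul_of_nonneg_left h1 (by positivity : (0:ℝ) ≤ 2 * L)]
    rw [hIηeq]
    calc (∫ x in (0:ℝ)..L, ηc x ^ 2)
        ≤ ∫ x in (0:ℝ)..L, (2 * k₁ ^ 2 * z x ^ 2 + 2 * (Sa * IW1) ^ 2) := hmono
      _ = 2 * k₁ ^ 2 * Iz + 2 * (Sa * IW1) ^ 2 * L := hcalc
      _ ≤ 2 * k₁ ^ 2 * Iz + 2 * Sa ^ 2 * L ^ 2 * Iw := by linarith only [h2]
  -- upper estimate for Iη'
  have hu2 : Iη' ≤ 2 * k₁ ^ 2 * Iz' + 2 * μs ^ 2 * K₁ * L * Iw + 2 * μs ^ 2 * K₂ * L * Iw' := by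
    have hpt : ∀ x ∈ Icc (0:ℝ) L, Q x ^ 2 ≤ 2 * k₁ ^ 2 * Gz x ^ 2 + 2 * (μs * BD) ^ 2 := by
      intro x hx
      have he : Q x = k₁ * Gz x + DD x := by rw [hQdef]
      rw [he]
      nlinarith only [sq_nonneg (k₁ * Gz x - DD x), sq_abs (DD x),
        pow_le_pow_left₀ (abs_nonneg (DD x)) (hDDb x) 2]
    have hRint : IntervalIntegrable (fun x => 2 * k₁ ^ 2 * Gz x ^ 2 + 2 * (μs * BD) ^ 2)
        volume 0 L := (hGz2int.const_mul _).add _root_.intervalIntegrable_const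
    have hmono := integral_mono_on hL' hQ2int hRint hpt
    have hcalc : (∫ x in (0:ℝ)..L, (2 * k₁ ^ 2 * Gz x ^ 2 + 2 * (μs * BD) ^ 2))
        = 2 * k₁ ^ 2 * IGz2 + 2 * (μs * BD) ^ 2 * L := by
      rw [integral_add (hGz2int.const_mul _) _root_.intervalIntegrable_const,
        intervalIntegral.integral_const_mul, intervalIntegral.integral_const, hIGz2def]
      simp only [smul_eq_mul, sub_zero]; ring
    have h1 : (μs * BD) ^ 2 ≤ μs ^ 2 * (K₁ * Iw + K₂ * IG2) := by
      nlinarith only [hBD2, sq_nonneg μs]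
    have h2 : 2 * (μs * BD) ^ 2 * L ≤ 2 * μs ^ 2 * K₁ * L * Iw + 2 * μs ^ 2 * K₂ * L * Iw' := by
      rw [hIw'IG2]
      nlinarith only [mul_le_mul_of_nonneg_left h1 (by positivity : (0:ℝ) ≤ 2 * L)]
    rw [hIη'eq, hIz'IGz2]
    calc (∫ x in (0:ℝ)..L, Q x ^ 2)
        ≤ ∫ x in (0:ℝ)..L, (2 * k₁ ^ 2 * Gz x ^ 2 + 2 * (μs * BD) ^ 2) := hmono
      _ = 2 * k₁ ^ 2 * IGz2 + 2 * (μs * BD) ^ 2 * L := hcalc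
      _ ≤ 2 * k₁ ^ 2 * IGz2 + 2 * μs ^ 2 * K₁ * L * Iw + 2 * μs ^ 2 * K₂ * L * Iw' := by
          linarith only [h2]
  -- lower estimate for Iz
  have hl1 : k₁ ^ 2 * Iz ≤ 2 * Iη + 2 * Sa ^ 2 * L ^ 2 * Iw := by
    have hpt : ∀ x ∈ Icc (0:ℝ) L, k₁ ^ 2 * z x ^ 2 ≤ 2 * ηc x ^ 2 + 2 * (Sa * IW1) ^ 2 := by
      intro x hx
      have hq := hΨRminb x hx
      have he : ηc x = k₁ * z x + ΨR (min (μs * x) L) := by rw [hηcdef]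
      rw [he]
      nlinarith only [sq_nonneg (k₁ * z x + 2 * ΨR (min (μs * x) L)),
        sq_abs (ΨR (min (μs * x) L)),
        pow_le_pow_left₀ (abs_nonneg (ΨR (min (μs * x) L))) hq 2]
    have hRint : IntervalIntegrable (fun x => 2 * ηc x ^ 2 + 2 * (Sa * IW1) ^ 2)
        volume 0 L := (hηcint.const_mul _).add _root_.intervalIntegrable_const
    have hmono := integral_mono_on hL' (hIzint.const_mul (k₁ ^ 2)) hRint hpt
    have hL1 : (∫ x in (0:ℝ)..L, k₁ ^ 2 * z x ^ 2) = k₁ ^ 2 * Iz := by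
      rw [intervalIntegral.integral_const_mul, hIzdef]
    have hcalc : (∫ x in (0:ℝ)..L, (2 * ηc x ^ 2 + 2 * (Sa * IW1) ^ 2))
        = 2 * Iη + 2 * (Sa * IW1) ^ 2 * L := by
      rw [integral_add (hηcint.const_mul _) _root_.intervalIntegrable_const,
        intervalIntegral.integral_const_mul, intervalIntegral.integral_const, hIηeq]
      simp only [smul_eq_mul, sub_zero]; ring
    have h1 : (Sa * IW1) ^ 2 ≤ Sa ^ 2 * (L * Iw) := by nlinarith only [hIW1sq, sq_nonneg Sa]
    have h2 : 2 * (Sa * IW1) ^ 2 * L ≤ 2 * Sa ^ 2 * L ^ 2 * Iw := by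
      nlinarith only [mul_le_mul_of_nonneg_left h1 (by positivity : (0:ℝ) ≤ 2 * L)]
    rw [← hL1]
    calc (∫ x in (0:ℝ)..L, k₁ ^ 2 * z x ^ 2)
        ≤ ∫ x in (0:ℝ)..L, (2 * ηc x ^ 2 + 2 * (Sa * IW1) ^ 2) := hmono
      _ = 2 * Iη + 2 * (Sa * IW1) ^ 2 * L := hcalc
      _ ≤ 2 * Iη + 2 * Sa ^ 2 * L ^ 2 * Iw := by linarith only [h2]
  -- lower estimate for Iz'
  have hl2 : k₁ ^ 2 * Iz' ≤ 2 * Iη' + 2 * μs ^ 2 * K₁ * L * Iw + 2 * μs ^ 2 * K₂ * L * Iw' := by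
    have hpt : ∀ x ∈ Icc (0:ℝ) L, k₁ ^ 2 * Gz x ^ 2 ≤ 2 * Q x ^ 2 + 2 * (μs * BD) ^ 2 := by
      intro x hx
      have he : Q x = k₁ * Gz x + DD x := by rw [hQdef]
      rw [he]
      nlinarith only [sq_nonneg (k₁ * Gz x + 2 * DD x), sq_abs (DD x),
        pow_le_pow_left₀ (abs_nonneg (DD x)) (hDDb x) 2]
    have hRint : IntervalIntegrable (fun x => 2 * Q x ^ 2 + 2 * (μs * BD) ^ 2)
        volume 0 L := (hQ2int.const_mul _).add _root_.intervalIntegrable_const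
    have hmono := integral_mono_on hL' (hGz2int.const_mul (k₁ ^ 2)) hRint hpt
    have hL1 : (∫ x in (0:ℝ)..L, k₁ ^ 2 * Gz x ^ 2) = k₁ ^ 2 * IGz2 := by
      rw [intervalIntegral.integral_const_mul, hIGz2def]
    have hcalc : (∫ x in (0:ℝ)..L, (2 * Q x ^ 2 + 2 * (μs * BD) ^ 2))
        = 2 * Iη' + 2 * (μs * BD) ^ 2 * L := by
      rw [integral_add (hQ2int.const_mul _) _root_.intervalIntegrable_const,
        intervalIntegral.integral_const_mul, intervalIntegral.integral_const, hIη'eq]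
      simp only [smul_eq_mul, sub_zero]; ring
    have h1 : (μs * BD) ^ 2 ≤ μs ^ 2 * (K₁ * Iw + K₂ * IG2) := by
      nlinarith only [hBD2, sq_nonneg μs]
    have h2 : 2 * (μs * BD) ^ 2 * L ≤ 2 * μs ^ 2 * K₁ * L * Iw + 2 * μs ^ 2 * K₂ * L * Iw' := by
      rw [hIw'IG2]
      nlinarith only [mul_le_mul_of_nonneg_left h1 (by positivity : (0:ℝ) ≤ 2 * L)]
    rw [hIz'IGz2, ← hL1]
    calc (∫ x in (0:ℝ)..L, k₁ ^ 2 * Gz x ^ 2)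
        ≤ ∫ x in (0:ℝ)..L, (2 * Q x ^ 2 + 2 * (μs * BD) ^ 2) := hmono
      _ = 2 * Iη' + 2 * (μs * BD) ^ 2 * L := hcalc
      _ ≤ 2 * Iη' + 2 * μs ^ 2 * K₁ * L * Iw + 2 * μs ^ 2 * K₂ * L * Iw' := by
          linarith only [h2]
  -- global comparisons
  have hup : Iη + Iη' + (Iw + Iw') ≤ CA * (Iz + Iz' + (Iw + Iw')) := by
    have t1 : 0 ≤ 2 * μs ^ 2 * K₁ * L :=
      mul_nonneg (mul_nonneg (by positivity) hK₁0) hL'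
    have t2 : 0 ≤ 2 * μs ^ 2 * K₂ * L :=
      mul_nonneg (mul_nonneg (by positivity) hK₂0) hL'
    have t3 : (0:ℝ) ≤ 2 * Sa ^ 2 * L ^ 2 := by positivity
    have t4 : (0:ℝ) ≤ 2 * k₁ ^ 2 := by positivity
    have hca1 : 2 * k₁ ^ 2 ≤ CA := by rw [hCAdef]; linarith only [t1, t2, t3]
    have hca3 : 2 * Sa ^ 2 * L ^ 2 + 2 * μs ^ 2 * K₁ * L + 1 ≤ CA := by
      rw [hCAdef]; linarith only [t2, t4]
    have hca4 : 2 * μs ^ 2 * K₂ * L + 1 ≤ CA := by rw [hCAdef]; linarith only [t1, t3, t4]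
    have m1 := mul_le_mul_of_nonneg_right hca1 n1
    have m2 := mul_le_mul_of_nonneg_right hca1 n2
    have m3 := mul_le_mul_of_nonneg_right hca3 n3
    have m4 := mul_le_mul_of_nonneg_right hca4 n4
    calc Iη + Iη' + (Iw + Iw')
        ≤ (2 * k₁ ^ 2) * Iz + (2 * k₁ ^ 2) * Iz'
          + (2 * Sa ^ 2 * L ^ 2 + 2 * μs ^ 2 * K₁ * L + 1) * Iw
          + (2 * μs ^ 2 * K₂ * L + 1) * Iw' := by nlinarith only [hu1, hu2]
      _ ≤ CA * Iz + CA * Iz' + CA * Iw + CA * Iw' := by linarith only [m1, m2, m3, m4]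
      _ = CA * (Iz + Iz' + (Iw + Iw')) := by ring
  have hlo : Iz + Iz' + (Iw + Iw') ≤ CB * (Iη + Iη' + (Iw + Iw')) := by
    have t1 : 0 ≤ 2 * μs ^ 2 * K₁ * L :=
      mul_nonneg (mul_nonneg (by positivity) hK₁0) hL'
    have t2 : 0 ≤ 2 * μs ^ 2 * K₂ * L :=
      mul_nonneg (mul_nonneg (by positivity) hK₂0) hL'
    have t3 : (0:ℝ) ≤ 2 * Sa ^ 2 * L ^ 2 := by positivity
    have hCBk : k₁ ^ 2 * CB
        = 2 + 2 * Sa ^ 2 * L ^ 2 + 2 * μs ^ 2 * K₁ * L + 2 * μs ^ 2 * K₂ * L + k₁ ^ 2 := by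
      rw [hCBdef]; field_simp
    have hd1 : (2:ℝ) ≤ k₁ ^ 2 * CB := by rw [hCBk]; linarith only [hk2.le, t1, t2, t3]
    have hd3 : 2 * Sa ^ 2 * L ^ 2 + 2 * μs ^ 2 * K₁ * L + k₁ ^ 2 ≤ k₁ ^ 2 * CB := by
      rw [hCBk]; linarith only [t2]
    have hd4 : 2 * μs ^ 2 * K₂ * L + k₁ ^ 2 ≤ k₁ ^ 2 * CB := by
      rw [hCBk]; linarith only [t1, t3]
    have m1 := mul_le_mul_of_nonneg_right hd1 n5
    have m2 := mul_le_mul_of_nonneg_right hd1 n6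
    have m3 := mul_le_mul_of_nonneg_right hd3 n3
    have m4 := mul_le_mul_of_nonneg_right hd4 n4
    have key : k₁ ^ 2 * (Iz + Iz' + (Iw + Iw')) ≤ k₁ ^ 2 * (CB * (Iη + Iη' + (Iw + Iw'))) := by
      have step1 : k₁ ^ 2 * (Iz + Iz' + (Iw + Iw'))
          ≤ 2 * Iη + 2 * Iη'
            + (2 * Sa ^ 2 * L ^ 2 + 2 * μs ^ 2 * K₁ * L + k₁ ^ 2) * Iw
            + (2 * μs ^ 2 * K₂ * L + k₁ ^ 2) * Iw' := by nlinarith only [hl1, hl2]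
      have step2 : 2 * Iη + 2 * Iη'
            + (2 * Sa ^ 2 * L ^ 2 + 2 * μs ^ 2 * K₁ * L + k₁ ^ 2) * Iw
            + (2 * μs ^ 2 * K₂ * L + k₁ ^ 2) * Iw'
          ≤ (k₁ ^ 2 * CB) * Iη + (k₁ ^ 2 * CB) * Iη'
            + (k₁ ^ 2 * CB) * Iw + (k₁ ^ 2 * CB) * Iw' := by linarith only [m1, m2, m3, m4]
      calc k₁ ^ 2 * (Iz + Iz' + (Iw + Iw'))
          ≤ 2 * Iη + 2 * Iη'
            + (2 * Sa ^ 2 * L ^ 2 + 2 * μs ^ 2 * K₁ * L + k₁ ^ 2) * Iw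
            + (2 * μs ^ 2 * K₂ * L + k₁ ^ 2) * Iw' := step1
        _ ≤ (k₁ ^ 2 * CB) * Iη + (k₁ ^ 2 * CB) * Iη'
            + (k₁ ^ 2 * CB) * Iw + (k₁ ^ 2 * CB) * Iw' := step2
        _ = k₁ ^ 2 * (CB * (Iη + Iη' + (Iw + Iw'))) := by ring
    exact le_of_mul_le_mul_left key hk2
  -- translate to H1pair
  have hPη : H1pair L η w = Real.sqrt (Iη + Iη' + (Iw + Iw')) := by
    simp only [H1pair, H1norm]
    rw [← hIηdef, ← hIη'def, ← hIwdef, ← hIw'def,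
      Real.sq_sqrt (add_nonneg n5 n6), Real.sq_sqrt (add_nonneg n3 n4)]
  have hPz : H1pair L z w = Real.sqrt (Iz + Iz' + (Iw + Iw')) := by
    simp only [H1pair, H1norm]
    rw [← hIzdef, ← hIz'def, ← hIwdef, ← hIw'def,
      Real.sq_sqrt (add_nonneg n1 n2), Real.sq_sqrt (add_nonneg n3 n4)]
  refine ⟨goal1, goal2, ?_, ?_⟩
  · rw [hPη, hPz]
    have h : Real.sqrt (Iη + Iη' + (Iw + Iw'))
        ≤ Real.sqrt CA * Real.sqrt (Iz + Iz' + (Iw + Iw')) := by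
      rw [← Real.sqrt_mul hCA0.le]
      exact Real.sqrt_le_sqrt hup
    calc 1 / Real.sqrt CA * Real.sqrt (Iη + Iη' + (Iw + Iw'))
        ≤ 1 / Real.sqrt CA * (Real.sqrt CA * Real.sqrt (Iz + Iz' + (Iw + Iw'))) :=
          mul_le_mul_of_nonneg_left h (by positivity)
      _ = Real.sqrt (Iz + Iz' + (Iw + Iw')) := by
          field_simp
  · rw [hPη, hPz]
    have h : Real.sqrt (Iz + Iz' + (Iw + Iw'))
        ≤ Real.sqrt CB * Real.sqrt (Iη + Iη' + (Iw + Iw')) := by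
      rw [← Real.sqrt_mul hCB0.le]
      exact Real.sqrt_le_sqrt hlo
    exact h
end

section
/- Let L > 0, v* > 0, γp* > v*, set μ* = v*/(γp* − v*), let k₁ ∈ ℝ, and let a, c ∈ C([0,L]). Then there exists a unique continuous function φ : [0,L] → ℝ such that: (i) for every x ∈ [0,L] with μ* x ≤ L, φ(x) = −c(v* x/γp*)/γp* + ∫₀^{μ* x/γp*} v* a(μ* x − v* s) φ((γp* − v*) s) ds + ∫₀^{x/γp*} [ k₁ μ* c(v* x/γp* − v* s) φ(γp* s) + v* a(v* x/γp* − v* s) φ((γp* − v*) s + v* x/γp*) ] ds; and (ii) for every x ∈ [0,L] with μ* x > L, φ(x) = −c(v* x/γp*)/γp* + ∫₀^{L/v* − x/γp*} v* a(L − v* s) φ((γp* − v*) s + x − L/μ*) ds + ∫₀^{x/γp*} [ k₁ μ* c(v* x/γp* − v* s) φ(γp* s) + v* a(v* x/γp* − v* s) φ((γp* − v*) s + v* x/γp*) ] ds. (All arguments of a, c and φ occurring above lie in [0,L].) -/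
open Set

section Aux
open MeasureTheory Real

namespace Stmt8Aux2

noncomputable def pr (L x : ℝ) : ℝ := max 0 (min x L)

lemma pr_mem {L : ℝ} (hL : 0 ≤ L) (x : ℝ) : pr L x ∈ Icc 0 L :=
  ⟨le_max_left _ _, max_le hL (min_le_right _ _)⟩

lemma pr_eq {L x : ℝ} (hx : x ∈ Icc 0 L) : pr L x = x := by
  have h1 : min x L = x := min_eq_left hx.2
  simp [pr, h1, hx.1]

lemma pr_le {L x : ℝ} (hx : 0 ≤ x) : pr L x ≤ x :=
  max_le hx (min_le_left _ _)

lemma pr_continuous (L : ℝ) : Continuous (pr L) :=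
  continuous_const.max (continuous_id.min continuous_const)

noncomputable def RHS1 (vs gp k₁ : ℝ) (a c f : ℝ → ℝ) (x : ℝ) : ℝ :=
  -(c (vs * x / gp)) / gp
    + (∫ s in (0:ℝ)..((vs / (gp - vs)) * x / gp),
        vs * a ((vs / (gp - vs)) * x - vs * s) * f ((gp - vs) * s))
    + ∫ s in (0:ℝ)..(x / gp),
        (k₁ * (vs / (gp - vs)) * c (vs * x / gp - vs * s) * f (gp * s)
          + vs * a (vs * x / gp - vs * s) * f ((gp - vs) * s + vs * x / gp))

noncomputable def RHS2 (L vs gp k₁ : ℝ) (a c f : ℝ → ℝ) (x : ℝ) : ℝ :=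
  -(c (vs * x / gp)) / gp
    + (∫ s in (0:ℝ)..(L / vs - x / gp),
        vs * a (L - vs * s) * f ((gp - vs) * s + x - L / (vs / (gp - vs))))
    + ∫ s in (0:ℝ)..(x / gp),
        (k₁ * (vs / (gp - vs)) * c (vs * x / gp - vs * s) * f (gp * s)
          + vs * a (vs * x / gp - vs * s) * f ((gp - vs) * s + vs * x / gp))

noncomputable def body (L vs gp k₁ : ℝ) (a c f : ℝ → ℝ) (y : ℝ) : ℝ :=
  if vs / (gp - vs) * y ≤ L then RHS1 vs gp k₁ a c f y else RHS2 L vs gp k₁ a c f y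

lemma interface {L vs gp k₁ : ℝ} (hvs : 0 < vs) (hgp : vs < gp) (a c f : ℝ → ℝ)
    {y : ℝ} (h : vs / (gp - vs) * y = L) :
    RHS1 vs gp k₁ a c f y = RHS2 L vs gp k₁ a c f y := by
  have hgv : 0 < gp - vs := by linarith
  have hy : y = L * (gp - vs) / vs := by field_simp at h ⊢; linarith
  subst hy
  unfold RHS1 RHS2
  congr 1
  congr 1
  have earg : vs / (gp - vs) * (L * (gp - vs) / vs) = L := by field_simp
  have eend : vs / (gp - vs) * (L * (gp - vs) / vs) / gp
      = L / vs - L * (gp - vs) / vs / gp := by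
    have hgp0 : (0:ℝ) < gp := by linarith
    rw [earg, div_div, div_sub_div _ _ (ne_of_gt hvs) (by positivity),
      div_eq_div_iff (by positivity) (by positivity)]
    ring
  rw [eend]
  apply intervalIntegral.integral_congr
  intro s _
  have earg2 : (gp - vs) * s + L * (gp - vs) / vs - L / (vs / (gp - vs))
      = (gp - vs) * s := by field_simp; ring
  show vs * a (vs / (gp - vs) * (L * (gp - vs) / vs) - vs * s) * f ((gp - vs) * s)
      = vs * a (L - vs * s) * f ((gp - vs) * s + L * (gp - vs) / vs - L / (vs / (gp - vs)))
  rw [earg, earg2]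

lemma body_cont {L vs gp k₁ : ℝ} (hvs : 0 < vs) (hgp : vs < gp)
    {a c f : ℝ → ℝ} (ha : Continuous a) (hc : Continuous c) (hf : Continuous f) :
    Continuous (body L vs gp k₁ a c f) := by
  have hc0 : Continuous fun x : ℝ => -(c (vs * x / gp)) / gp := by fun_prop
  have hi2 : Continuous fun x : ℝ => ∫ s in (0:ℝ)..(x / gp),
      (k₁ * (vs / (gp - vs)) * c (vs * x / gp - vs * s) * f (gp * s)
        + vs * a (vs * x / gp - vs * s) * f ((gp - vs) * s + vs * x / gp)) :=
    intervalIntegral.continuous_parametric_intervalIntegral_of_continuous (by fun_prop) (by fun_prop)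
  have h1 : Continuous (RHS1 vs gp k₁ a c f) := by
    have hi1 : Continuous fun x : ℝ => ∫ s in (0:ℝ)..((vs / (gp - vs)) * x / gp),
        vs * a ((vs / (gp - vs)) * x - vs * s) * f ((gp - vs) * s) :=
      intervalIntegral.continuous_parametric_intervalIntegral_of_continuous (by fun_prop) (by fun_prop)
    exact (hc0.add hi1).add hi2
  have h2 : Continuous (RHS2 L vs gp k₁ a c f) := by
    have hj1 : Continuous fun x : ℝ => ∫ s in (0:ℝ)..(L / vs - x / gp),
        vs * a (L - vs * s) * f ((gp - vs) * s + x - L / (vs / (gp - vs))) :=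
      intervalIntegral.continuous_parametric_intervalIntegral_of_continuous (by fun_prop) (by fun_prop)
    exact (hc0.add hj1).add hi2
  exact Continuous.if_le h1 h2 (by fun_prop) continuous_const
    (fun y hy => interface hvs hgp a c f hy)


lemma rhs1_congr {L vs gp k₁ : ℝ} (hvs : 0 < vs) (hgp : vs < gp)
    {a1 a2 c1 c2 f1 f2 : ℝ → ℝ} (hA : EqOn a1 a2 (Icc 0 L)) (hC : EqOn c1 c2 (Icc 0 L))
    (hF : EqOn f1 f2 (Icc 0 L)) {y : ℝ} (hy : y ∈ Icc 0 L) (hys : vs / (gp - vs) * y ≤ L) :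
    RHS1 vs gp k₁ a1 c1 f1 y = RHS1 vs gp k₁ a2 c2 f2 y := by
  have hgv : 0 < gp - vs := by linarith
  have hgp0 : 0 < gp := by linarith
  obtain ⟨hy0, hyL⟩ := hy
  have hmu0 : 0 ≤ vs / (gp - vs) * y := by positivity
  have hvy : vs * y / gp ≤ y := by rw [div_le_iff₀ hgp0]; nlinarith
  have hvyL : vs * y / gp ∈ Icc (0:ℝ) L := ⟨by positivity, hvy.trans hyL⟩
  unfold RHS1
  congr 1
  congr 1
  · rw [hC hvyL]
  · apply intervalIntegral.integral_congr
    intro s hs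
    rw [uIcc_of_le (by positivity)] at hs
    obtain ⟨hs0, hs1⟩ := hs
    have hvss : vs * s ≤ vs * (vs / (gp - vs) * y / gp) :=
      mul_le_mul_of_nonneg_left hs1 hvs.le
    have e2 : vs * (vs / (gp - vs) * y / gp) ≤ vs / (gp - vs) * y := by
      calc vs * (vs / (gp - vs) * y / gp) ≤ gp * (vs / (gp - vs) * y / gp) := by
            apply mul_le_mul_of_nonneg_right hgp.le; positivity
        _ = vs / (gp - vs) * y := by field_simp
    have h1 : vs / (gp - vs) * y - vs * s ∈ Icc (0:ℝ) L := by
      constructor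
      · linarith
      · nlinarith [mul_nonneg hvs.le hs0]
    have h2 : (gp - vs) * s ∈ Icc (0:ℝ) L := by
      constructor
      · positivity
      · have : (gp - vs) * s ≤ (gp - vs) * (vs / (gp - vs) * y / gp) :=
          mul_le_mul_of_nonneg_left hs1 hgv.le
        have e3 : (gp - vs) * (vs / (gp - vs) * y / gp) = vs * y / gp := by
          field_simp
        linarith [hvy]
    show vs * a1 (vs / (gp - vs) * y - vs * s) * f1 ((gp - vs) * s)
        = vs * a2 (vs / (gp - vs) * y - vs * s) * f2 ((gp - vs) * s)
    rw [hA h1, hF h2]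
  · apply intervalIntegral.integral_congr
    intro s hs
    rw [uIcc_of_le (by positivity)] at hs
    obtain ⟨hs0, hs1⟩ := hs
    have hvss : vs * s ≤ vs * (y / gp) := mul_le_mul_of_nonneg_left hs1 hvs.le
    have e4 : vs * (y / gp) = vs * y / gp := by ring
    have h3 : vs * y / gp - vs * s ∈ Icc (0:ℝ) L := by
      constructor
      · linarith
      · nlinarith [mul_nonneg hvs.le hs0]
    have h4 : gp * s ∈ Icc (0:ℝ) L := by
      constructor
      · positivity
      · have : gp * s ≤ gp * (y / gp) := mul_le_mul_of_nonneg_left hs1 hgp0.le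
        have : gp * (y / gp) = y := by field_simp
        nlinarith [mul_le_mul_of_nonneg_left hs1 hgp0.le]
    have h5 : (gp - vs) * s + vs * y / gp ∈ Icc (0:ℝ) L := by
      constructor
      · positivity
      · have : (gp - vs) * s ≤ (gp - vs) * (y / gp) :=
          mul_le_mul_of_nonneg_left hs1 hgv.le
        have e5 : (gp - vs) * (y / gp) + vs * y / gp = y := by field_simp; ring
        linarith
    show k₁ * (vs / (gp - vs)) * c1 (vs * y / gp - vs * s) * f1 (gp * s)
          + vs * a1 (vs * y / gp - vs * s) * f1 ((gp - vs) * s + vs * y / gp)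
        = k₁ * (vs / (gp - vs)) * c2 (vs * y / gp - vs * s) * f2 (gp * s)
          + vs * a2 (vs * y / gp - vs * s) * f2 ((gp - vs) * s + vs * y / gp)
    rw [hA h3, hC h3, hF h4, hF h5]

lemma rhs2_congr {L vs gp k₁ : ℝ} (hvs : 0 < vs) (hgp : vs < gp)
    {a1 a2 c1 c2 f1 f2 : ℝ → ℝ} (hA : EqOn a1 a2 (Icc 0 L)) (hC : EqOn c1 c2 (Icc 0 L))
    (hF : EqOn f1 f2 (Icc 0 L)) {y : ℝ} (hy : y ∈ Icc 0 L) (hys : L ≤ vs / (gp - vs) * y) :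
    RHS2 L vs gp k₁ a1 c1 f1 y = RHS2 L vs gp k₁ a2 c2 f2 y := by
  have hgv : 0 < gp - vs := by linarith
  have hgp0 : 0 < gp := by linarith
  obtain ⟨hy0, hyL⟩ := hy
  have hL0 : 0 ≤ L := hy0.trans hyL
  have hvy : vs * y / gp ≤ y := by rw [div_le_iff₀ hgp0]; nlinarith
  have hvyL : vs * y / gp ∈ Icc (0:ℝ) L := ⟨by positivity, hvy.trans hyL⟩
  have hb3 : 0 ≤ L / vs - y / gp := by
    have : y / gp ≤ L / vs := by rw [div_le_div_iff₀ hgp0 hvs]; nlinarith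
    linarith
  have hQ : L / (vs / (gp - vs)) = L * (gp - vs) / vs := by
    rw [div_div_eq_mul_div]
  have hyQ : 0 ≤ y - L * (gp - vs) / vs := by
    rw [sub_nonneg, div_le_iff₀ hvs]
    calc L * (gp - vs) ≤ (vs / (gp - vs) * y) * (gp - vs) := by
          apply mul_le_mul_of_nonneg_right hys hgv.le
      _ = y * vs := by field_simp
  unfold RHS2
  congr 1
  congr 1
  · rw [hC hvyL]
  · apply intervalIntegral.integral_congr
    intro s hs
    rw [uIcc_of_le hb3] at hs
    obtain ⟨hs0, hs1⟩ := hs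
    have hvss : vs * s ≤ vs * (L / vs - y / gp) := mul_le_mul_of_nonneg_left hs1 hvs.le
    have e1 : vs * (L / vs - y / gp) = L - vs * y / gp := by field_simp
    have h1 : L - vs * s ∈ Icc (0:ℝ) L := by
      constructor
      · have : 0 ≤ vs * y / gp := by positivity
        linarith
      · nlinarith [mul_nonneg hvs.le hs0]
    have h2 : (gp - vs) * s + y - L / (vs / (gp - vs)) ∈ Icc (0:ℝ) L := by
      rw [hQ]
      constructor
      · have : 0 ≤ (gp - vs) * s := by positivity
        linarith
      · have e2 : (gp - vs) * s ≤ (gp - vs) * (L / vs - y / gp) :=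
          mul_le_mul_of_nonneg_left hs1 hgv.le
        have e3 : (gp - vs) * (L / vs - y / gp) + y - L * (gp - vs) / vs
            = vs * y / gp := by field_simp; ring
        linarith
    show vs * a1 (L - vs * s) * f1 ((gp - vs) * s + y - L / (vs / (gp - vs)))
        = vs * a2 (L - vs * s) * f2 ((gp - vs) * s + y - L / (vs / (gp - vs)))
    rw [hA h1, hF h2]
  · apply intervalIntegral.integral_congr
    intro s hs
    rw [uIcc_of_le (by positivity)] at hs
    obtain ⟨hs0, hs1⟩ := hs
    have hvss : vs * s ≤ vs * (y / gp) := mul_le_mul_of_nonneg_left hs1 hvs.le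
    have h3 : vs * y / gp - vs * s ∈ Icc (0:ℝ) L := by
      constructor
      · linarith [show vs * (y / gp) = vs * y / gp from by ring]
      · nlinarith [mul_nonneg hvs.le hs0]
    have h4 : gp * s ∈ Icc (0:ℝ) L := by
      constructor
      · positivity
      · have h6 : gp * s ≤ gp * (y / gp) := mul_le_mul_of_nonneg_left hs1 hgp0.le
        have : gp * (y / gp) = y := by field_simp
        linarith
    have h5 : (gp - vs) * s + vs * y / gp ∈ Icc (0:ℝ) L := by
      constructor
      · positivity
      · have : (gp - vs) * s ≤ (gp - vs) * (y / gp) :=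
          mul_le_mul_of_nonneg_left hs1 hgv.le
        have e5 : (gp - vs) * (y / gp) + vs * y / gp = y := by field_simp; ring
        linarith
    show k₁ * (vs / (gp - vs)) * c1 (vs * y / gp - vs * s) * f1 (gp * s)
          + vs * a1 (vs * y / gp - vs * s) * f1 ((gp - vs) * s + vs * y / gp)
        = k₁ * (vs / (gp - vs)) * c2 (vs * y / gp - vs * s) * f2 (gp * s)
          + vs * a2 (vs * y / gp - vs * s) * f2 ((gp - vs) * s + vs * y / gp)
    rw [hA h3, hC h3, hF h4, hF h5]


lemma key {M lam b cc K₀ D y : ℝ} (hM : 0 < M) (hlam : 0 < lam) (hb : 0 ≤ b)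
    (hcc : 0 ≤ cc) (hK : 0 ≤ K₀) (hD : 0 ≤ D) (hy : lam * b + cc ≤ y)
    {k h : ℝ → ℝ} (hk : Continuous k) (hh : Continuous h)
    (hbk : ∀ s, |k s| ≤ K₀) (hbh : ∀ t, 0 ≤ t → |h t| ≤ D * Real.exp (M * t)) :
    |∫ s in (0:ℝ)..b, k s * h (lam * s + cc)| ≤ K₀ * D * Real.exp (M * y) / (M * lam) := by
  have hMl : 0 < M * lam := mul_pos hM hlam
  have h1 : |∫ s in (0:ℝ)..b, k s * h (lam * s + cc)|
      ≤ ∫ s in (0:ℝ)..b, |k s * h (lam * s + cc)| :=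
    intervalIntegral.abs_integral_le_integral_abs hb
  have h2 : (∫ s in (0:ℝ)..b, |k s * h (lam * s + cc)|)
      ≤ ∫ s in (0:ℝ)..b, K₀ * (D * Real.exp (M * (lam * s + cc))) := by
    apply intervalIntegral.integral_mono_on hb
    · exact ((hk.mul (hh.comp (by continuity))).abs).intervalIntegrable _ _
    · exact (Continuous.intervalIntegrable (by continuity) _ _)
    · intro s hs
      rw [abs_mul]
      have hs0 : 0 ≤ lam * s + cc := by nlinarith [hs.1]
      exact mul_le_mul (hbk s) (hbh _ hs0) (abs_nonneg _) hK
  have h3 : (∫ s in (0:ℝ)..b, K₀ * (D * Real.exp (M * (lam * s + cc))))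
      = K₀ * D * (Real.exp (M * cc) * ((Real.exp (M * lam * b) - 1) / (M * lam))) := by
    have e0 : ∀ s : ℝ, M * (lam * s + cc) = (M * lam) * s + M * cc := by intro s; ring
    simp only [e0, Real.exp_add, ← intervalIntegral.integral_const_mul]
    have : (∫ s in (0:ℝ)..b, Real.exp (M * lam * s))
        = (Real.exp (M * lam * b) - 1) / (M * lam) := by
      rw [intervalIntegral.integral_comp_mul_left Real.exp (ne_of_gt hMl)]
      simp [integral_exp, div_eq_inv_mul]
    rw [intervalIntegral.integral_congr (g := fun s => (K₀ * (D * Real.exp (M * cc))) * Real.exp (M * lam * s)) (fun s _ => by ring)]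
    rw [intervalIntegral.integral_const_mul, this]
    ring
  have h4 : K₀ * D * (Real.exp (M * cc) * ((Real.exp (M * lam * b) - 1) / (M * lam)))
      ≤ K₀ * D * Real.exp (M * y) / (M * lam) := by
    rw [show K₀ * D * (Real.exp (M * cc) * ((Real.exp (M * lam * b) - 1) / (M * lam)))
        = (K₀ * D * (Real.exp (M * cc) * (Real.exp (M * lam * b) - 1))) / (M * lam) from by ring]
    gcongr
    have hle : Real.exp (M * cc) * (Real.exp (M * lam * b) - 1) ≤ Real.exp (M * y) := by
      have : Real.exp (M * cc) * Real.exp (M * lam * b) = Real.exp (M * lam * b + M * cc) := by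
        rw [← Real.exp_add]; ring_nf
      nlinarith [Real.exp_pos (M * cc), Real.exp_le_exp.2 (show M * lam * b + M * cc ≤ M * y by nlinarith), Real.exp_pos (M*lam*b)]
    nlinarith [mul_nonneg hK hD, Real.exp_pos (M*cc), hMl]
  calc |∫ s in (0:ℝ)..b, k s * h (lam * s + cc)| ≤ _ := h1
    _ ≤ _ := h2
    _ = _ := h3
    _ ≤ _ := h4

lemma diff_est {L vs gp k₁ M Ca Cc D : ℝ} (hvs : 0 < vs) (hgp : vs < gp) (hM : 0 < M)
    (hCa : 0 ≤ Ca) (hCc : 0 ≤ Cc) (hD : 0 ≤ D)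
    {a c f g : ℝ → ℝ} (ha : Continuous a) (hc : Continuous c)
    (hf : Continuous f) (hg : Continuous g)
    (hba : ∀ t, |a t| ≤ Ca) (hbc : ∀ t, |c t| ≤ Cc)
    (hfg : ∀ t, 0 ≤ t → |f t - g t| ≤ D * Real.exp (M * t))
    {y : ℝ} (hy0 : 0 ≤ y) (hyL : y ≤ L) :
    |body L vs gp k₁ a c f y - body L vs gp k₁ a c g y|
      ≤ (vs * Ca / (M * (gp - vs)) + |k₁| * (vs / (gp - vs)) * Cc / (M * gp)
          + vs * Ca / (M * (gp - vs))) * (D * Real.exp (M * y)) := by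
  have hgv : 0 < gp - vs := by linarith
  have hgp0 : 0 < gp := by linarith
  have hvy : vs * y / gp ≤ y := by rw [div_le_iff₀ hgp0]; nlinarith
  have hh : Continuous fun t => f t - g t := hf.sub hg
  -- shared second-integral bounds
  have hbk2a : ∀ s : ℝ, |k₁ * (vs / (gp - vs)) * c (vs * y / gp - vs * s)|
      ≤ |k₁| * (vs / (gp - vs)) * Cc := by
    intro s
    rw [abs_mul, abs_mul, abs_of_pos (by positivity : (0:ℝ) < vs / (gp - vs))]
    exact mul_le_mul_of_nonneg_left (hbc _) (by positivity)
  have hbk2b : ∀ s w : ℝ, |vs * a (w - vs * s)| ≤ vs * Ca := by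
    intro s w
    rw [abs_mul, abs_of_pos hvs]
    exact mul_le_mul_of_nonneg_left (hba _) hvs.le
  have hT2 : |∫ s in (0:ℝ)..(y / gp),
        (fun s => k₁ * (vs / (gp - vs)) * c (vs * y / gp - vs * s)) s
          * (fun t => f t - g t) (gp * s + 0)|
      ≤ (|k₁| * (vs / (gp - vs)) * Cc) * D * Real.exp (M * y) / (M * gp) := by
    apply key hM hgp0 (by positivity) le_rfl (by positivity) hD
      (by rw [mul_div_cancel₀ _ (ne_of_gt hgp0)]; linarith) (by fun_prop) hh hbk2a hfg
  have hT3 : |∫ s in (0:ℝ)..(y / gp),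
        (fun s => vs * a (vs * y / gp - vs * s)) s
          * (fun t => f t - g t) ((gp - vs) * s + vs * y / gp)|
      ≤ (vs * Ca) * D * Real.exp (M * y) / (M * (gp - vs)) := by
    apply key hM hgv (by positivity) (by positivity) (by positivity) hD
      (by rw [show (gp - vs) * (y / gp) + vs * y / gp = y from by field_simp; ring])
      (by fun_prop) hh (fun s => hbk2b s _) hfg
  have hi2f : IntervalIntegrable (fun s =>
      k₁ * (vs / (gp - vs)) * c (vs * y / gp - vs * s) * f (gp * s)
        + vs * a (vs * y / gp - vs * s) * f ((gp - vs) * s + vs * y / gp))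
      volume 0 (y / gp) := (Continuous.intervalIntegrable (by fun_prop) _ _)
  have hi2g : IntervalIntegrable (fun s =>
      k₁ * (vs / (gp - vs)) * c (vs * y / gp - vs * s) * g (gp * s)
        + vs * a (vs * y / gp - vs * s) * g ((gp - vs) * s + vs * y / gp))
      volume 0 (y / gp) := (Continuous.intervalIntegrable (by fun_prop) _ _)
  have hi2a : IntervalIntegrable (fun s =>
      (fun s => k₁ * (vs / (gp - vs)) * c (vs * y / gp - vs * s)) s
        * (fun t => f t - g t) (gp * s + 0)) volume 0 (y / gp) :=
    (Continuous.intervalIntegrable (by fun_prop) _ _)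
  have hi2b : IntervalIntegrable (fun s =>
      (fun s => vs * a (vs * y / gp - vs * s)) s
        * (fun t => f t - g t) ((gp - vs) * s + vs * y / gp)) volume 0 (y / gp) :=
    (Continuous.intervalIntegrable (by fun_prop) _ _)
  have eI2 : (∫ s in (0:ℝ)..(y / gp),
        (k₁ * (vs / (gp - vs)) * c (vs * y / gp - vs * s) * f (gp * s)
          + vs * a (vs * y / gp - vs * s) * f ((gp - vs) * s + vs * y / gp)))
      - (∫ s in (0:ℝ)..(y / gp),
        (k₁ * (vs / (gp - vs)) * c (vs * y / gp - vs * s) * g (gp * s)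
          + vs * a (vs * y / gp - vs * s) * g ((gp - vs) * s + vs * y / gp)))
      = (∫ s in (0:ℝ)..(y / gp),
          (fun s => k₁ * (vs / (gp - vs)) * c (vs * y / gp - vs * s)) s
            * (fun t => f t - g t) (gp * s + 0))
        + (∫ s in (0:ℝ)..(y / gp),
          (fun s => vs * a (vs * y / gp - vs * s)) s
            * (fun t => f t - g t) ((gp - vs) * s + vs * y / gp)) := by
    rw [← intervalIntegral.integral_add hi2a hi2b, ← intervalIntegral.integral_sub hi2f hi2g]
    apply intervalIntegral.integral_congr
    intro s _
    simp only [add_zero]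
    ring
  unfold body
  split_ifs with hcase
  · -- region 1
    have hb1 : 0 ≤ vs / (gp - vs) * y / gp := by positivity
    have hT1 : |∫ s in (0:ℝ)..(vs / (gp - vs) * y / gp),
          (fun s => vs * a (vs / (gp - vs) * y - vs * s)) s
            * (fun t => f t - g t) ((gp - vs) * s + 0)|
        ≤ (vs * Ca) * D * Real.exp (M * y) / (M * (gp - vs)) := by
      apply key hM hgv hb1 le_rfl (by positivity) hD
        (by rw [show (gp - vs) * (vs / (gp - vs) * y / gp) + 0 = vs * y / gp from by
              field_simp; ring]; linarith)
        (by fun_prop) hh _ hfg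
      intro s
      rw [show vs / (gp - vs) * y - vs * s = (vs / (gp - vs) * y) - vs * s from rfl]
      exact hbk2b s _
    have hi1f : IntervalIntegrable (fun s =>
        vs * a (vs / (gp - vs) * y - vs * s) * f ((gp - vs) * s))
        volume 0 (vs / (gp - vs) * y / gp) := (Continuous.intervalIntegrable (by fun_prop) _ _)
    have hi1g : IntervalIntegrable (fun s =>
        vs * a (vs / (gp - vs) * y - vs * s) * g ((gp - vs) * s))
        volume 0 (vs / (gp - vs) * y / gp) := (Continuous.intervalIntegrable (by fun_prop) _ _)
    have eI1 : (∫ s in (0:ℝ)..(vs / (gp - vs) * y / gp),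
          vs * a (vs / (gp - vs) * y - vs * s) * f ((gp - vs) * s))
        - (∫ s in (0:ℝ)..(vs / (gp - vs) * y / gp),
          vs * a (vs / (gp - vs) * y - vs * s) * g ((gp - vs) * s))
        = ∫ s in (0:ℝ)..(vs / (gp - vs) * y / gp),
            (fun s => vs * a (vs / (gp - vs) * y - vs * s)) s
              * (fun t => f t - g t) ((gp - vs) * s + 0) := by
      rw [← intervalIntegral.integral_sub hi1f hi1g]
      apply intervalIntegral.integral_congr
      intro s _
      simp only [add_zero]
      ring
    unfold RHS1
    rw [show ∀ A B1 C1 B2 C2 : ℝ, (A + B1 + C1) - (A + B2 + C2) = (B1 - B2) + (C1 - C2)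
      from fun _ _ _ _ _ => by ring]
    rw [eI1, eI2]
    refine le_trans (le_trans (abs_add_le _ _) (add_le_add le_rfl (abs_add_le _ _))) ?_
    exact le_trans (add_le_add hT1 (add_le_add hT2 hT3)) (le_of_eq (by ring))
  · -- region 2
    have hys : L ≤ vs / (gp - vs) * y := le_of_not_ge hcase
    have hL0 : 0 ≤ L := hy0.trans hyL
    have hb3 : 0 ≤ L / vs - y / gp := by
      have : y / gp ≤ L / vs := by rw [div_le_div_iff₀ hgp0 hvs]; nlinarith
      linarith
    have hQ : L / (vs / (gp - vs)) = L * (gp - vs) / vs := div_div_eq_mul_div _ _ _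
    have hcc2 : 0 ≤ y - L / (vs / (gp - vs)) := by
      rw [hQ, sub_nonneg, div_le_iff₀ hvs]
      calc L * (gp - vs) ≤ (vs / (gp - vs) * y) * (gp - vs) :=
            mul_le_mul_of_nonneg_right hys hgv.le
        _ = y * vs := by field_simp
    have hJ1 : |∫ s in (0:ℝ)..(L / vs - y / gp),
          (fun s => vs * a (L - vs * s)) s
            * (fun t => f t - g t) ((gp - vs) * s + (y - L / (vs / (gp - vs))))|
        ≤ (vs * Ca) * D * Real.exp (M * y) / (M * (gp - vs)) := by
      apply key hM hgv hb3 hcc2 (by positivity) hD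
        (by rw [hQ, show (gp - vs) * (L / vs - y / gp) + (y - L * (gp - vs) / vs)
              = vs * y / gp from by field_simp; ring]; linarith)
        (by fun_prop) hh (fun s => hbk2b s _) hfg
    have hj1f : IntervalIntegrable (fun s =>
        vs * a (L - vs * s) * f ((gp - vs) * s + y - L / (vs / (gp - vs))))
        volume 0 (L / vs - y / gp) := (Continuous.intervalIntegrable (by fun_prop) _ _)
    have hj1g : IntervalIntegrable (fun s =>
        vs * a (L - vs * s) * g ((gp - vs) * s + y - L / (vs / (gp - vs))))
        volume 0 (L / vs - y / gp) := (Continuous.intervalIntegrable (by fun_prop) _ _)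
    have eJ1 : (∫ s in (0:ℝ)..(L / vs - y / gp),
          vs * a (L - vs * s) * f ((gp - vs) * s + y - L / (vs / (gp - vs))))
        - (∫ s in (0:ℝ)..(L / vs - y / gp),
          vs * a (L - vs * s) * g ((gp - vs) * s + y - L / (vs / (gp - vs))))
        = ∫ s in (0:ℝ)..(L / vs - y / gp),
            (fun s => vs * a (L - vs * s)) s
              * (fun t => f t - g t) ((gp - vs) * s + (y - L / (vs / (gp - vs)))) := by
      rw [← intervalIntegral.integral_sub hj1f hj1g]
      apply intervalIntegral.integral_congr
      intro s _
      simp only [add_sub_assoc]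
      ring
    unfold RHS2
    rw [show ∀ A B1 C1 B2 C2 : ℝ, (A + B1 + C1) - (A + B2 + C2) = (B1 - B2) + (C1 - C2)
      from fun _ _ _ _ _ => by ring]
    rw [eJ1, eI2]
    refine le_trans (le_trans (abs_add_le _ _) (add_le_add le_rfl (abs_add_le _ _))) ?_
    exact le_trans (add_le_add hJ1 (add_le_add hT2 hT3)) (le_of_eq (by ring))


noncomputable def SF (L vs gp k₁ M : ℝ) (a c : ℝ → ℝ) (g : ℝ → ℝ) (x : ℝ) : ℝ :=
  Real.exp (-(M * pr L x))
    * body L vs gp k₁ a c (fun t => Real.exp (M * pr L t) * g t) (pr L x)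

lemma SF_cont {L vs gp k₁ M : ℝ} (hvs : 0 < vs) (hgp : vs < gp)
    {a c g : ℝ → ℝ} (ha : Continuous a) (hc : Continuous c) (hg : Continuous g) :
    Continuous (SF L vs gp k₁ M a c g) := by
  have hb : Continuous (body L vs gp k₁ a c fun t => Real.exp (M * pr L t) * g t) :=
    body_cont hvs hgp ha hc
      ((Real.continuous_exp.comp (continuous_const.mul (pr_continuous L))).mul hg)
  exact (Real.continuous_exp.comp ((continuous_const.mul (pr_continuous L)).neg)).mul
    (hb.comp (pr_continuous L))

lemma SF_bound {L vs gp k₁ M : ℝ} (hL : 0 ≤ L) (hvs : 0 < vs) (hgp : vs < gp)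
    {a c g : ℝ → ℝ} (ha : Continuous a) (hc : Continuous c) (hg : Continuous g) :
    ∃ C, ∀ x, ‖SF L vs gp k₁ M a c g x‖ ≤ C := by
  have hb : Continuous (body L vs gp k₁ a c fun t => Real.exp (M * pr L t) * g t) :=
    body_cont hvs hgp ha hc
      ((Real.continuous_exp.comp (continuous_const.mul (pr_continuous L))).mul hg)
  have hH : Continuous fun y => Real.exp (-(M * y))
      * body L vs gp k₁ a c (fun t => Real.exp (M * pr L t) * g t) y :=
    (Real.continuous_exp.comp (continuous_const.mul continuous_id).neg).mul hb
  obtain ⟨C, hC⟩ := (isCompact_Icc (a := (0:ℝ)) (b := L)).exists_bound_of_continuousOn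
    hH.continuousOn
  exact ⟨C, fun x => hC _ (pr_mem hL x)⟩

end Stmt8Aux2

end Aux

open Stmt8Aux2 in
/-- the piecewise characteristic integral equation for the
boundary trace `φ(x) = l(x,0)` of the backstepping kernel has a unique
continuous solution on `[0,L]`. Here `μ* = v*/(γp* − v*)`. -/
theorem stmt8 (L vs gp k₁ : ℝ) (hL : 0 < L) (hvs : 0 < vs) (hgp : vs < gp)
    (a c : ℝ → ℝ) (ha : ContinuousOn a (Icc 0 L)) (hc : ContinuousOn c (Icc 0 L)) :
    ∃ φ : ℝ → ℝ,
      (ContinuousOn φ (Icc 0 L) ∧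
        (∀ x ∈ Icc (0:ℝ) L, (vs / (gp - vs)) * x ≤ L →
          φ x = -(c (vs * x / gp)) / gp
            + (∫ s in (0:ℝ)..((vs / (gp - vs)) * x / gp),
                vs * a ((vs / (gp - vs)) * x - vs * s) * φ ((gp - vs) * s))
            + ∫ s in (0:ℝ)..(x / gp),
                (k₁ * (vs / (gp - vs)) * c (vs * x / gp - vs * s) * φ (gp * s)
                  + vs * a (vs * x / gp - vs * s) * φ ((gp - vs) * s + vs * x / gp))) ∧
        (∀ x ∈ Icc (0:ℝ) L, L < (vs / (gp - vs)) * x →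
          φ x = -(c (vs * x / gp)) / gp
            + (∫ s in (0:ℝ)..(L / vs - x / gp),
                vs * a (L - vs * s) * φ ((gp - vs) * s + x - L / (vs / (gp - vs))))
            + ∫ s in (0:ℝ)..(x / gp),
                (k₁ * (vs / (gp - vs)) * c (vs * x / gp - vs * s) * φ (gp * s)
                  + vs * a (vs * x / gp - vs * s) * φ ((gp - vs) * s + vs * x / gp)))) ∧
      ∀ ψ : ℝ → ℝ,
        ContinuousOn ψ (Icc 0 L) →
        (∀ x ∈ Icc (0:ℝ) L, (vs / (gp - vs)) * x ≤ L →
          ψ x = -(c (vs * x / gp)) / gp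
            + (∫ s in (0:ℝ)..((vs / (gp - vs)) * x / gp),
                vs * a ((vs / (gp - vs)) * x - vs * s) * ψ ((gp - vs) * s))
            + ∫ s in (0:ℝ)..(x / gp),
                (k₁ * (vs / (gp - vs)) * c (vs * x / gp - vs * s) * ψ (gp * s)
                  + vs * a (vs * x / gp - vs * s) * ψ ((gp - vs) * s + vs * x / gp))) →
        (∀ x ∈ Icc (0:ℝ) L, L < (vs / (gp - vs)) * x →
          ψ x = -(c (vs * x / gp)) / gp
            + (∫ s in (0:ℝ)..(L / vs - x / gp),
                vs * a (L - vs * s) * ψ ((gp - vs) * s + x - L / (vs / (gp - vs))))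
            + ∫ s in (0:ℝ)..(x / gp),
                (k₁ * (vs / (gp - vs)) * c (vs * x / gp - vs * s) * ψ (gp * s)
                  + vs * a (vs * x / gp - vs * s) * ψ ((gp - vs) * s + vs * x / gp))) →
        EqOn ψ φ (Icc 0 L) := by
  classical
  have hgv : (0:ℝ) < gp - vs := by linarith
  have hgp0 : (0:ℝ) < gp := hvs.trans hgp
  set a' : ℝ → ℝ := fun t => a (pr L t) with ha'def
  set c' : ℝ → ℝ := fun t => c (pr L t) with hc'def
  have hAeq : EqOn a' a (Icc 0 L) := fun t ht => by rw [ha'def]; simp only; rw [pr_eq ht]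
  have hCeq : EqOn c' c (Icc 0 L) := fun t ht => by rw [hc'def]; simp only; rw [pr_eq ht]
  have ha'c : Continuous a' := ha.comp_continuous (pr_continuous L) (fun x => pr_mem hL.le x)
  have hc'c : Continuous c' := hc.comp_continuous (pr_continuous L) (fun x => pr_mem hL.le x)
  obtain ⟨Ca, hCa⟩ := isCompact_Icc.exists_bound_of_continuousOn ha
  obtain ⟨Cc, hCc⟩ := isCompact_Icc.exists_bound_of_continuousOn hc
  have hba : ∀ t, |a' t| ≤ Ca := fun t => hCa _ (pr_mem hL.le t)
  have hbc : ∀ t, |c' t| ≤ Cc := fun t => hCc _ (pr_mem hL.le t)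
  have hCa0 : 0 ≤ Ca := le_trans (abs_nonneg _) (hba 0)
  have hCc0 : 0 ≤ Cc := le_trans (abs_nonneg _) (hbc 0)
  set B : ℝ := vs * Ca / (gp - vs) + |k₁| * (vs / (gp - vs)) * Cc / gp + vs * Ca / (gp - vs)
    with hBdef
  have hB0 : 0 ≤ B := by positivity
  set M : ℝ := 2 * B + 1 with hMdef
  have hM : (0:ℝ) < M := by linarith
  -- the contraction on bounded continuous functions
  have hbd : ∀ g : BoundedContinuousFunction ℝ ℝ, ∃ C, ∀ x, ‖SF L vs gp k₁ M a' c' (⇑g) x‖ ≤ C :=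
    fun g => SF_bound hL.le hvs hgp ha'c hc'c g.continuous
  choose bd hbd' using hbd
  set S : (BoundedContinuousFunction ℝ ℝ) → (BoundedContinuousFunction ℝ ℝ) := fun g =>
    BoundedContinuousFunction.ofNormedAddCommGroup (SF L vs gp k₁ M a' c' (⇑g))
      (SF_cont hvs hgp ha'c hc'c g.continuous) (bd g) (hbd' g) with hSdef
  have hScoe : ∀ (g : BoundedContinuousFunction ℝ ℝ) (x : ℝ), S g x = SF L vs gp k₁ M a' c' (⇑g) x := fun g x => rfl
  have hcontr : ∀ g₁ g₂ : BoundedContinuousFunction ℝ ℝ, dist (S g₁) (S g₂) ≤ (1/2) * dist g₁ g₂ := by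
    intro g₁ g₂
    have hD : 0 ≤ dist g₁ g₂ := dist_nonneg
    apply (BoundedContinuousFunction.dist_le (by positivity)).2
    intro x
    have hyI : pr L x ∈ Icc 0 L := pr_mem hL.le x
    have hfg : ∀ t, 0 ≤ t →
        |(fun u => Real.exp (M * pr L u) * g₁ u) t - (fun u => Real.exp (M * pr L u) * g₂ u) t|
          ≤ dist g₁ g₂ * Real.exp (M * t) := by
      intro t ht
      simp only
      rw [show Real.exp (M * pr L t) * g₁ t - Real.exp (M * pr L t) * g₂ t
          = Real.exp (M * pr L t) * (g₁ t - g₂ t) from by ring, abs_mul,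
        abs_of_pos (Real.exp_pos _)]
      have h1 : |g₁ t - g₂ t| ≤ dist g₁ g₂ := by
        rw [← Real.dist_eq]; exact BoundedContinuousFunction.dist_coe_le_dist t
      have h2 : Real.exp (M * pr L t) ≤ Real.exp (M * t) :=
        Real.exp_le_exp.2 (mul_le_mul_of_nonneg_left (pr_le ht) hM.le)
      calc Real.exp (M * pr L t) * |g₁ t - g₂ t| ≤ Real.exp (M * t) * dist g₁ g₂ :=
            mul_le_mul h2 h1 (abs_nonneg _) (Real.exp_pos _).le
        _ = dist g₁ g₂ * Real.exp (M * t) := mul_comm _ _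
    have hbody := diff_est (k₁ := k₁) hvs hgp hM hCa0 hCc0 hD ha'c hc'c
      ((Real.continuous_exp.comp (continuous_const.mul (pr_continuous L))).mul g₁.continuous)
      ((Real.continuous_exp.comp (continuous_const.mul (pr_continuous L))).mul g₂.continuous)
      hba hbc hfg hyI.1 hyI.2
    have hexp : Real.exp (-(M * pr L x)) * Real.exp (M * pr L x) = 1 := by
      rw [← Real.exp_add]; simp
    rw [Real.dist_eq, hScoe, hScoe]
    unfold SF
    rw [← mul_sub, abs_mul, abs_of_pos (Real.exp_pos _)]
    calc Real.exp (-(M * pr L x)) * |_ - _|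
        ≤ Real.exp (-(M * pr L x)) * ((vs * Ca / (M * (gp - vs))
            + |k₁| * (vs / (gp - vs)) * Cc / (M * gp) + vs * Ca / (M * (gp - vs)))
            * (dist g₁ g₂ * Real.exp (M * pr L x))) :=
          mul_le_mul_of_nonneg_left hbody (Real.exp_pos _).le
      _ = (vs * Ca / (M * (gp - vs)) + |k₁| * (vs / (gp - vs)) * Cc / (M * gp)
            + vs * Ca / (M * (gp - vs))) * dist g₁ g₂
            * (Real.exp (-(M * pr L x)) * Real.exp (M * pr L x)) := by ring
      _ = (vs * Ca / (M * (gp - vs)) + |k₁| * (vs / (gp - vs)) * Cc / (M * gp)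
            + vs * Ca / (M * (gp - vs))) * dist g₁ g₂ := by rw [hexp, mul_one]
      _ ≤ (1/2) * dist g₁ g₂ := by
          apply mul_le_mul_of_nonneg_right _ hD
          have hBM : vs * Ca / (M * (gp - vs)) + |k₁| * (vs / (gp - vs)) * Cc / (M * gp)
              + vs * Ca / (M * (gp - vs)) = B / M := by
            rw [hBdef]; field_simp
          rw [hBM, div_le_iff₀ hM, hMdef]
          linarith
  have hcw : ContractingWith (1/2 : NNReal) S := by
    constructor
    · rw [← NNReal.coe_lt_coe]; norm_num
    · apply LipschitzWith.of_dist_le_mul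
      intro g₁ g₂
      have : ((1/2 : NNReal) : ℝ) = 1/2 := by norm_num
      rw [this]
      exact hcontr g₁ g₂
  set fstar := ContractingWith.fixedPoint S hcw with hfstardef
  have hfix : Function.IsFixedPt S fstar := hcw.fixedPoint_isFixedPt
  set φ : ℝ → ℝ := fun x => Real.exp (M * pr L x) * fstar x with hφdef
  have hφc : Continuous φ :=
    (Real.continuous_exp.comp (continuous_const.mul (pr_continuous L))).mul fstar.continuous
  have hφeq : EqOn φ φ (Icc 0 L) := fun _ _ => rfl
  have hbodyeq : ∀ x, body L vs gp k₁ a' c' φ (pr L x) = φ x := by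
    intro x
    have h1 : S fstar x = fstar x := by rw [hfix]
    rw [hScoe] at h1
    unfold SF at h1
    rw [show (fun t => Real.exp (M * pr L t) * fstar t) = φ from rfl] at h1
    have hexp : Real.exp (M * pr L x) * Real.exp (-(M * pr L x)) = 1 := by
      rw [← Real.exp_add]; simp
    calc body L vs gp k₁ a' c' φ (pr L x)
        = Real.exp (M * pr L x) * (Real.exp (-(M * pr L x))
            * body L vs gp k₁ a' c' φ (pr L x)) := by rw [← mul_assoc, hexp, one_mul]
      _ = Real.exp (M * pr L x) * fstar x := by rw [h1]
      _ = φ x := rfl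
  refine ⟨φ, ⟨hφc.continuousOn, ?_, ?_⟩, ?_⟩
  · -- equation, region 1
    intro x hx hxle
    have h1 := hbodyeq x
    rw [pr_eq hx] at h1
    unfold body at h1
    rw [if_pos hxle] at h1
    calc φ x = RHS1 vs gp k₁ a' c' φ x := h1.symm
      _ = RHS1 vs gp k₁ a c φ x := rhs1_congr hvs hgp hAeq hCeq hφeq hx hxle
      _ = _ := rfl
  · -- equation, region 2
    intro x hx hxgt
    have h1 := hbodyeq x
    rw [pr_eq hx] at h1
    unfold body at h1
    rw [if_neg (not_le.2 hxgt)] at h1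
    calc φ x = RHS2 L vs gp k₁ a' c' φ x := h1.symm
      _ = RHS2 L vs gp k₁ a c φ x := rhs2_congr hvs hgp hAeq hCeq hφeq hx hxgt.le
      _ = _ := rfl
  · -- uniqueness
    intro ψ hψc hψ1 hψ2
    have hψtc : Continuous fun t => ψ (pr L t) :=
      hψc.comp_continuous (pr_continuous L) (fun t => pr_mem hL.le t)
    have hψEq : EqOn (fun t => ψ (pr L t)) ψ (Icc 0 L) := fun t ht => by
      simp only; rw [pr_eq ht]
    have hψFc : Continuous fun t => Real.exp (-(M * pr L t)) * ψ (pr L t) :=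
      (Real.continuous_exp.comp ((continuous_const.mul (pr_continuous L)).neg)).mul hψtc
    obtain ⟨Cψ, hCψ⟩ := (isCompact_Icc (a := (0:ℝ)) (b := L)).exists_bound_of_continuousOn
      (f := fun y => Real.exp (-(M * y)) * ψ y)
      (((Real.continuous_exp.comp (continuous_const.mul continuous_id).neg)).continuousOn.mul hψc)
    set ψB : BoundedContinuousFunction ℝ ℝ := BoundedContinuousFunction.ofNormedAddCommGroup
      (fun t => Real.exp (-(M * pr L t)) * ψ (pr L t)) hψFc Cψ
      (fun t => hCψ _ (pr_mem hL.le t)) with hψBdef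
    have hψBcoe : ∀ t, ψB t = Real.exp (-(M * pr L t)) * ψ (pr L t) := fun t => rfl
    have hWψ : (fun t => Real.exp (M * pr L t) * ψB t) = fun t => ψ (pr L t) := by
      funext t
      rw [hψBcoe, ← mul_assoc, ← Real.exp_add]
      simp
    have hfixψ : Function.IsFixedPt S ψB := by
      apply BoundedContinuousFunction.ext
      intro x
      rw [hScoe]
      unfold SF
      rw [hWψ]
      have hyI : pr L x ∈ Icc 0 L := pr_mem hL.le x
      have hbψ : body L vs gp k₁ a' c' (fun t => ψ (pr L t)) (pr L x) = ψ (pr L x) := by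
        unfold body
        split_ifs with hcase
        · calc RHS1 vs gp k₁ a' c' (fun t => ψ (pr L t)) (pr L x)
              = RHS1 vs gp k₁ a c ψ (pr L x) :=
                rhs1_congr hvs hgp hAeq hCeq hψEq hyI hcase
            _ = ψ (pr L x) := (hψ1 _ hyI hcase).symm
        · have hlt : L < vs / (gp - vs) * pr L x := not_le.1 hcase
          calc RHS2 L vs gp k₁ a' c' (fun t => ψ (pr L t)) (pr L x)
              = RHS2 L vs gp k₁ a c ψ (pr L x) :=
                rhs2_congr hvs hgp hAeq hCeq hψEq hyI hlt.le
            _ = ψ (pr L x) := (hψ2 _ hyI hlt).symm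
      rw [hbψ, hψBcoe]
    have hψBfs : ψB = fstar := hcw.fixedPoint_unique hfixψ
    intro x hx
    have h2 : ψB x = fstar x := by rw [hψBfs]
    rw [hψBcoe, pr_eq hx] at h2
    have h3 : φ x = Real.exp (M * pr L x) * fstar x := rfl
    rw [pr_eq hx] at h3
    rw [h3, ← h2, ← mul_assoc, ← Real.exp_add]
    simp
end
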